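/- arXiv:1106.0849 — 10 statements merged into one kernel-verified Lean document; each statement's English description precedes it below -/
import Mathlib

section
/- Every ℂ-linear endomorphism T of the space V of homogeneous polynomials of degree k in n variables over ℂ that commutes with the substitution action of every unitary n×n matrix (where a matrix U acts on a polynomial p by p(x) ↦ p(Uᵀx), i.e. linear substitution of variables) is a scalar multiple of the identity map on V. Consequently, the uniform state is the unique U(n)-invariant state on the k-th symmetric power of ℂⁿ. -/
open MvPolynomial


lemma diag_sub {n : ℕ} (z : Fin n → ℂ) (α : Fin n →₀ ℕ) (b : ℂ) :
    aeval (fun i => z i • (X i : MvPolynomial (Fin n) ℂ)) (monomial α b)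
      = (∏ i, z i ^ α i) • monomial α b := by
  rw [aeval_monomial]
  have : (α.prod fun i e => (z i • (X i : MvPolynomial (Fin n) ℂ)) ^ e)
      = C (∏ i, z i ^ α i) * α.prod fun i e => (X i : MvPolynomial (Fin n) ℂ) ^ e := by
    rw [← Finsupp.prod_pow α z, Finsupp.prod, Finsupp.prod, Finsupp.prod, map_prod,
      ← Finset.prod_mul_distrib]
    refine Finset.prod_congr rfl fun i _ => ?_
    rw [smul_pow, smul_eq_C_mul]
  rw [this, smul_eq_C_mul, monomial_eq, algebraMap_eq]
  ring

lemma diag_sub_coeff {n : ℕ} (z : Fin n → ℂ) (q : MvPolynomial (Fin n) ℂ) (β : Fin n →₀ ℕ) :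
    coeff β (aeval (fun i => z i • (X i : MvPolynomial (Fin n) ℂ)) q)
      = (∏ i, z i ^ β i) * coeff β q := by
  nth_rewrite 1 [q.as_sum]
  rw [map_sum, coeff_sum]
  simp only [diag_sub, coeff_smul, coeff_monomial, smul_eq_mul, mul_ite, mul_zero]
  rw [Finset.sum_ite_eq' q.support β (fun γ => (∏ i, z i ^ γ i) * coeff γ q)]
  by_cases h : β ∈ q.support
  · simp [h]
  · simp [h, notMem_support_iff.mp h]

lemma zeta_pow_inj (k a b : ℕ) (ha : a ≤ k) (hb : b ≤ k)
    (h : Complex.exp (2 * Real.pi * Complex.I / (k + 1)) ^ a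
       = Complex.exp (2 * Real.pi * Complex.I / (k + 1)) ^ b) : a = b := by
  rw [← Complex.exp_nat_mul, ← Complex.exp_nat_mul, Complex.exp_eq_exp_iff_exists_int] at h
  obtain ⟨m, hm⟩ := h
  have h2πI : (2 * (Real.pi : ℂ) * Complex.I) ≠ 0 := by
    simp [Real.pi_ne_zero, Complex.I_ne_zero]
  have hk1 : ((k : ℂ) + 1) ≠ 0 := Nat.cast_add_one_ne_zero k
  have key : (a : ℂ) = b + m * (k + 1) := by
    field_simp at hm
    apply mul_right_cancel₀ h2πI
    linear_combination (2 * (Real.pi : ℂ) * Complex.I) * hm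
  have keyz : (a : ℤ) = b + m * (k + 1) := by exact_mod_cast key
  have hdvd : ((k : ℤ) + 1) ∣ ((a : ℤ) - b) := ⟨m, by linarith⟩
  have habs : |((a : ℤ) - b)| < (k : ℤ) + 1 := by
    rw [abs_lt]; constructor <;> [skip; skip] <;> push_cast <;> omega
  have := Int.eq_zero_of_abs_lt_dvd hdvd habs
  omega

lemma diag_unitary_mem {n : ℕ} (z : Fin n → ℂ) (hz : ∀ i, ‖z i‖ = 1) :
    Matrix.diagonal z ∈ Matrix.unitaryGroup (Fin n) ℂ := by
  rw [Matrix.mem_unitaryGroup_iff]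
  have hst : star (Matrix.diagonal z) = Matrix.diagonal (star z) := by
    rw [Matrix.star_eq_conjTranspose, Matrix.diagonal_conjTranspose]
  rw [hst, Matrix.diagonal_mul_diagonal]
  have h1 : (fun i => z i * star z i) = fun _ => (1 : ℂ) := by
    funext i
    rw [Pi.star_apply, RCLike.star_def, Complex.mul_conj, ← Complex.sq_norm, hz i]
    norm_num
  rw [h1, Matrix.diagonal_one]

lemma diag_sub_fun {n : ℕ} (z : Fin n → ℂ) :
    (fun i => ∑ j : Fin n, (Matrix.diagonal z) j i • (X j : MvPolynomial (Fin n) ℂ))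
      = fun i => z i • X i := by
  funext i
  rw [Finset.sum_eq_single i]
  · simp
  · intro j _ hj; simp [Matrix.diagonal_apply_ne _ hj]
  · simp


lemma zeta_pow_inj' (k a b : ℕ) (ha : a ≤ k) (hb : b ≤ k)
    (h : Complex.exp (((2 * Real.pi / (k + 1) : ℝ) : ℂ) * Complex.I) ^ a
       = Complex.exp (((2 * Real.pi / (k + 1) : ℝ) : ℂ) * Complex.I) ^ b) : a = b := by
  have harg : (((2 * Real.pi / (k + 1) : ℝ) : ℂ) * Complex.I)
      = 2 * Real.pi * Complex.I / (k + 1) := by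
    have hk1 : ((k : ℂ) + 1) ≠ 0 := Nat.cast_add_one_ne_zero k
    push_cast
    field_simp
  rw [harg] at h
  rw [← Complex.exp_nat_mul, ← Complex.exp_nat_mul, Complex.exp_eq_exp_iff_exists_int] at h
  obtain ⟨m, hm⟩ := h
  have h2πI : (2 * (Real.pi : ℂ) * Complex.I) ≠ 0 := by
    simp [Real.pi_ne_zero, Complex.I_ne_zero]
  have hk1 : ((k : ℂ) + 1) ≠ 0 := Nat.cast_add_one_ne_zero k
  have key : (a : ℂ) = b + m * (k + 1) := by
    field_simp at hm
    apply mul_right_cancel₀ h2πI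
    linear_combination (2 * (Real.pi : ℂ) * Complex.I) * hm
  have keyz : (a : ℤ) = b + m * (k + 1) := by exact_mod_cast key
  have hdvd : ((k : ℤ) + 1) ∣ ((a : ℤ) - b) := ⟨m, by linarith⟩
  have habs : |((a : ℤ) - b)| < (k : ℤ) + 1 := by
    rw [abs_lt]; constructor <;> omega
  have := Int.eq_zero_of_abs_lt_dvd hdvd habs
  omega


lemma sumX_pow_coeff_ne_zero (n k : ℕ) :
    ∀ (β : Fin n →₀ ℕ), β.degree = k →
      coeff β ((∑ j : Fin n, X j : MvPolynomial (Fin n) ℕ) ^ k) ≠ 0 := by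
  induction k with
  | zero =>
    intro β hβ
    rw [Finsupp.degree_eq_zero_iff] at hβ
    subst hβ
    simp [coeff_zero_one]
  | succ m ih =>
    intro β hβ
    have hβ0 : β ≠ 0 := by
      intro h; rw [h, map_zero] at hβ; omega
    obtain ⟨j, hj⟩ : ∃ j, β j ≠ 0 := by
      by_contra h
      push_neg at h
      exact hβ0 (Finsupp.ext fun i => h i)
    set γ : Fin n →₀ ℕ := β - Finsupp.single j 1 with hγ
    have hβγ : β = γ + Finsupp.single j 1 := by
      ext i
      simp only [Finsupp.coe_add, Pi.add_apply, hγ, Finsupp.coe_tsub, Pi.sub_apply]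
      rcases eq_or_ne i j with rfl | hij
      · simp; omega
      · simp [Finsupp.single_apply, Ne.symm hij]
    have hγdeg : γ.degree = m := by
      have h1 : (γ + Finsupp.single j 1).degree = γ.degree + (Finsupp.single j 1).degree := by
        simp [Finsupp.degree_eq_weight_one, map_add]
      have h2 : (Finsupp.single j 1).degree = 1 := by
        simp [Finsupp.degree_eq_weight_one, Finsupp.weight_apply, Finsupp.sum_single_index]
      rw [← hβγ, hβ, h2] at h1
      omega
    have key : coeff β ((∑ j : Fin n, X j : MvPolynomial (Fin n) ℕ) ^ m * X j) ≠ 0 := by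
      rw [hβγ, coeff_mul_X]
      exact ih γ hγdeg
    rw [pow_succ, Finset.mul_sum, coeff_sum]
    intro hcontra
    rw [Finset.sum_eq_zero_iff] at hcontra
    exact key (hcontra j (Finset.mem_univ j))

lemma step1 (n k : ℕ) (hk : 0 < k)
    (T : MvPolynomial (Fin n) ℂ →ₗ[ℂ] MvPolynomial (Fin n) ℂ)
    (hTmem : ∀ p ∈ homogeneousSubmodule (Fin n) ℂ k, T p ∈ homogeneousSubmodule (Fin n) ℂ k)
    (hcomm : ∀ U ∈ Matrix.unitaryGroup (Fin n) ℂ,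
      ∀ p ∈ homogeneousSubmodule (Fin n) ℂ k,
        T (aeval (fun i : Fin n => ∑ j : Fin n, U j i • (X j : MvPolynomial (Fin n) ℂ)) p)
          = aeval (fun i : Fin n => ∑ j : Fin n, U j i • (X j : MvPolynomial (Fin n) ℂ)) (T p))
    (α : Fin n →₀ ℕ) (hα : α.degree = k) :
    T (monomial α 1) = coeff α (T (monomial α 1)) • monomial α 1 := by
  have hmem : monomial α 1 ∈ homogeneousSubmodule (Fin n) ℂ k :=
    (mem_homogeneousSubmodule _ _).mpr (isHomogeneous_monomial 1 hα)
  have hThom : (T (monomial α 1)).IsHomogeneous k :=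
    (mem_homogeneousSubmodule _ _).mp (hTmem _ hmem)
  ext β
  rw [coeff_smul, coeff_monomial]
  rcases eq_or_ne α β with rfl | hne
  · simp
  · simp only [if_neg hne, smul_zero]
    by_cases hdeg : β.degree = k
    · -- the interesting case
      obtain ⟨j, hj⟩ : ∃ j, α j ≠ β j := by
        by_contra h
        push_neg at h
        exact hne (Finsupp.ext h)
      set ζ : ℂ := Complex.exp (((2 * Real.pi / (k + 1) : ℝ) : ℂ) * Complex.I) with hζ
      set z : Fin n → ℂ := fun i => if i = j then ζ else 1 with hzdef
      have hz : ∀ i, ‖z i‖ = 1 := by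
        intro i
        rcases eq_or_ne i j with rfl | hij
        · simp only [hzdef, if_pos rfl, hζ]
          exact Complex.norm_exp_ofReal_mul_I _
        · simp [hzdef, hij]
      have hprod : ∀ γ : Fin n →₀ ℕ, (∏ i, z i ^ γ i) = ζ ^ γ j := by
        intro γ
        rw [Finset.prod_eq_single j]
        · simp [hzdef]
        · intro i _ hij; simp [hzdef, hij]
        · simp
      have hU := hcomm (Matrix.diagonal z) (diag_unitary_mem z hz) (monomial α 1) hmem
      rw [diag_sub_fun, diag_sub, hprod α, map_smul] at hU
      have hU2 := congrArg (coeff β) hU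
      rw [coeff_smul, diag_sub_coeff, hprod β, smul_eq_mul] at hU2
      have hfac : (ζ ^ α j - ζ ^ β j) * coeff β (T (monomial α 1)) = 0 := by
        linear_combination hU2
      rcases mul_eq_zero.mp hfac with h0 | h0
      · exfalso
        apply hj
        apply zeta_pow_inj' k (α j) (β j)
        · exact hα ▸ Finsupp.le_degree j α
        · exact hdeg ▸ Finsupp.le_degree j β
        · exact sub_eq_zero.mp h0
      · exact h0
    · exact hThom.coeff_eq_zero hdeg

lemma coeff_T (n k : ℕ) (hk : 0 < k)
    (T : MvPolynomial (Fin n) ℂ →ₗ[ℂ] MvPolynomial (Fin n) ℂ)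
    (hTmem : ∀ p ∈ homogeneousSubmodule (Fin n) ℂ k, T p ∈ homogeneousSubmodule (Fin n) ℂ k)
    (hcomm : ∀ U ∈ Matrix.unitaryGroup (Fin n) ℂ,
      ∀ p ∈ homogeneousSubmodule (Fin n) ℂ k,
        T (aeval (fun i : Fin n => ∑ j : Fin n, U j i • (X j : MvPolynomial (Fin n) ℂ)) p)
          = aeval (fun i : Fin n => ∑ j : Fin n, U j i • (X j : MvPolynomial (Fin n) ℂ)) (T p))
    (q : MvPolynomial (Fin n) ℂ) (hq : q.IsHomogeneous k) (β : Fin n →₀ ℕ) :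
    coeff β (T q) = coeff β (T (monomial β 1)) * coeff β q := by
  have hsupp : ∀ γ ∈ q.support, γ.degree = k := by
    intro γ hγ
    by_contra h
    exact (mem_support_iff.mp hγ) (hq.coeff_eq_zero h)
  nth_rewrite 1 [q.as_sum]
  rw [map_sum, coeff_sum]
  have hterm : ∀ γ ∈ q.support,
      coeff β (T (monomial γ (coeff γ q)))
        = coeff γ q * (coeff γ (T (monomial γ 1)) * if γ = β then 1 else 0) := by
    intro γ hγ
    have : monomial γ (coeff γ q) = coeff γ q • monomial γ 1 := by
      rw [smul_monomial, smul_eq_mul, mul_one]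
    rw [this, map_smul, step1 n k hk T hTmem hcomm γ (hsupp γ hγ), coeff_smul, coeff_smul,
      coeff_monomial, smul_eq_mul, smul_eq_mul]
    ring_nf
    simp [coeff_monomial]
  rw [Finset.sum_congr rfl hterm]
  simp only [mul_ite, mul_one, mul_zero]
  rw [Finset.sum_ite_eq' q.support β (fun γ => coeff γ q * coeff γ (T (monomial γ 1)))]
  by_cases h : β ∈ q.support
  · simp [h, mul_comm]
  · simp [h, notMem_support_iff.mp h]

lemma connect (n k : ℕ) (hk : 0 < k)
    (T : MvPolynomial (Fin n) ℂ →ₗ[ℂ] MvPolynomial (Fin n) ℂ)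
    (hTmem : ∀ p ∈ homogeneousSubmodule (Fin n) ℂ k, T p ∈ homogeneousSubmodule (Fin n) ℂ k)
    (hcomm : ∀ U ∈ Matrix.unitaryGroup (Fin n) ℂ,
      ∀ p ∈ homogeneousSubmodule (Fin n) ℂ k,
        T (aeval (fun i : Fin n => ∑ j : Fin n, U j i • (X j : MvPolynomial (Fin n) ℂ)) p)
          = aeval (fun i : Fin n => ∑ j : Fin n, U j i • (X j : MvPolynomial (Fin n) ℂ)) (T p))
    (U : Matrix (Fin n) (Fin n) ℂ) (hU : U ∈ Matrix.unitaryGroup (Fin n) ℂ)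
    (α β : Fin n →₀ ℕ) (hα : α.degree = k)
    (hne0 : coeff β
      (aeval (fun i : Fin n => ∑ j : Fin n, U j i • (X j : MvPolynomial (Fin n) ℂ))
        (monomial α (1:ℂ))) ≠ 0) :
    coeff β (T (monomial β 1)) = coeff α (T (monomial α (1:ℂ))) := by
  have hf : ∀ i : Fin n, (∑ j : Fin n, U j i • (X j : MvPolynomial (Fin n) ℂ)).IsHomogeneous 1 := by
    intro i
    apply IsHomogeneous.sum
    intro j _
    rw [smul_eq_C_mul]
    exact (isHomogeneous_X ℂ j).C_mul _
  have hmem : monomial α (1:ℂ) ∈ homogeneousSubmodule (Fin n) ℂ k :=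
    (mem_homogeneousSubmodule _ _).mpr (isHomogeneous_monomial (1:ℂ) hα)
  have hqhom : ((aeval (fun i : Fin n => ∑ j : Fin n, U j i • (X j : MvPolynomial (Fin n) ℂ)))
      (monomial α (1:ℂ))).IsHomogeneous k := by
    have := (isHomogeneous_monomial (1:ℂ) hα).aeval
      (fun i : Fin n => ∑ j : Fin n, U j i • (X j : MvPolynomial (Fin n) ℂ)) hf
    rwa [one_mul] at this
  have heq := hcomm U hU (monomial α (1:ℂ)) hmem
  rw [step1 n k hk T hTmem hcomm α hα, map_smul] at heq
  -- heq : T q = c α • q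
  have h2 := congrArg (coeff β) heq
  rw [coeff_T n k hk T hTmem hcomm _ hqhom β, coeff_smul, smul_eq_mul] at h2
  exact mul_right_cancel₀ hne0 h2

lemma householder (n : ℕ) (hn : 2 ≤ n) (i0 : Fin n) :
    ∃ U ∈ Matrix.unitaryGroup (Fin n) ℂ,
      ∀ j, U j i0 = (((Real.sqrt n)⁻¹ : ℝ) : ℂ) := by
  set s : ℝ := (Real.sqrt n)⁻¹ with hs
  have hn0 : (0:ℝ) < n := by positivity
  have hsq : Real.sqrt n ^ 2 = n := Real.sq_sqrt (le_of_lt hn0)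
  have hsqrt_pos : 0 < Real.sqrt n := Real.sqrt_pos.mpr hn0
  have hs_pos : 0 < s := by positivity
  have hs_lt : s < 1 := by
    rw [hs, inv_lt_one_iff₀]
    right
    have h2 : (1:ℝ) < Real.sqrt 2 := by
      nlinarith [Real.sq_sqrt (by norm_num : (0:ℝ) ≤ 2), Real.sqrt_pos.mpr (by norm_num : (0:ℝ) < 2)]
    calc (1:ℝ) < Real.sqrt 2 := h2
      _ ≤ Real.sqrt n := Real.sqrt_le_sqrt (by exact_mod_cast hn)
  have hns2 : (n : ℝ) * s ^ 2 = 1 := by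
    rw [hs]
    field_simp
    exact hsq.symm
  set u : Fin n → ℂ := fun j => (((if j = i0 then 1 else 0) - s : ℝ) : ℂ) with hu
  set a : ℂ := (((1 - s)⁻¹ : ℝ) : ℂ) with ha_def
  have h1s : (1 - s : ℝ) ≠ 0 := by linarith
  have hui0 : u i0 = (((1 - s : ℝ)) : ℂ) := by rw [hu]; norm_num
  have hujne : ∀ j, j ≠ i0 → u j = (((-s : ℝ)) : ℂ) := by
    intro j hj; rw [hu]; simp [hj]
  have ha : a * (1 - (s:ℂ)) = 1 := by
    rw [ha_def]
    have h3 : (1 - (s:ℂ)) = (((1 - s : ℝ)) : ℂ) := by push_cast; ring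
    rw [h3, ← Complex.ofReal_mul, inv_mul_cancel₀ h1s, Complex.ofReal_one]
  have hai0 : a * u i0 = 1 := by
    rw [hui0, ha_def, ← Complex.ofReal_mul, inv_mul_cancel₀ h1s, Complex.ofReal_one]
  have hsum : ∑ j, u j * u j = 2 - 2 * (s:ℂ) := by
    have hterm : ∀ j, u j * u j = (if j = i0 then 1 - 2*(s:ℂ) else 0) + (s:ℂ)^2 := by
      intro j
      rcases eq_or_ne j i0 with rfl | hj
      · rw [hui0, if_pos rfl]; push_cast; ring
      · rw [hujne j hj, if_neg hj]; push_cast; ring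
    rw [Finset.sum_congr rfl (fun j _ => hterm j), Finset.sum_add_distrib,
      Finset.sum_ite_eq' Finset.univ i0 (fun _ => 1 - 2*(s:ℂ))]
    simp only [Finset.mem_univ, if_pos, Finset.sum_const, Finset.card_univ, Fintype.card_fin,
      nsmul_eq_mul]
    have h4 : (n : ℂ) * (s:ℂ)^2 = 1 := by exact_mod_cast congrArg (Complex.ofReal) hns2
    rw [h4]
    ring
  set U : Matrix (Fin n) (Fin n) ℂ :=
    Matrix.of (fun j i => (if j = i then 1 else 0) - a * u j * u i) with hU
  have hUapp : ∀ j i, U j i = (if j = i then 1 else 0) - a * u j * u i := fun j i => rfl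
  have hureal : ∀ j, (starRingEnd ℂ) (u j) = u j := fun j => Complex.conj_ofReal _
  have hareal : (starRingEnd ℂ) a = a := Complex.conj_ofReal _
  refine ⟨U, ?_, ?_⟩
  · rw [Matrix.mem_unitaryGroup_iff]
    have hstar : star U = U := by
      ext i l
      rw [Matrix.star_apply, hUapp, hUapp, RCLike.star_def, map_sub, map_mul, map_mul,
        hareal, hureal, hureal]
      have h5 : (starRingEnd ℂ) (if l = i then (1:ℂ) else 0) = if l = i then 1 else 0 := by
        split <;> simp
      rw [h5]
      by_cases h : i = l
      · subst h; ring
      · rw [if_neg h, if_neg (fun hh => h hh.symm)]; ring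
    rw [hstar]
    ext i l
    rw [Matrix.mul_apply, Matrix.one_apply]
    have hexp : ∀ j, U i j * U j l
        = (if i = j then (1:ℂ) else 0) * (if j = l then 1 else 0)
          - (if i = j then (1:ℂ) else 0) * (a * u j * u l)
          - (if j = l then (1:ℂ) else 0) * (a * u i * u j)
          + (a * u i * u l * a) * (u j * u j) := by
      intro j
      rw [hUapp, hUapp]
      ring
    rw [Finset.sum_congr rfl (fun j _ => hexp j)]
    rw [Finset.sum_add_distrib, Finset.sum_sub_distrib, Finset.sum_sub_distrib]
    have p1 : ∑ j, (if i = j then (1:ℂ) else 0) * (if j = l then 1 else 0)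
        = if i = l then 1 else 0 := by
      rw [Finset.sum_eq_single i]
      · rw [if_pos rfl, one_mul]
      · intro j _ hj; rw [if_neg (fun hh => hj hh.symm), zero_mul]
      · intro h; exact absurd (Finset.mem_univ i) h
    have p2 : ∑ j, (if i = j then (1:ℂ) else 0) * (a * u j * u l) = a * u i * u l := by
      rw [Finset.sum_eq_single i]
      · rw [if_pos rfl, one_mul]
      · intro j _ hj; rw [if_neg (fun hh => hj hh.symm), zero_mul]
      · intro h; exact absurd (Finset.mem_univ i) h
    have p3 : ∑ j, (if j = l then (1:ℂ) else 0) * (a * u i * u j) = a * u i * u l := by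
      rw [Finset.sum_eq_single l]
      · rw [if_pos rfl, one_mul]
      · intro j _ hj; rw [if_neg hj, zero_mul]
      · intro h; exact absurd (Finset.mem_univ l) h
    have p4 : ∑ j, (a * u i * u l * a) * (u j * u j) = (a * u i * u l * a) * (2 - 2*(s:ℂ)) := by
      rw [← Finset.mul_sum, hsum]
    rw [p1, p2, p3, p4]
    linear_combination (2 * a * u i * u l) * ha
  · intro j
    rw [hUapp, mul_assoc, show a * (u j * u i0) = a * u i0 * u j by ring, hai0, one_mul]
    rcases eq_or_ne j i0 with rfl | hj
    · rw [if_pos rfl, hui0]; push_cast; ring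
    · rw [if_neg hj, hujne j hj]; push_cast; ring

lemma sumX_pow_coeff_ne_zero_C (n k : ℕ) (β : Fin n →₀ ℕ) (hβ : β.degree = k) :
    coeff β ((∑ j : Fin n, X j : MvPolynomial (Fin n) ℂ) ^ k) ≠ 0 := by
  have hmap : ((∑ j : Fin n, X j : MvPolynomial (Fin n) ℂ) ^ k)
      = map (Nat.castRingHom ℂ) ((∑ j : Fin n, X j : MvPolynomial (Fin n) ℕ) ^ k) := by
    rw [map_pow, map_sum]
    simp [map_X]
  rw [hmap, coeff_map]
  have := sumX_pow_coeff_ne_zero n k β hβ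
  simpa using this

lemma degree_single (n k : ℕ) (i0 : Fin n) : (Finsupp.single i0 k).degree = k := by
  simp [Finsupp.degree_eq_weight_one, Finsupp.weight_apply, Finsupp.sum_single_index]


/-- **Schur's lemma for the substitution action of `U(n)` on `S^k(ℂⁿ)`.**
Realize the `k`-th symmetric power `S^k(ℂⁿ)` as the space `V` of homogeneous polynomials
of degree `k` in `n` variables over `ℂ`, on which a unitary matrix `U` acts by the linear
substitution `p(x) ↦ p(Uᵀ x)`.  Every `ℂ`-linear endomorphism `T` of `V` commuting with
this action is a scalar multiple of the identity.  Consequently (second conjunct), the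
uniform state is the unique `U(n)`-invariant state on `S^k(ℂⁿ)`: if moreover `T` has
trace `1` on `V`, then `T` is `1/dim V` times the identity on `V`. -/
theorem unitary_invariant_endomorphism_of_symmetric_power_is_scalar
    (n k : ℕ) (hn : 0 < n) (hk : 0 < k)
    (T : MvPolynomial (Fin n) ℂ →ₗ[ℂ] MvPolynomial (Fin n) ℂ)
    (hTmem : ∀ p ∈ homogeneousSubmodule (Fin n) ℂ k, T p ∈ homogeneousSubmodule (Fin n) ℂ k)
    (hcomm : ∀ U ∈ Matrix.unitaryGroup (Fin n) ℂ,
      ∀ p ∈ homogeneousSubmodule (Fin n) ℂ k,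
        T (aeval (fun i : Fin n => ∑ j : Fin n, U j i • (X j : MvPolynomial (Fin n) ℂ)) p)
          = aeval (fun i : Fin n => ∑ j : Fin n, U j i • (X j : MvPolynomial (Fin n) ℂ)) (T p)) :
    (∃ c : ℂ, ∀ p ∈ homogeneousSubmodule (Fin n) ℂ k, T p = c • p) ∧
    (LinearMap.trace ℂ (homogeneousSubmodule (Fin n) ℂ k)
        (T.restrict hTmem) = 1 →
      ∀ p ∈ homogeneousSubmodule (Fin n) ℂ k,
        T p = ((Module.finrank ℂ (homogeneousSubmodule (Fin n) ℂ k) : ℂ))⁻¹ • p) := by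
  haveI : Module.Finite ℂ (homogeneousSubmodule (Fin n) ℂ k) := by
    have h : homogeneousSubmodule (Fin n) ℂ k ≤ restrictTotalDegree (Fin n) ℂ k := by
      intro p hp
      rw [mem_restrictTotalDegree]
      exact ((mem_homogeneousSubmodule _ _).mp hp).totalDegree_le
    exact Submodule.finiteDimensional_of_le h
  set i0 : Fin n := ⟨0, hn⟩ with hi0
  set α0 : Fin n →₀ ℕ := Finsupp.single i0 k with hα0def
  have hα0 : α0.degree = k := degree_single n k i0
  set c0 : ℂ := coeff α0 (T (monomial α0 1)) with hc0
  -- all eigenvalues are equal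
  have hconst : ∀ β : Fin n →₀ ℕ, β.degree = k →
      coeff β (T (monomial β 1)) = c0 := by
    intro β hβ
    by_cases hn2 : 2 ≤ n
    · obtain ⟨U, hU, hcol⟩ := householder n hn2 i0
      apply connect n k hk T hTmem hcomm U hU α0 β hα0
      have hmono : (monomial α0 (1:ℂ)) = (X i0 : MvPolynomial (Fin n) ℂ) ^ k := by
        rw [hα0def]
        exact X_pow_eq_monomial.symm
      rw [hmono, map_pow]
      have hfX : (aeval (fun i : Fin n => ∑ j : Fin n, U j i • (X j : MvPolynomial (Fin n) ℂ)))
          ((X i0 : MvPolynomial (Fin n) ℂ)) = (((Real.sqrt n)⁻¹ : ℝ) : ℂ) • (∑ j : Fin n, X j : MvPolynomial (Fin n) ℂ) := by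
        rw [aeval_X, Finset.smul_sum]
        exact Finset.sum_congr rfl fun j _ => by rw [hcol j]
      rw [hfX, smul_pow, coeff_smul, smul_eq_mul]
      apply mul_ne_zero
      · apply pow_ne_zero
        simp only [ne_eq, Complex.ofReal_eq_zero, inv_eq_zero]
        positivity
      · exact sumX_pow_coeff_ne_zero_C n k β hβ
    · -- n = 1
      have hn1 : n = 1 := by omega
      have hiall : ∀ i : Fin n, i = i0 := by
        intro i
        apply Fin.ext
        simp only [hi0]
        omega
      have hsupp : β.support ⊆ {i0} := by
        intro x _
        simp [hiall x]
      have hβi0 : β i0 = k := by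
        rcases Finset.subset_singleton_iff.mp hsupp with h | h
        · exfalso
          have : β = 0 := Finsupp.support_eq_empty.mp h
          rw [this, map_zero] at hβ
          omega
        · have : β.degree = β i0 := by
            rw [Finsupp.degree_apply, h, Finset.sum_singleton]
          omega
      have hβα0 : β = α0 := by
        ext i
        rw [hiall i, hβi0, hα0def, Finsupp.single_eq_same]
      rw [hβα0]
  -- main scalar property
  have hmain : ∀ p ∈ homogeneousSubmodule (Fin n) ℂ k, T p = c0 • p := by
    intro p hp
    have hp' := (mem_homogeneousSubmodule _ _).mp hp
    have hsupp : ∀ γ ∈ p.support, γ.degree = k := by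
      intro γ hγ
      by_contra h
      exact (mem_support_iff.mp hγ) (hp'.coeff_eq_zero h)
    conv_lhs => rw [p.as_sum]
    rw [map_sum]
    have hterm : ∀ γ ∈ p.support,
        T (monomial γ (coeff γ p)) = c0 • monomial γ (coeff γ p) := by
      intro γ hγ
      have h1 : monomial γ (coeff γ p) = coeff γ p • monomial γ (1:ℂ) := by
        rw [smul_monomial, smul_eq_mul, mul_one]
      rw [h1, map_smul, step1 n k hk T hTmem hcomm γ (hsupp γ hγ), hconst γ (hsupp γ hγ),
        smul_comm]
    rw [Finset.sum_congr rfl hterm, ← Finset.smul_sum, ← p.as_sum]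
  refine ⟨⟨c0, hmain⟩, ?_⟩
  intro htr p hp
  have hres : T.restrict hTmem = c0 • (LinearMap.id :
      homogeneousSubmodule (Fin n) ℂ k →ₗ[ℂ] homogeneousSubmodule (Fin n) ℂ k) := by
    refine LinearMap.ext fun x => Subtype.ext ?_
    have := hmain x.1 x.2
    simpa [LinearMap.restrict_apply] using this
  rw [hres, map_smul, LinearMap.trace_id, smul_eq_mul] at htr
  have hd : ((Module.finrank ℂ (homogeneousSubmodule (Fin n) ℂ k)) : ℂ)⁻¹ = c0 := by
    apply inv_eq_of_mul_eq_one_right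
    rw [mul_comm]
    exact htr
  rw [hd]
  exact hmain p hp
end

section
/- Fix an integer j ≥ 1 and a constant C > 0, and let k : ℕ → ℕ satisfy k(n) ≤ C · n^((j-1)/j) for all n. For each n, draw a uniformly random multiset of size k(n) from n days. Then the probability that some day has multiplicity at least j+1 tends to 0 as n → ∞. -/
open Filter


lemma step_choose (n M : ℕ) (hn : 1 ≤ n) :
    n * (n + M - 1).choose M ≤ (M + 1) * (n + M).choose (M + 1) := by
  have h := Nat.add_one_mul_choose_eq (n + M - 1) M
  have he : n + M - 1 + 1 = n + M := by omega
  calc n * (n + M - 1).choose M ≤ (n + M - 1 + 1) * (n + M - 1).choose M := by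
        apply Nat.mul_le_mul_right; omega
    _ = (n + M).choose (M + 1) * (M + 1) := by rw [← he] at h ⊢; exact h
    _ = (M + 1) * (n + M).choose (M + 1) := Nat.mul_comm _ _

lemma lemA (n : ℕ) (hn : 1 ≤ n) (m : ℕ) : ∀ t : ℕ,
    n ^ t * (n + m - 1).choose m ≤ (m + t) ^ t * (n + m + t - 1).choose (m + t) := by
  intro t
  induction t with
  | zero => simp
  | succ t ih =>
    have h1 : n ^ (t + 1) * (n + m - 1).choose m
        ≤ n * ((m + t) ^ t * (n + m + t - 1).choose (m + t)) := by
      rw [pow_succ, Nat.mul_comm (n ^ t) n, Nat.mul_assoc]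
      exact Nat.mul_le_mul_left n ih
    have h2 : n * (n + m + t - 1).choose (m + t)
        ≤ (m + t + 1) * (n + m + t).choose (m + t + 1) := by
      have := step_choose n (m + t) hn
      have he : n + (m + t) - 1 = n + m + t - 1 := by omega
      have he2 : n + (m + t) = n + m + t := by omega
      rwa [he, he2] at this
    calc n ^ (t + 1) * (n + m - 1).choose m
        ≤ n * ((m + t) ^ t * (n + m + t - 1).choose (m + t)) := h1
      _ = (m + t) ^ t * (n * (n + m + t - 1).choose (m + t)) := by ring
      _ ≤ (m + t) ^ t * ((m + t + 1) * (n + m + t).choose (m + t + 1)) :=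
          Nat.mul_le_mul_left _ h2
      _ ≤ (m + t + 1) ^ t * ((m + t + 1) * (n + m + t).choose (m + t + 1)) := by
          apply Nat.mul_le_mul_right
          exact Nat.pow_le_pow_left (by omega) t
      _ = (m + (t + 1)) ^ (t + 1) * (n + m + (t + 1) - 1).choose (m + (t + 1)) := by
          have : n + m + t = n + m + (t + 1) - 1 := by omega
          rw [this]; ring_nf

lemma single_day_card (n k j : ℕ) (d : Fin n) :
    (Finset.univ.filter (fun s : Sym (Fin n) k =>
        j + 1 ≤ Multiset.count d (s : Multiset (Fin n)))).card
      ≤ Fintype.card (Sym (Fin n) (k - (j + 1))) := by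
  rw [← Fintype.card_subtype]
  have hcard : ∀ s : {x : Sym (Fin n) k // j + 1 ≤ Multiset.count d (x : Multiset (Fin n))},
      Multiset.card ((s.1 : Multiset (Fin n)) - Multiset.replicate (j + 1) d) = k - (j + 1) := by
    intro s
    rw [Multiset.card_sub (Multiset.le_count_iff_replicate_le.mp s.2), Multiset.card_replicate]
    exact congrArg (· - (j + 1)) s.1.2
  apply Fintype.card_le_of_injective
    (fun s => Sym.mk ((s.1 : Multiset (Fin n)) - Multiset.replicate (j + 1) d) (hcard s))
  intro s t hst
  have h1 : ((s.1 : Multiset (Fin n)) - Multiset.replicate (j + 1) d)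
      + Multiset.replicate (j + 1) d
      = ((t.1 : Multiset (Fin n)) - Multiset.replicate (j + 1) d)
      + Multiset.replicate (j + 1) d := by
    replace hst := congrArg (fun x : Sym (Fin n) (k - (j + 1)) => (x : Multiset (Fin n))) hst
    exact congrArg (· + Multiset.replicate (j + 1) d) hst
  rw [tsub_add_cancel_of_le (Multiset.le_count_iff_replicate_le.mp s.2),
    tsub_add_cancel_of_le (Multiset.le_count_iff_replicate_le.mp t.2)] at h1
  exact Subtype.ext (Sym.coe_injective h1)

lemma badcard (n k j : ℕ) :
    (Finset.univ.filter (fun s : Sym (Fin n) k =>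
        ∃ d : Fin n, j + 1 ≤ Multiset.count d (s : Multiset (Fin n)))).card
      ≤ n * Fintype.card (Sym (Fin n) (k - (j + 1))) := by
  calc _ ≤ (Finset.univ.biUnion (fun d : Fin n => Finset.univ.filter
        (fun s : Sym (Fin n) k => j + 1 ≤ Multiset.count d (s : Multiset (Fin n))))).card := by
        apply Finset.card_le_card
        intro s hs
        simp only [Finset.mem_filter, Finset.mem_univ, true_and] at hs
        obtain ⟨d, hd⟩ := hs
        exact Finset.mem_biUnion.2 ⟨d, Finset.mem_univ d, by simp only [Finset.mem_filter, Finset.mem_univ, true_and]; exact hd⟩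
    _ ≤ ∑ d : Fin n, (Finset.univ.filter
        (fun s : Sym (Fin n) k => j + 1 ≤ Multiset.count d (s : Multiset (Fin n)))).card :=
        Finset.card_biUnion_le
    _ ≤ ∑ _d : Fin n, Fintype.card (Sym (Fin n) (k - (j + 1))) :=
        Finset.sum_le_sum (fun d _ => single_day_card n k j d)
    _ = n * Fintype.card (Sym (Fin n) (k - (j + 1))) := by simp [Finset.sum_const, Nat.mul_comm]

/-- The key natural-number inequality: bad count times n^j ≤ k^(j+1) times total count. -/
lemma key_nat (n k j : ℕ) (hn : 1 ≤ n) :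
    (Finset.univ.filter (fun s : Sym (Fin n) k =>
        ∃ d : Fin n, j + 1 ≤ Multiset.count d (s : Multiset (Fin n)))).card * n ^ j
      ≤ k ^ (j + 1) * Fintype.card (Sym (Fin n) k) := by
  by_cases hk : j + 1 ≤ k
  · set B := (Finset.univ.filter (fun s : Sym (Fin n) k =>
        ∃ d : Fin n, j + 1 ≤ Multiset.count d (s : Multiset (Fin n)))).card with hB
    have hbad : B ≤ n * Fintype.card (Sym (Fin n) (k - (j + 1)))  := badcard n k j
    have hA := lemA n hn (k - (j + 1)) (j + 1)
    have he1 : k - (j + 1) + (j + 1) = k := by omega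
    rw [he1] at hA
    have hsym : ∀ m : ℕ, Fintype.card (Sym (Fin n) m) = (n + m - 1).choose m := by
      intro m
      rw [Sym.card_sym_eq_multichoose, Nat.multichoose_eq, Fintype.card_fin]
    have hmul : B * n ^ (j + 1) ≤ k ^ (j + 1) * Fintype.card (Sym (Fin n) k) * n := by
      calc B * n ^ (j + 1) ≤ (n * Fintype.card (Sym (Fin n) (k - (j + 1)))) * n ^ (j + 1) :=
            Nat.mul_le_mul_right _ hbad
        _ = n * (n ^ (j + 1) * (n + (k - (j + 1)) - 1).choose (k - (j + 1))) := by
            rw [hsym]; ring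
        _ ≤ n * (k ^ (j + 1) * (n + (k - (j + 1)) + (j + 1) - 1).choose k) :=
            Nat.mul_le_mul_left _ hA
        _ = k ^ (j + 1) * Fintype.card (Sym (Fin n) k) * n := by
            have : n + (k - (j + 1)) + (j + 1) - 1 = n + k - 1 := by omega
            rw [this, hsym]; ring
    have : B * n ^ j * n ≤ k ^ (j + 1) * Fintype.card (Sym (Fin n) k) * n := by
      calc B * n ^ j * n = B * n ^ (j + 1) := by ring
        _ ≤ _ := hmul
    exact Nat.le_of_mul_le_mul_right this (by omega)
  · have : (Finset.univ.filter (fun s : Sym (Fin n) k =>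
        ∃ d : Fin n, j + 1 ≤ Multiset.count d (s : Multiset (Fin n)))) = ∅ := by
      apply Finset.filter_eq_empty_iff.mpr
      intro s _
      rintro ⟨d, hd⟩
      have h2 : Multiset.count d (s : Multiset (Fin n)) ≤ k := by
        have h3 := Multiset.count_le_card d (s : Multiset (Fin n))
        have h4 : Multiset.card (s : Multiset (Fin n)) = k := s.2
        omega
      omega
    rw [this]; simp


/-- **The bosonic birthday paradox, collision bound.**
If `k n ≤ C · n^((j-1)/j)`, then for a uniformly random multiset of size `k n`
drawn from `n` days (the birthday distribution of `k n` bosons with `n` modes in the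
uniform state), the probability that some day has multiplicity at least `j+1`
tends to `0` as `n → ∞`. -/
theorem bosonic_birthday_no_large_collision
    (j : ℕ) (hj : 1 ≤ j) (C : ℝ) (hC : 0 < C) (k : ℕ → ℕ)
    (hk : ∀ n : ℕ, (k n : ℝ) ≤ C * (n : ℝ) ^ (((j : ℝ) - 1) / (j : ℝ))) :
    Tendsto (fun n : ℕ =>
        ((Finset.univ.filter (fun s : Sym (Fin n) (k n) =>
            ∃ d : Fin n, j + 1 ≤ Multiset.count d (s : Multiset (Fin n)))).card : ℝ)
          / (Fintype.card (Sym (Fin n) (k n)) : ℝ))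
      atTop (nhds 0) := by
  have hjR : (0 : ℝ) < (j : ℝ) := by exact_mod_cast hj
  apply squeeze_zero' (g := fun n : ℕ => C ^ (j + 1) * (n : ℝ) ^ (-(1 / (j : ℝ))))
  · exact Eventually.of_forall fun n => div_nonneg (Nat.cast_nonneg _) (Nat.cast_nonneg _)
  · filter_upwards [eventually_ge_atTop 1] with n hn
    have hx1 : (1 : ℝ) ≤ (n : ℝ) := by exact_mod_cast hn
    have hx0 : (0 : ℝ) < (n : ℝ) := lt_of_lt_of_le one_pos hx1
    have hxj : (0 : ℝ) < (n : ℝ) ^ j := pow_pos hx0 j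
    have hD : (0 : ℝ) < (Fintype.card (Sym (Fin n) (k n)) : ℝ) := by
      have : 0 < Fintype.card (Sym (Fin n) (k n)) := by
        rw [Sym.card_sym_eq_multichoose, Nat.multichoose_eq, Fintype.card_fin]
        exact Nat.choose_pos (by omega)
      exact_mod_cast this
    have hkey : ((Finset.univ.filter (fun s : Sym (Fin n) (k n) =>
        ∃ d : Fin n, j + 1 ≤ Multiset.count d (s : Multiset (Fin n)))).card : ℝ) * (n : ℝ) ^ j
        ≤ (k n : ℝ) ^ (j + 1) * (Fintype.card (Sym (Fin n) (k n)) : ℝ) := by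
      have h := key_nat n (k n) j hn
      exact_mod_cast h
    set a : ℝ := ((j : ℝ) - 1) / (j : ℝ) with hadef
    have hnum : (k n : ℝ) ^ (j + 1) ≤ C ^ (j + 1) * (n : ℝ) ^ (a * ((j : ℝ) + 1)) := by
      calc (k n : ℝ) ^ (j + 1) ≤ (C * (n : ℝ) ^ a) ^ (j + 1) :=
            pow_le_pow_left₀ (Nat.cast_nonneg _) (hk n) (j + 1)
        _ = C ^ (j + 1) * ((n : ℝ) ^ a) ^ ((j + 1 : ℕ) : ℝ) := by
            rw [mul_pow, Real.rpow_natCast]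
        _ = C ^ (j + 1) * (n : ℝ) ^ (a * ((j : ℝ) + 1)) := by
            rw [← Real.rpow_mul (le_of_lt hx0)]
            push_cast
            ring_nf
    calc ((Finset.univ.filter (fun s : Sym (Fin n) (k n) =>
        ∃ d : Fin n, j + 1 ≤ Multiset.count d (s : Multiset (Fin n)))).card : ℝ)
          / (Fintype.card (Sym (Fin n) (k n)) : ℝ)
        ≤ (k n : ℝ) ^ (j + 1) / (n : ℝ) ^ j := (div_le_div_iff₀ hD hxj).mpr hkey
      _ ≤ (C ^ (j + 1) * (n : ℝ) ^ (a * ((j : ℝ) + 1))) / (n : ℝ) ^ j := by gcongr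
      _ = C ^ (j + 1) * (n : ℝ) ^ (-(1 / (j : ℝ))) := by
          rw [← Real.rpow_natCast (n : ℝ) j, mul_div_assoc, ← Real.rpow_sub hx0]
          congr 1
          rw [hadef]
          field_simp
          ring
  · have h1 : Tendsto (fun n : ℕ => (n : ℝ) ^ (-(1 / (j : ℝ)))) atTop (nhds 0) :=
      (tendsto_rpow_neg_atTop (by positivity)).comp tendsto_natCast_atTop_atTop
    simpa using h1.const_mul (C ^ (j + 1))
end

section
/- Let n, k, j, ℓ be positive integers with j·ℓ ≤ k, draw a uniformly random multiset of size k from n days, and let X be the number of days whose multiplicity is at least j. Then the expectation of the binomial coefficient C(X, ℓ) equals C(n, ℓ) · C(n+k-jℓ-1, k-jℓ) / C(n+k-1, k). -/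
open Finset

private lemma bbm_fixed_count (n k j ℓ : ℕ) (hjℓ : j * ℓ ≤ k)
    (T : Finset (Fin n)) (hT : T.card = ℓ) :
    (Finset.univ.filter (fun s : Sym (Fin n) k =>
        ∀ d ∈ T, j ≤ Multiset.count d (s : Multiset (Fin n)))).card
      = Fintype.card (Sym (Fin n) (k - j * ℓ)) := by
  classical
  set m : Multiset (Fin n) := j • T.val with hm
  have hcm : Multiset.card m = j * ℓ := by
    simp [hm, Multiset.card_nsmul, hT]
  have hcount : ∀ d ∈ T, Multiset.count d m = j := by
    intro d hd
    simp [hm, Multiset.count_nsmul, Multiset.count_eq_of_nodup T.nodup, hd]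
  have hle : ∀ (s : Sym (Fin n) k),
      (∀ d ∈ T, j ≤ Multiset.count d (s : Multiset (Fin n))) → m ≤ (s : Multiset (Fin n)) := by
    intro s hs
    rw [Multiset.le_iff_count]
    intro a
    by_cases ha : a ∈ T
    · rw [hcount a ha]; exact hs a ha
    · simp [hm, Multiset.count_nsmul, Multiset.count_eq_of_nodup T.nodup, ha]
  rw [← Finset.card_univ]
  refine Finset.card_bij'
    (fun s hs => ⟨(s : Multiset (Fin n)) - m, ?_⟩)
    (fun t _ => ⟨(t : Multiset (Fin n)) + m, ?_⟩) ?_ ?_ ?_ ?_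
  · have hms : m ≤ (s : Multiset (Fin n)) := hle s (by simpa using hs)
    have hsk : Multiset.card (s : Multiset (Fin n)) = k := s.prop
    rw [Multiset.card_sub hms, hcm, hsk]
  · have htk : Multiset.card (t : Multiset (Fin n)) = k - j * ℓ := t.prop
    rw [Multiset.card_add, hcm, htk, Nat.sub_add_cancel hjℓ]
  · intro a ha; exact Finset.mem_univ _
  · intro t ht
    refine Finset.mem_filter.mpr ⟨Finset.mem_univ _, ?_⟩
    intro d hd
    show j ≤ Multiset.count d ((t : Multiset (Fin n)) + m)
    rw [Multiset.count_add, hcount d hd]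
    omega
  · intro s hs
    have hms : m ≤ (s : Multiset (Fin n)) := hle s (by simpa using hs)
    apply Subtype.ext
    simpa using tsub_add_cancel_of_le hms
  · intro t ht
    apply Subtype.ext
    simp

/-- **Binomial moments of the number of `j`-fold-or-more bosonic birthdays.**
Draw a uniformly random multiset of size `k` from `n` days, and let `X` be the number of
days whose multiplicity is at least `j`.  Then for `j·ℓ ≤ k`,
`E[C(X,ℓ)] = C(n,ℓ) · C(n+k-jℓ-1, k-jℓ) / C(n+k-1, k)`. -/
theorem bosonic_birthday_binomial_moment
    (n k j ℓ : ℕ) (hn : 0 < n) (hk : 0 < k) (hj : 0 < j) (hℓ : 0 < ℓ)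
    (hjℓ : j * ℓ ≤ k) :
    (∑ s : Sym (Fin n) k,
        ((Nat.choose (Finset.univ.filter (fun d : Fin n =>
            j ≤ Multiset.count d (s : Multiset (Fin n)))).card ℓ : ℕ) : ℝ))
      / (Fintype.card (Sym (Fin n) k) : ℝ)
    = (n.choose ℓ : ℝ) * ((n + k - j * ℓ - 1).choose (k - j * ℓ) : ℝ)
        / ((n + k - 1).choose k : ℝ) := by
  classical
  set F : Sym (Fin n) k → Finset (Fin n) :=
    fun s => Finset.univ.filter (fun d : Fin n => j ≤ Multiset.count d (s : Multiset (Fin n)))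
    with hF
  have key : (∑ s : Sym (Fin n) k, Nat.choose (F s).card ℓ)
      = n.choose ℓ * (n + k - j * ℓ - 1).choose (k - j * ℓ) := by
    have step1 : ∀ s : Sym (Fin n) k, Nat.choose (F s).card ℓ
        = ∑ T ∈ Finset.powersetCard ℓ (Finset.univ : Finset (Fin n)),
            if T ⊆ F s then 1 else 0 := by
      intro s
      rw [← Finset.card_powersetCard, ← Finset.card_filter]
      congr 1
      ext T
      simp only [Finset.mem_powersetCard, Finset.mem_filter]
      constructor
      · rintro ⟨h1, h2⟩; exact ⟨⟨Finset.subset_univ T, h2⟩, h1⟩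
      · rintro ⟨⟨_, h2⟩, h1⟩; exact ⟨h1, h2⟩
    rw [Finset.sum_congr rfl (fun s _ => step1 s), Finset.sum_comm]
    have step2 : ∀ T ∈ Finset.powersetCard ℓ (Finset.univ : Finset (Fin n)),
        (∑ s : Sym (Fin n) k, if T ⊆ F s then 1 else 0)
          = (n + k - j * ℓ - 1).choose (k - j * ℓ) := by
      intro T hT
      have hTcard : T.card = ℓ := (Finset.mem_powersetCard.mp hT).2
      have : (∑ s : Sym (Fin n) k, if T ⊆ F s then 1 else 0)
          = (Finset.univ.filter (fun s : Sym (Fin n) k => T ⊆ F s)).card := by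
        rw [Finset.card_filter]
      rw [this]
      have heq : (Finset.univ.filter (fun s : Sym (Fin n) k => T ⊆ F s))
          = (Finset.univ.filter (fun s : Sym (Fin n) k =>
              ∀ d ∈ T, j ≤ Multiset.count d (s : Multiset (Fin n)))) := by
        apply Finset.filter_congr
        intro s _
        simp only [hF, Finset.subset_iff, Finset.mem_filter, Finset.mem_univ, true_and]
      rw [heq, bbm_fixed_count n k j ℓ hjℓ T hTcard, Sym.card_sym_eq_multichoose,
        Nat.multichoose_eq, Fintype.card_fin]
      congr 2
      omega

    rw [Finset.sum_congr rfl step2, Finset.sum_const, Finset.card_powersetCard,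
      Finset.card_univ, Fintype.card_fin, smul_eq_mul]
  have hD : Fintype.card (Sym (Fin n) k) = (n + k - 1).choose k := by
    rw [Sym.card_sym_eq_multichoose, Nat.multichoose_eq, Fintype.card_fin]
  have hsum : (∑ s : Sym (Fin n) k,
      ((Nat.choose (Finset.univ.filter (fun d : Fin n =>
          j ≤ Multiset.count d (s : Multiset (Fin n)))).card ℓ : ℕ) : ℝ))
      = ((n.choose ℓ * (n + k - j * ℓ - 1).choose (k - j * ℓ) : ℕ) : ℝ) := by
    rw [← Nat.cast_sum]
    exact_mod_cast congrArg (Nat.cast (R := ℝ)) key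
  rw [hsum, hD]
  push_cast
  ring
end

section
/- Fix an integer j ≥ 2, a constant c > 0, and a positive integer ℓ, and let k : ℕ → ℕ satisfy k(n) / n^((j-1)/j) → c as n → ∞. For each n, draw a uniformly random multiset of size k(n) from n days, and let X_n be the number of days whose multiplicity is at least j. Then E[C(X_n, ℓ)] → c^(jℓ) / ℓ! as n → ∞; that is, the ℓ-th factorial moment of X_n converges to that of a Poisson random variable with mean c^j. -/
open Filter Finset

lemma birthday_count (n kk j ℓ : ℕ) (h : j * ℓ ≤ kk) :
    (∑ s : Sym (Fin n) kk,
        Nat.choose (Finset.univ.filter (fun d : Fin n =>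
            j ≤ Multiset.count d (s : Multiset (Fin n)))).card ℓ)
    = n.choose ℓ * Fintype.card (Sym (Fin n) (kk - j * ℓ)) := by
  have step1 : ∀ A : Finset (Fin n), A.card.choose ℓ =
      ∑ T ∈ (Finset.univ : Finset (Fin n)).powersetCard ℓ, if T ⊆ A then 1 else 0 := by
    intro A
    rw [← Finset.sum_filter, Finset.sum_const, smul_eq_mul, mul_one,
      ← Finset.card_powersetCard]
    congr 1
    ext T
    simp [Finset.mem_powersetCard, and_comm]
  calc (∑ s : Sym (Fin n) kk,
        Nat.choose (Finset.univ.filter (fun d : Fin n =>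
            j ≤ Multiset.count d (s : Multiset (Fin n)))).card ℓ)
      = ∑ s : Sym (Fin n) kk, ∑ T ∈ (Finset.univ : Finset (Fin n)).powersetCard ℓ,
          if T ⊆ Finset.univ.filter (fun d : Fin n =>
            j ≤ Multiset.count d (s : Multiset (Fin n))) then 1 else 0 :=
        Finset.sum_congr rfl fun s _ => step1 _
    _ = ∑ T ∈ (Finset.univ : Finset (Fin n)).powersetCard ℓ, ∑ s : Sym (Fin n) kk,
          if T ⊆ Finset.univ.filter (fun d : Fin n =>
            j ≤ Multiset.count d (s : Multiset (Fin n))) then 1 else 0 :=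
        Finset.sum_comm
    _ = ∑ T ∈ (Finset.univ : Finset (Fin n)).powersetCard ℓ,
          Fintype.card (Sym (Fin n) (kk - j * ℓ)) := by
        refine Finset.sum_congr rfl fun T hT => ?_
        rw [Finset.mem_powersetCard] at hT
        rw [← Finset.sum_filter, Finset.sum_const, smul_eq_mul, mul_one]
        set m₀ : Multiset (Fin n) := j • T.val with hm₀
        have hcount : ∀ d : Fin n, Multiset.count d m₀ = if d ∈ T then j else 0 := by
          intro d
          rw [hm₀, Multiset.count_nsmul]
          by_cases hd : d ∈ T
          · rw [Multiset.count_eq_one_of_mem T.nodup hd, if_pos hd, mul_one]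
          · rw [Multiset.count_eq_zero_of_notMem hd, if_neg hd, mul_zero]
        have hcard0 : Multiset.card m₀ = j * ℓ := by
          rw [hm₀, Multiset.card_nsmul]
          rw [show Multiset.card T.val = T.card from rfl, hT.2]
        have hle : ∀ s : Sym (Fin n) kk,
            (T ⊆ Finset.univ.filter (fun d : Fin n =>
              j ≤ Multiset.count d (s : Multiset (Fin n)))) ↔ m₀ ≤ (s : Multiset (Fin n)) := by
          intro s
          rw [Multiset.le_iff_count]
          constructor
          · intro hs d
            rw [hcount d]
            by_cases hd : d ∈ T
            · rw [if_pos hd]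
              simpa using (Finset.mem_filter.1 (hs hd)).2
            · simp [hd]
          · intro hs d hd
            refine Finset.mem_filter.2 ⟨Finset.mem_univ _, ?_⟩
            have := hs d
            rwa [hcount d, if_pos hd] at this
        have hfil : (Finset.univ.filter (fun s : Sym (Fin n) kk =>
              T ⊆ Finset.univ.filter (fun d : Fin n =>
                j ≤ Multiset.count d (s : Multiset (Fin n))))) =
            (Finset.univ.filter (fun s : Sym (Fin n) kk => m₀ ≤ (s : Multiset (Fin n)))) := by
          ext s; simp only [Finset.mem_filter, Finset.mem_univ, true_and]; exact hle s
        rw [hfil, ← Fintype.card_subtype]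
        refine Fintype.card_congr ?_
        refine
          { toFun := fun s => ⟨(s.1 : Multiset (Fin n)) - m₀, ?_⟩
            invFun := fun u => ⟨⟨(u : Multiset (Fin n)) + m₀, ?_⟩, ?_⟩
            left_inv := ?_
            right_inv := ?_ }
        · rw [Multiset.card_sub s.2, hcard0, Sym.card_coe]
        · rw [Multiset.card_add, hcard0, Sym.card_coe, Nat.sub_add_cancel h]
        · exact Multiset.le_add_left _ _
        · rintro ⟨s, hs⟩
          exact Subtype.ext (Subtype.ext (tsub_add_cancel_of_le hs))
        · intro u
          exact Subtype.ext (add_tsub_cancel_right _ _)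
    _ = n.choose ℓ * Fintype.card (Sym (Fin n) (kk - j * ℓ)) := by
        rw [Finset.sum_const, smul_eq_mul, Finset.card_powersetCard, Finset.card_univ,
          Fintype.card_fin]

lemma key_ident (n : ℕ) (hn : 1 ≤ n) :
    ∀ m kk : ℕ, m ≤ kk →
      (n + kk - 1).choose kk * kk.descFactorial m
        = (n + (kk - m) - 1).choose (kk - m) * (n + kk - 1).descFactorial m := by
  intro m
  induction m with
  | zero => intro kk _; simp
  | succ m IH =>
    intro kk h
    have IH' := IH kk (Nat.le_of_succ_le h)
    have absorb : (kk - m) * (n + (kk - m) - 1).choose (kk - m)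
        = (n + (kk - (m + 1)) - 1).choose (kk - (m + 1)) * (n + kk - 1 - m) := by
      obtain ⟨a, rfl⟩ : ∃ a, kk = m + 1 + a := ⟨kk - (m + 1), by omega⟩
      obtain ⟨n', rfl⟩ : ∃ n', n = n' + 1 := ⟨n - 1, by omega⟩
      have e1 : m + 1 + a - m = a + 1 := by omega
      have e2 : n' + 1 + (a + 1) - 1 = n' + a + 1 := by omega
      have e3 : m + 1 + a - (m + 1) = a := by omega
      have e4 : n' + 1 + a - 1 = n' + a := by omega
      have e5 : n' + 1 + (m + 1 + a) - 1 - m = n' + a + 1 := by omega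
      rw [e1, e3, e2, e4, e5]
      have key := Nat.add_one_mul_choose_eq (n' + a) a
      rw [mul_comm, ← key, mul_comm]
    calc (n + kk - 1).choose kk * kk.descFactorial (m + 1)
        = (kk - m) * ((n + kk - 1).choose kk * kk.descFactorial m) := by
          rw [Nat.descFactorial_succ]; ring
      _ = (kk - m) * ((n + (kk - m) - 1).choose (kk - m) * (n + kk - 1).descFactorial m) := by
          rw [IH']
      _ = ((kk - m) * (n + (kk - m) - 1).choose (kk - m)) * (n + kk - 1).descFactorial m := by
          ring
      _ = ((n + (kk - (m + 1)) - 1).choose (kk - (m + 1)) * (n + kk - 1 - m))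
            * (n + kk - 1).descFactorial m := by rw [absorb]
      _ = (n + (kk - (m + 1)) - 1).choose (kk - (m + 1)) * (n + kk - 1).descFactorial (m + 1) := by
          rw [Nat.descFactorial_succ]; ring

lemma ratio_eq (n kk m ℓ : ℕ) (hn : 1 ≤ n) (hm : m ≤ kk) :
    ((n.choose ℓ * Fintype.card (Sym (Fin n) (kk - m)) : ℕ) : ℝ)
        / (Fintype.card (Sym (Fin n) kk) : ℝ)
      = ((n.descFactorial ℓ : ℕ) : ℝ) * ((kk.descFactorial m : ℕ) : ℝ)
        / ((((n + kk - 1).descFactorial m : ℕ) : ℝ) * (ℓ.factorial : ℝ)) := by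
  rw [Sym.card_sym_eq_choose, Sym.card_sym_eq_choose, Fintype.card_fin]
  have hkey := key_ident n hn m kk hm
  have hC : 0 < (n + kk - 1).choose kk := Nat.choose_pos (by omega)
  have hD : 0 < (n + kk - 1).descFactorial m :=
    Nat.pos_of_ne_zero fun h0 => by
      have := Nat.descFactorial_eq_zero_iff_lt.mp h0; omega
  have hdesc : n.descFactorial ℓ = ℓ.factorial * n.choose ℓ :=
    Nat.descFactorial_eq_factorial_mul_choose n ℓ
  have hCc : ((n + kk - 1).choose kk : ℝ) ≠ 0 := by positivity
  have hDc : (((n + kk - 1).descFactorial m : ℕ) : ℝ) ≠ 0 := by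
    exact_mod_cast hD.ne'
  have hFc : (ℓ.factorial : ℝ) ≠ 0 := by positivity
  have hkeyR : ((n + (kk - m) - 1).choose (kk - m) : ℝ)
      * (((n + kk - 1).descFactorial m : ℕ) : ℝ)
      = ((n + kk - 1).choose kk : ℝ) * ((kk.descFactorial m : ℕ) : ℝ) := by
    exact_mod_cast hkey.symm
  rw [hdesc]
  push_cast
  field_simp
  linear_combination (n.choose ℓ : ℝ) * hkeyR

/-- **Limit of the factorial moments of the number of `j`-fold bosonic birthdays.**
Fix `j ≥ 2`, `c > 0` and `ℓ ≥ 1`, and suppose `k n / n^((j-1)/j) → c`.  Draw a uniformly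
random multiset of size `k n` from `n` days, and let `X_n` be the number of days whose
multiplicity is at least `j`.  Then the `ℓ`-th binomial moment satisfies
`E[C(X_n, ℓ)] → c^(jℓ)/ℓ!`, i.e. the `ℓ`-th factorial moment of `X_n` converges to that
of a Poisson random variable with mean `c^j`. -/
theorem bosonic_birthday_factorial_moment_limit
    (j : ℕ) (hj : 2 ≤ j) (c : ℝ) (hc : 0 < c) (ℓ : ℕ) (hℓ : 0 < ℓ) (k : ℕ → ℕ)
    (hk : Tendsto (fun n : ℕ => (k n : ℝ) / (n : ℝ) ^ (((j : ℝ) - 1) / (j : ℝ)))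
      atTop (nhds c)) :
    Tendsto (fun n : ℕ =>
        (∑ s : Sym (Fin n) (k n),
            ((Nat.choose (Finset.univ.filter (fun d : Fin n =>
                j ≤ Multiset.count d (s : Multiset (Fin n)))).card ℓ : ℕ) : ℝ))
          / (Fintype.card (Sym (Fin n) (k n)) : ℝ))
      atTop (nhds (c ^ (j * ℓ) / (ℓ.factorial : ℝ))) := by
  have hjR : (0:ℝ) < (j:ℝ) := by exact_mod_cast (by omega : 0 < j)
  have hj2R : (2:ℝ) ≤ (j:ℝ) := by exact_mod_cast hj
  set e : ℝ := ((j:ℝ) - 1) / (j:ℝ) with he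
  have hepos : 0 < e := by
    rw [he]
    apply div_pos
    · linarith
    · exact hjR
  have hr : Tendsto (fun n : ℕ => (n:ℝ) ^ e) atTop atTop :=
    (tendsto_rpow_atTop hepos).comp tendsto_natCast_atTop_atTop
  have hkR : Tendsto (fun n : ℕ => (k n : ℝ)) atTop atTop := by
    refine (hk.pos_mul_atTop hc hr).congr' ?_
    filter_upwards [eventually_ge_atTop 1] with n hn
    have hn0 : (0:ℝ) < (n:ℝ) := by exact_mod_cast hn
    have : (n:ℝ) ^ e ≠ 0 := (Real.rpow_pos_of_pos hn0 e).ne'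
    field_simp
  have hkN : Tendsto k atTop atTop := by
    rw [← tendsto_natCast_atTop_iff (R := ℝ)]; exact hkR
  have hkdivn : Tendsto (fun n : ℕ => (k n : ℝ) / (n:ℝ)) atTop (nhds 0) := by
    have h2 : Tendsto (fun n : ℕ => (n:ℝ) ^ (-(1/(j:ℝ)))) atTop (nhds 0) :=
      (tendsto_rpow_neg_atTop (by positivity)).comp tendsto_natCast_atTop_atTop
    have h3 := hk.mul h2
    rw [mul_zero] at h3
    refine h3.congr' ?_
    filter_upwards [eventually_ge_atTop 1] with n hn
    have hn0 : (0:ℝ) < (n:ℝ) := by exact_mod_cast hn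
    have hsum : e + 1/(j:ℝ) = 1 := by rw [he]; field_simp; ring
    rw [Real.rpow_neg hn0.le, ← div_eq_mul_inv, div_div, ← Real.rpow_add hn0, hsum,
      Real.rpow_one]
  have hA : ∀ i : ℕ, Tendsto (fun n : ℕ => ((n - i : ℕ):ℝ)/(n:ℝ)) atTop (nhds 1) := by
    intro i
    have h0 : Tendsto (fun n : ℕ => 1 - (i:ℝ)/(n:ℝ)) atTop (nhds 1) := by
      simpa using tendsto_const_nhds.sub (tendsto_const_div_atTop_nhds_zero_nat (i:ℝ))
    refine h0.congr' ?_
    filter_upwards [eventually_ge_atTop (max i 1)] with n hn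
    have hi : i ≤ n := le_trans (le_max_left _ _) hn
    have hn0 : (n:ℝ) ≠ 0 := by
      have h1 : 1 ≤ n := le_trans (le_max_right _ _) hn
      exact_mod_cast (by omega : n ≠ 0)
    rw [Nat.cast_sub hi, sub_div, div_self hn0]
  have hB : ∀ i : ℕ, Tendsto (fun n : ℕ => ((k n - i : ℕ):ℝ)/((n:ℝ) ^ e)) atTop (nhds c) := by
    intro i
    have h0 := hk.sub ((tendsto_const_nhds (x := (i:ℝ))).div_atTop hr)
    rw [sub_zero] at h0
    refine h0.congr' ?_
    filter_upwards [hkN.eventually_ge_atTop i] with n hni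
    rw [← sub_div, ← Nat.cast_sub hni]
  have hC : ∀ i : ℕ, Tendsto (fun n : ℕ => (n:ℝ)/((n + k n - 1 - i : ℕ):ℝ)) atTop (nhds 1) := by
    intro i
    have hup : Tendsto (fun n : ℕ => ((n:ℝ) + (k n : ℝ))/(n:ℝ)) atTop (nhds 1) := by
      have h0 : Tendsto (fun n : ℕ => 1 + (k n:ℝ)/(n:ℝ)) atTop (nhds 1) := by
        simpa using tendsto_const_nhds.add hkdivn
      refine h0.congr' ?_
      filter_upwards [eventually_ge_atTop 1] with n hn
      have hn0 : (n:ℝ) ≠ 0 := by exact_mod_cast (by omega : n ≠ 0)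
      rw [add_div, div_self hn0]
    have hq : Tendsto (fun n : ℕ => ((n + k n - 1 - i : ℕ):ℝ)/(n:ℝ)) atTop (nhds 1) := by
      refine tendsto_of_tendsto_of_tendsto_of_le_of_le' tendsto_const_nhds hup ?_ ?_
      · filter_upwards [eventually_ge_atTop 1, hkN.eventually_ge_atTop (i+1)] with n hn1 hki
        have hn0 : (0:ℝ) < (n:ℝ) := by exact_mod_cast hn1
        rw [le_div_iff₀ hn0, one_mul]
        exact_mod_cast (by omega : n ≤ n + k n - 1 - i)
      · filter_upwards [eventually_ge_atTop 1] with n hn1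
        have hn0 : (0:ℝ) < (n:ℝ) := by exact_mod_cast hn1
        have hnum : ((n + k n - 1 - i : ℕ):ℝ) ≤ (n:ℝ) + (k n:ℝ) := by
          exact_mod_cast (by omega : n + k n - 1 - i ≤ n + k n)
        exact div_le_div_of_nonneg_right hnum hn0.le
    have h1 := hq.inv₀ one_ne_zero
    rw [inv_one] at h1
    refine h1.congr' ?_
    filter_upwards with n
    rw [inv_div]
  -- product limits
  have hF1 : Tendsto (fun n : ℕ => ∏ i ∈ Finset.range ℓ, ((n - i : ℕ):ℝ)/(n:ℝ))
      atTop (nhds 1) := by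
    have := tendsto_finset_prod (f := fun (i : ℕ) (n : ℕ) => ((n - i : ℕ):ℝ)/(n:ℝ))
      (Finset.range ℓ) (fun i _ => hA i)
    simpa using this
  have hF2 : Tendsto (fun n : ℕ => ∏ i ∈ Finset.range (j * ℓ), ((k n - i : ℕ):ℝ)/((n:ℝ) ^ e))
      atTop (nhds (c ^ (j * ℓ))) := by
    have := tendsto_finset_prod (f := fun (i : ℕ) (n : ℕ) => ((k n - i : ℕ):ℝ)/((n:ℝ) ^ e))
      (Finset.range (j * ℓ)) (fun i _ => hB i)
    simpa using this
  have hF3 : Tendsto (fun n : ℕ => ∏ i ∈ Finset.range (j * ℓ), (n:ℝ)/((n + k n - 1 - i : ℕ):ℝ))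
      atTop (nhds 1) := by
    have := tendsto_finset_prod (f := fun (i : ℕ) (n : ℕ) => (n:ℝ)/((n + k n - 1 - i : ℕ):ℝ))
      (Finset.range (j * ℓ)) (fun i _ => hC i)
    simpa using this
  have hlim : Tendsto (fun n : ℕ =>
      (∏ i ∈ Finset.range ℓ, ((n - i : ℕ):ℝ)/(n:ℝ))
        * (∏ i ∈ Finset.range (j * ℓ), ((k n - i : ℕ):ℝ)/((n:ℝ) ^ e))
        * (∏ i ∈ Finset.range (j * ℓ), (n:ℝ)/((n + k n - 1 - i : ℕ):ℝ))
        / (ℓ.factorial : ℝ)) atTop (nhds (c ^ (j * ℓ) / (ℓ.factorial : ℝ))) := by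
    have := ((hF1.mul hF2).mul hF3).div_const (ℓ.factorial : ℝ)
    simpa using this
  refine hlim.congr' ?_
  filter_upwards [eventually_ge_atTop 1, hkN.eventually_ge_atTop (j * ℓ)] with n hn1 hkm
  have hn0 : (0:ℝ) < (n:ℝ) := by exact_mod_cast hn1
  -- rewrite the sum via the combinatorial identity
  have hsumcast : (∑ s : Sym (Fin n) (k n),
        ((Nat.choose (Finset.univ.filter (fun d : Fin n =>
            j ≤ Multiset.count d (s : Multiset (Fin n)))).card ℓ : ℕ) : ℝ))
      = ((n.choose ℓ * Fintype.card (Sym (Fin n) (k n - j * ℓ)) : ℕ) : ℝ) := by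
    rw [← Nat.cast_sum, birthday_count n (k n) j ℓ hkm]
  rw [hsumcast, ratio_eq n (k n) (j * ℓ) ℓ hn1 hkm]
  -- expand descFactorials as products
  have hP1 : (∏ i ∈ Finset.range ℓ, ((n - i : ℕ):ℝ)/(n:ℝ))
      = ((n.descFactorial ℓ : ℕ):ℝ)/(n:ℝ)^ℓ := by
    rw [Nat.descFactorial_eq_prod_range, Nat.cast_prod, Finset.prod_div_distrib,
      Finset.prod_const, Finset.card_range]
  have hP2 : (∏ i ∈ Finset.range (j * ℓ), ((k n - i : ℕ):ℝ)/((n:ℝ) ^ e))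
      = (((k n).descFactorial (j * ℓ) : ℕ):ℝ)/((n:ℝ) ^ e)^(j * ℓ) := by
    rw [Nat.descFactorial_eq_prod_range, Nat.cast_prod, Finset.prod_div_distrib,
      Finset.prod_const, Finset.card_range]
  have hP3 : (∏ i ∈ Finset.range (j * ℓ), (n:ℝ)/((n + k n - 1 - i : ℕ):ℝ))
      = (n:ℝ)^(j * ℓ)/(((n + k n - 1).descFactorial (j * ℓ) : ℕ):ℝ) := by
    rw [Nat.descFactorial_eq_prod_range, Nat.cast_prod, Finset.prod_div_distrib,
      Finset.prod_const, Finset.card_range]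
  rw [hP1, hP2, hP3]
  -- power identity
  have hrm : ((n:ℝ) ^ e)^(j * ℓ) = (n:ℝ)^((j - 1) * ℓ) := by
    rw [← Real.rpow_natCast ((n:ℝ) ^ e) (j * ℓ), ← Real.rpow_natCast (n:ℝ) ((j - 1) * ℓ),
      ← Real.rpow_mul hn0.le]
    congr 1
    rw [he]
    have hj1 : ((j - 1 : ℕ):ℝ) = (j:ℝ) - 1 := by
      push_cast [Nat.cast_sub (by omega : 1 ≤ j)]; ring
    push_cast [hj1]
    field_simp
  have hpow : (n:ℝ)^ℓ * ((n:ℝ) ^ e)^(j * ℓ) = (n:ℝ)^(j * ℓ) := by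
    rw [hrm, ← pow_add]
    congr 1
    obtain ⟨j', rfl⟩ : ∃ j', j = j' + 1 := ⟨j - 1, by omega⟩
    simp [Nat.add_sub_cancel]
    ring
  -- final algebra
  set A : ℝ := ((n.descFactorial ℓ : ℕ):ℝ) with hA'
  set B : ℝ := (((k n).descFactorial (j * ℓ) : ℕ):ℝ) with hB'
  set C : ℝ := (((n + k n - 1).descFactorial (j * ℓ) : ℕ):ℝ) with hC'
  have hCpos : (0:ℝ) < C := by
    rw [hC']
    have : 0 < (n + k n - 1).descFactorial (j * ℓ) :=
      Nat.pos_of_ne_zero fun h0 => by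
        have := Nat.descFactorial_eq_zero_iff_lt.mp h0; omega
    exact_mod_cast this
  have hL : (ℓ.factorial : ℝ) ≠ 0 := by positivity
  have hnm : (0:ℝ) < (n:ℝ)^(j * ℓ) := by positivity
  have hnl : ((n:ℝ)^ℓ) ≠ 0 := by positivity
  have hre : ((n:ℝ) ^ e)^(j * ℓ) ≠ 0 := by
    have := Real.rpow_pos_of_pos hn0 e
    positivity
  have hstep : A/(n:ℝ)^ℓ * (B/((n:ℝ) ^ e)^(j * ℓ)) * ((n:ℝ)^(j * ℓ)/C) / (ℓ.factorial : ℝ)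
      = (A * B * (n:ℝ)^(j * ℓ)) / (((n:ℝ)^ℓ * ((n:ℝ) ^ e)^(j * ℓ)) * (C * (ℓ.factorial : ℝ))) := by
    ring
  rw [hstep, hpow, show A * B * (n:ℝ)^(j * ℓ) = (n:ℝ)^(j * ℓ) * (A * B) by ring,
    mul_div_mul_left _ _ hnm.ne']
end

section
/- Let n, k, j be positive integers with j + 1 ≤ k, draw a uniformly random multiset of size k from n days, and let Y be the number of days whose multiplicity is at least j+1. Then the expectation of Y equals n · C(n+k-j-2, k-j-1) / C(n+k-1, k). Moreover, if j is fixed, C > 0 is a constant, and k = k(n) satisfies k(n) ≤ C · n^((j-1)/j), then this expectation is O(n^(-1/j)) and in particular tends to 0 as n → ∞. -/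
open Filter

/-- The expected number of days whose multiplicity is at least `j+1`, for a uniformly
random multiset of size `k` drawn from `n` days. -/
noncomputable def expectedOvercrowdedDays (j n k : ℕ) : ℝ :=
  (∑ s : Sym (Fin n) k,
      (((Finset.univ.filter (fun d : Fin n =>
          j + 1 ≤ Multiset.count d (s : Multiset (Fin n)))).card : ℕ) : ℝ))
    / (Fintype.card (Sym (Fin n) k) : ℝ)


/-- Bijection: multisets of size `m+r` containing `d` at least `r` times ↔ multisets of size `m`. -/
noncomputable def overEquiv {α : Type*} [DecidableEq α] (d : α) (m r : ℕ) :
    {s : Sym α (m + r) // r ≤ Multiset.count d (s : Multiset α)} ≃ Sym α m where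
  toFun s := ⟨(s : Multiset α) - Multiset.replicate r d, by
    rw [Multiset.card_sub (Multiset.le_count_iff_replicate_le.mp s.2)]
    simp [s.1.2]⟩
  invFun t := ⟨⟨(t : Multiset α) + Multiset.replicate r d, by simp [t.2]⟩, by
    simp⟩
  left_inv s := by
    apply Subtype.ext; apply Subtype.ext
    simpa using tsub_add_cancel_of_le (Multiset.le_count_iff_replicate_le.mp s.2)
  right_inv t := by
    apply Subtype.ext
    simp

theorem filter_card_eq {n : ℕ} (d : Fin n) (m r : ℕ) :
    (Finset.univ.filter (fun s : Sym (Fin n) (m + r) =>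
        r ≤ Multiset.count d (s : Multiset (Fin n)))).card
      = Fintype.card (Sym (Fin n) m) := by
  rw [← Fintype.card_subtype, Fintype.card_congr (overEquiv d m r)]

theorem numerator_eq (j n m : ℕ) :
    (∑ s : Sym (Fin n) (m + (j + 1)),
      (Finset.univ.filter (fun d : Fin n =>
          j + 1 ≤ Multiset.count d (s : Multiset (Fin n)))).card)
    = n * Fintype.card (Sym (Fin n) m) := by
  simp_rw [Finset.card_filter]
  rw [Finset.sum_comm]
  have : ∀ d : Fin n, (∑ s : Sym (Fin n) (m + (j+1)),
      if j + 1 ≤ Multiset.count d (s : Multiset (Fin n)) then 1 else 0)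
      = Fintype.card (Sym (Fin n) m) := by
    intro d
    rw [← filter_card_eq d m (j+1), Finset.card_filter]
  simp_rw [this]
  simp [mul_comm]

theorem formula (n k' j : ℕ) (hn : 0 < n) (hk : j + 1 ≤ k') :
    expectedOvercrowdedDays j n k'
      = (n : ℝ) * ((n + k' - j - 2).choose (k' - j - 1) : ℝ)
          / ((n + k' - 1).choose k' : ℝ) := by
  obtain ⟨m, rfl⟩ : ∃ m, k' = m + (j + 1) := ⟨k' - (j + 1), by omega⟩
  rw [expectedOvercrowdedDays]
  rw [← Nat.cast_sum, numerator_eq j n m]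
  rw [Sym.card_sym_eq_choose, Sym.card_sym_eq_choose]
  have h1 : Fintype.card (Fin n) + m - 1 = n + (m + (j+1)) - j - 2 := by
    simp only [Fintype.card_fin]; omega
  have h2 : m = m + (j + 1) - j - 1 := by omega
  have h3 : Fintype.card (Fin n) + (m + (j+1)) - 1 = n + (m + (j+1)) - 1 := by
    simp only [Fintype.card_fin]
  rw [h1, h3, ← h2]
  push_cast
  ring

theorem step_ineq (n M : ℕ) :
    n * Nat.choose (n + M - 1) M ≤ (M + 1) * Nat.choose (n + M) (M + 1) := by
  have h1 : Nat.choose (n + M - 1) M ≤ Nat.choose (n + M) M :=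
    Nat.choose_le_choose M (by omega)
  have h2 : Nat.choose (n + M) (M + 1) * (M + 1) = Nat.choose (n + M) M * (n + M - M) :=
    Nat.choose_succ_right_eq (n + M) M
  have h3 : n + M - M = n := by omega
  calc n * Nat.choose (n + M - 1) M ≤ n * Nat.choose (n + M) M :=
        Nat.mul_le_mul_left n h1
    _ = (M + 1) * Nat.choose (n + M) (M + 1) := by
        rw [mul_comm ((M:ℕ)+1), h2, h3, mul_comm]

theorem iter_ineq (n m K : ℕ) : ∀ i, m + i ≤ K →
    n ^ i * Nat.choose (n + m - 1) m ≤ K ^ i * Nat.choose (n + (m + i) - 1) (m + i) := by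
  intro i
  induction i with
  | zero => simp
  | succ i ih =>
    intro h
    have ih' := ih (by omega)
    have step := step_ineq n (m + i)
    have hstep : n + (m + i) = n + (m + (i+1)) - 1 := by omega
    calc n ^ (i+1) * Nat.choose (n + m - 1) m
        = n * (n ^ i * Nat.choose (n + m - 1) m) := by ring
      _ ≤ n * (K ^ i * Nat.choose (n + (m + i) - 1) (m + i)) := Nat.mul_le_mul_left n ih'
      _ = K ^ i * (n * Nat.choose (n + (m + i) - 1) (m + i)) := by ring
      _ ≤ K ^ i * ((m + i + 1) * Nat.choose (n + (m + i)) (m + i + 1)) :=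
          Nat.mul_le_mul_left _ step
      _ ≤ K ^ i * (K * Nat.choose (n + (m + i)) (m + i + 1)) :=
          Nat.mul_le_mul_left _ (Nat.mul_le_mul_right _ (by omega))
      _ = K ^ (i+1) * Nat.choose (n + (m + (i+1)) - 1) (m + (i + 1)) := by
          rw [hstep]; ring_nf

theorem zero_of_lt (j n k' : ℕ) (h : k' < j + 1) : expectedOvercrowdedDays j n k' = 0 := by
  rw [expectedOvercrowdedDays]
  convert zero_div _
  rw [Finset.sum_eq_zero]
  intro s _
  norm_cast
  rw [Finset.card_eq_zero, Finset.filter_eq_empty_iff]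
  intro d _
  have := Multiset.count_le_card d (s : Multiset (Fin n))
  have hcard : Multiset.card (s : Multiset (Fin n)) = k' := s.2
  omega

theorem EOD_nonneg (j n k' : ℕ) : 0 ≤ expectedOvercrowdedDays j n k' := by
  apply div_nonneg _ (Nat.cast_nonneg _)
  exact Finset.sum_nonneg fun s _ => Nat.cast_nonneg _

theorem EOD_bound (j : ℕ) (hj : 0 < j) (C : ℝ) (hC : 0 < C) (n kn : ℕ) (hn : 1 ≤ n)
    (hk : (kn : ℝ) ≤ C * (n : ℝ) ^ (((j : ℝ) - 1) / (j : ℝ))) :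
    expectedOvercrowdedDays j n kn ≤ C ^ (j + 1) * (n : ℝ) ^ (-(1 : ℝ) / (j : ℝ)) := by
  have hnR : (0 : ℝ) < n := by exact_mod_cast hn
  have hjR : ((j : ℝ)) ≠ 0 := by positivity
  by_cases hjk : j + 1 ≤ kn
  · rw [formula n kn j hn hjk]
    have hkey := iter_ineq n (kn - (j + 1)) kn (j + 1) (by omega)
    have e1 : kn - (j + 1) + (j + 1) = kn := by omega
    have e2 : n + (kn - (j + 1)) - 1 = n + kn - j - 2 := by omega
    have e3 : kn - (j + 1) = kn - j - 1 := by omega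
    rw [e1, e2, e3] at hkey
    have hB : 0 < Nat.choose (n + kn - 1) kn := Nat.choose_pos (by omega)
    have hBR : (0 : ℝ) < ((n + kn - 1).choose kn : ℝ) := by exact_mod_cast hB
    have hkeyR : (n : ℝ) ^ (j + 1) * ((n + kn - j - 2).choose (kn - j - 1) : ℝ)
        ≤ (kn : ℝ) ^ (j + 1) * ((n + kn - 1).choose kn : ℝ) := by exact_mod_cast hkey
    have step1 : (n : ℝ) * ((n + kn - j - 2).choose (kn - j - 1) : ℝ)
          / ((n + kn - 1).choose kn : ℝ)
        ≤ (kn : ℝ) ^ (j + 1) / (n : ℝ) ^ j := by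
      rw [div_le_div_iff₀ hBR (by positivity)]
      calc (n : ℝ) * ((n + kn - j - 2).choose (kn - j - 1) : ℝ) * (n : ℝ) ^ j
          = (n : ℝ) ^ (j + 1) * ((n + kn - j - 2).choose (kn - j - 1) : ℝ) := by ring
        _ ≤ (kn : ℝ) ^ (j + 1) * ((n + kn - 1).choose kn : ℝ) := hkeyR
    refine step1.trans ?_
    set p : ℝ := ((j : ℝ) - 1) / (j : ℝ)
    have hk2 : (kn : ℝ) ^ (j + 1) ≤ (C * (n : ℝ) ^ p) ^ (j + 1) :=
      pow_le_pow_left₀ (Nat.cast_nonneg _) hk _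
    have expand : (C * (n : ℝ) ^ p) ^ (j + 1) = C ^ (j + 1) * (n : ℝ) ^ (p * (j + 1)) := by
      rw [mul_pow, ← Real.rpow_natCast ((n:ℝ) ^ p) (j+1), ← Real.rpow_mul (le_of_lt hnR)]
      push_cast
      ring_nf
    have hnj : ((n : ℝ) ^ j) = (n : ℝ) ^ ((j : ℝ)) := by
      rw [Real.rpow_natCast]
    have final : C ^ (j + 1) * (n : ℝ) ^ (p * (j + 1)) / (n : ℝ) ^ j
        = C ^ (j + 1) * (n : ℝ) ^ (-(1 : ℝ) / (j : ℝ)) := by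
      rw [hnj, mul_div_assoc, ← Real.rpow_sub hnR]
      have hexp : p * ((j:ℝ) + 1) - (j:ℝ) = -1 / (j:ℝ) := by
        rw [show p = ((j:ℝ)-1)/(j:ℝ) from rfl]
        field_simp
        ring
      rw [hexp]
    calc (kn : ℝ) ^ (j + 1) / (n : ℝ) ^ j
        ≤ (C * (n : ℝ) ^ p) ^ (j + 1) / (n : ℝ) ^ j := by
          apply div_le_div_of_nonneg_right hk2 (by positivity) |>.trans_eq rfl
      _ = C ^ (j + 1) * (n : ℝ) ^ (p * (j + 1)) / (n : ℝ) ^ j := by rw [expand]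
      _ = C ^ (j + 1) * (n : ℝ) ^ (-(1 : ℝ) / (j : ℝ)) := final
  · rw [zero_of_lt j n kn (by omega)]
    positivity


/-- **Expected number of `(j+1)`-fold-or-more bosonic birthdays, and its decay.**
Let `Y` be the number of days with multiplicity at least `j+1` for a uniformly random
multiset of size `k` from `n` days.  If `j+1 ≤ k` (with `n, k, j` positive) then
`E[Y] = n · C(n+k-j-2, k-j-1) / C(n+k-1, k)`.  Moreover, for fixed `j` and a constant
`C > 0`, if `k n ≤ C · n^((j-1)/j)`, then `E[Y]` is `O(n^(-1/j))`, and in particular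
tends to `0` as `n → ∞`. -/
theorem bosonic_birthday_overcrowding
    (j : ℕ) (hj : 0 < j) (C : ℝ) (hC : 0 < C) (k : ℕ → ℕ) :
    (∀ n k' : ℕ, 0 < n → 0 < k' → j + 1 ≤ k' →
      expectedOvercrowdedDays j n k'
        = (n : ℝ) * ((n + k' - j - 2).choose (k' - j - 1) : ℝ)
            / ((n + k' - 1).choose k' : ℝ)) ∧
    ((∀ n : ℕ, (k n : ℝ) ≤ C * (n : ℝ) ^ (((j : ℝ) - 1) / (j : ℝ))) →
      ((fun n : ℕ => expectedOvercrowdedDays j n (k n))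
          =O[atTop] fun n : ℕ => (n : ℝ) ^ (-(1 : ℝ) / (j : ℝ))) ∧
      Tendsto (fun n : ℕ => expectedOvercrowdedDays j n (k n)) atTop (nhds 0)) := by
  constructor
  · intro n k' hn _ hjk
    exact formula n k' j hn hjk
  · intro hk
    have hbound : ∀ᶠ n : ℕ in atTop, expectedOvercrowdedDays j n (k n)
        ≤ C ^ (j + 1) * (n : ℝ) ^ (-(1 : ℝ) / (j : ℝ)) := by
      filter_upwards [eventually_ge_atTop 1] with n hn
      exact EOD_bound j hj C hC n (k n) hn (hk n)
    constructor
    · apply Asymptotics.IsBigO.of_bound (C ^ (j + 1))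
      filter_upwards [hbound, eventually_ge_atTop 1] with n hb hn
      have h1 : (0:ℝ) ≤ (n : ℝ) ^ (-(1 : ℝ) / (j : ℝ)) :=
        Real.rpow_nonneg (Nat.cast_nonneg n) _
      rw [Real.norm_of_nonneg (EOD_nonneg j n (k n)), Real.norm_of_nonneg h1]
      exact hb
    · have hlim : Tendsto (fun n : ℕ => C ^ (j + 1) * (n : ℝ) ^ (-(1 : ℝ) / (j : ℝ)))
          atTop (nhds 0) := by
        have h0 : Tendsto (fun n : ℕ => ((n:ℝ)) ^ (-((1:ℝ) / (j : ℝ)))) atTop (nhds 0) :=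
          (tendsto_rpow_neg_atTop (by positivity)).comp tendsto_natCast_atTop_atTop
        have := h0.const_mul (C ^ (j + 1))
        simpa [neg_div] using this
      apply tendsto_of_tendsto_of_tendsto_of_le_of_le' tendsto_const_nhds hlim
      · exact Eventually.of_forall fun n => EOD_nonneg j n (k n)
      · exact hbound
end

section
/- Let n and k be positive integers with k ≤ n, and draw a uniformly random multiset of size k from n days. Then the probability that all k birthdays are distinct (i.e., every day has multiplicity at most 1) equals C(n, k) / C(n+k-1, k), which furthermore equals the product over a = 0, 1, ..., k-1 of (1 - a/n)/(1 + a/n). -/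
open Finset

lemma bosonic_count_card (n k : ℕ) :
    (Finset.univ.filter (fun s : Sym (Fin n) k =>
        ∀ d : Fin n, Multiset.count d (s : Multiset (Fin n)) ≤ 1)).card = n.choose k := by
  have : n.choose k = (Finset.powersetCard k (Finset.univ : Finset (Fin n))).card := by
    rw [Finset.card_powersetCard, Finset.card_univ, Fintype.card_fin]
  rw [this]
  refine Finset.card_bij (fun s hs => (⟨(s : Multiset (Fin n)),
    Multiset.nodup_iff_count_le_one.2 (by simpa using (Finset.mem_filter.1 hs).2)⟩ : Finset (Fin n)))
    ?_ ?_ ?_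
  · intro s hs
    simp [Finset.mem_powersetCard]
  · intro a ha b hb h
    exact Sym.coe_injective (congrArg Finset.val h)
  · intro t ht
    rw [Finset.mem_powersetCard] at ht
    refine ⟨⟨t.1, ht.2⟩, ?_, rfl⟩
    refine Finset.mem_filter.2 ⟨Finset.mem_univ _, ?_⟩
    intro d
    exact Multiset.nodup_iff_count_le_one.1 t.nodup d

lemma bosonic_asc_prod (n k : ℕ) : n.ascFactorial k = ∏ i ∈ range k, (n + i) := by
  induction k with
  | zero => rfl
  | succ k ih => rw [Nat.ascFactorial_succ, prod_range_succ, ih, mul_comm]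

lemma bosonic_ratio_eq (n k : ℕ) (hn : 0 < n) (hkn : k ≤ n) :
    (n.choose k : ℝ) / ((n + k - 1).choose k : ℝ)
      = ∏ a ∈ Finset.range k, ((1 - (a : ℝ) / (n : ℝ)) / (1 + (a : ℝ) / (n : ℝ))) := by
  have hn' : (n : ℝ) ≠ 0 := Nat.cast_ne_zero.2 hn.ne'
  have h1 : (k.factorial : ℝ) * (n.choose k : ℝ) = ∏ a ∈ range k, ((n : ℝ) - a) := by
    have := Nat.descFactorial_eq_factorial_mul_choose n k
    rw [Nat.descFactorial_eq_prod_range] at this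
    have := congrArg (Nat.cast : ℕ → ℝ) this.symm
    push_cast at this
    rw [this]
    refine Finset.prod_congr rfl fun a ha => ?_
    rw [Nat.cast_sub (le_trans (Finset.mem_range.1 ha).le hkn)]
  have h2 : (k.factorial : ℝ) * ((n + k - 1).choose k : ℝ) = ∏ a ∈ range k, ((n : ℝ) + a) := by
    have := Nat.ascFactorial_eq_factorial_mul_choose' n k
    rw [bosonic_asc_prod] at this
    have := congrArg (Nat.cast : ℕ → ℝ) this.symm
    push_cast at this
    rw [this]
  have hfac : (k.factorial : ℝ) ≠ 0 := Nat.cast_ne_zero.2 k.factorial_ne_zero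
  have step : ∀ a ∈ range k, (1 - (a : ℝ) / n) / (1 + (a : ℝ) / n)
      = ((n : ℝ) - a) / ((n : ℝ) + a) := by
    intro a ha
    have hnpos : (0:ℝ) < n := Nat.cast_pos.2 hn
    rw [div_eq_div_iff (by positivity) (by positivity)]
    field_simp
  rw [Finset.prod_congr rfl step, Finset.prod_div_distrib, ← h1, ← h2,
    mul_div_mul_left _ _ hfac]

/-- **Probability that all bosonic birthdays are distinct.**
For `k ≤ n`, the probability that a uniformly random multiset of size `k` drawn from
`n` days has all elements distinct (every day has multiplicity at most `1`) equals
`C(n,k) / C(n+k-1,k)`, which furthermore equals `∏_{a=0}^{k-1} (1 - a/n)/(1 + a/n)`. -/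
theorem bosonic_birthday_all_distinct_prob
    (n k : ℕ) (hn : 0 < n) (hk : 0 < k) (hkn : k ≤ n) :
    ((Finset.univ.filter (fun s : Sym (Fin n) k =>
          ∀ d : Fin n, Multiset.count d (s : Multiset (Fin n)) ≤ 1)).card : ℝ)
        / (Fintype.card (Sym (Fin n) k) : ℝ)
      = (n.choose k : ℝ) / ((n + k - 1).choose k : ℝ) ∧
    (n.choose k : ℝ) / ((n + k - 1).choose k : ℝ)
      = ∏ a ∈ Finset.range k, ((1 - (a : ℝ) / (n : ℝ)) / (1 + (a : ℝ) / (n : ℝ))) := by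
  constructor
  · rw [bosonic_count_card, Sym.card_sym_eq_choose, Fintype.card_fin]
  · exact bosonic_ratio_eq n k hn hkn
end

section
/- Let k : ℕ → ℕ satisfy k(n) ≤ n for all n and k(n) / n^(3/4) → 0 as n → ∞. Then the probability that a uniformly random multiset of size k(n) from n days has all distinct elements is asymptotic to exp(-k(n)²/n); that is, (C(n, k(n)) / C(n+k(n)-1, k(n))) · exp(k(n)²/n) → 1 as n → ∞. -/
open Filter Finset

/-- Taylor-type bound: `log((1-x)/(1+x)) = -2x + O(x³)` for `0 ≤ x ≤ 1/2`. -/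
private lemma log_ratio_bound {x : ℝ} (hx0 : 0 ≤ x) (hx : x ≤ 1 / 2) :
    |Real.log (1 - x) - Real.log (1 + x) + 2 * x| ≤ 4 * x ^ 3 := by
  have hx1 : |x| < 1 := by rw [abs_of_nonneg hx0]; linarith
  have h1 := Real.abs_log_sub_add_sum_range_le hx1 2
  have hx1' : |(-x)| < 1 := by rwa [abs_neg]
  have h2 := Real.abs_log_sub_add_sum_range_le hx1' 2
  simp only [Finset.sum_range_succ, Finset.sum_range_zero] at h1 h2
  rw [abs_of_nonneg hx0] at h1
  rw [abs_neg, abs_of_nonneg hx0] at h2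
  norm_num at h1 h2
  have hd : (0:ℝ) < 1 - x := by linarith
  have hb : x ^ 3 / (1 - x) ≤ 2 * x ^ 3 := by
    rw [div_le_iff₀ hd]
    nlinarith [pow_nonneg hx0 3]
  have h2' : |x ^ 2 / 2 - x + Real.log (1 + x)| ≤ x ^ 3 / (1 - x) := by
    convert h2 using 2 <;> ring_nf
  rw [abs_le] at h1 h2' ⊢
  constructor <;> nlinarith [h1.1, h1.2, h2'.1, h2'.2]

private lemma desc_prod (n K : ℕ) (hn : 1 ≤ n) :
    (n + K - 1).descFactorial K = ∏ j ∈ Finset.range K, (n + j) := by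
  rcases Nat.eq_zero_or_pos K with hK | hK
  · simp [hK]
  rw [Nat.descFactorial_eq_prod_range, ← Finset.prod_range_reflect (fun j => n + j) K]
  refine Finset.prod_congr rfl fun i hi => ?_
  simp only [Finset.mem_range] at hi
  omega

private lemma ratio_eq_prod {n K : ℕ} (hn : 1 ≤ n) (hk : K ≤ n) :
    ((n.choose K : ℝ) / ((n + K - 1).choose K : ℝ)) =
      ∏ j ∈ Finset.range K, (((n : ℝ) - j) / ((n : ℝ) + j)) := by
  have key : ((n.choose K : ℝ) / ((n + K - 1).choose K : ℝ))
      = (n.descFactorial K : ℝ) / ((n + K - 1).descFactorial K : ℝ) := by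
    rw [Nat.descFactorial_eq_factorial_mul_choose, Nat.descFactorial_eq_factorial_mul_choose]
    push_cast
    rw [mul_div_mul_left]
    exact_mod_cast K.factorial_ne_zero
  rw [key, Nat.descFactorial_eq_prod_range, desc_prod n K hn]
  rw [Nat.cast_prod, Nat.cast_prod, ← Finset.prod_div_distrib]
  refine Finset.prod_congr rfl fun j hj => ?_
  have hjn : j ≤ n := le_trans (le_of_lt (Finset.mem_range.1 hj)) hk
  rw [Nat.cast_sub hjn]
  push_cast
  ring

private lemma sum_range_cast (K : ℕ) :
    (∑ j ∈ Finset.range K, (j : ℝ)) * 2 = (K : ℝ) ^ 2 - K := by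
  induction K with
  | zero => simp
  | succ m ih => rw [Finset.sum_range_succ]; push_cast; nlinarith [ih]

/-- **Asymptotics of the probability of all-distinct bosonic birthdays.**
If `k n ≤ n` and `k n = o(n^(3/4))`, then the probability `C(n, k n)/C(n+k n-1, k n)`
that a uniformly random multiset of size `k n` from `n` days has all elements distinct
is asymptotic to `exp(-(k n)²/n)`. -/
theorem bosonic_birthday_all_distinct_asymptotic
    (k : ℕ → ℕ) (hkn : ∀ n : ℕ, k n ≤ n)
    (hko : Tendsto (fun n : ℕ => (k n : ℝ) / (n : ℝ) ^ ((3 : ℝ) / 4)) atTop (nhds 0)) :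
    Tendsto (fun n : ℕ =>
        ((n.choose (k n) : ℝ) / ((n + k n - 1).choose (k n) : ℝ))
          * Real.exp ((k n : ℝ) ^ 2 / (n : ℝ)))
      atTop (nhds 1) := by
  have hev : ∀ᶠ n : ℕ in atTop, 1 ≤ n ∧ (k n : ℝ) ≤ (n : ℝ) ^ ((3 : ℝ) / 4) / 4 := by
    have h1 : ∀ᶠ n : ℕ in atTop, (k n : ℝ) / (n : ℝ) ^ ((3 : ℝ) / 4) < 1 / 4 :=
      hko.eventually (gt_mem_nhds (by norm_num))
    filter_upwards [h1, eventually_ge_atTop 1] with n h1 h2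
    have hpos : (0 : ℝ) < (n : ℝ) ^ ((3 : ℝ) / 4) := by
      apply Real.rpow_pos_of_pos; exact_mod_cast h2
    refine ⟨h2, ?_⟩
    rw [div_lt_iff₀ hpos] at h1
    linarith
  set g : ℕ → ℝ := fun n =>
    Real.log (∏ j ∈ Finset.range (k n), (((n : ℝ) - j) / ((n : ℝ) + j)))
      + (k n : ℝ) ^ 2 / n with hgdef
  have hfacts : ∀ n : ℕ, 1 ≤ n → (k n : ℝ) ≤ (n : ℝ) ^ ((3 : ℝ) / 4) / 4 →
      (((n.choose (k n) : ℝ) / ((n + k n - 1).choose (k n) : ℝ))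
          * Real.exp ((k n : ℝ) ^ 2 / (n : ℝ)) = Real.exp (g n)) ∧
      |g n| ≤ 4 * ((k n : ℝ) ^ 4 / (n : ℝ) ^ 3) + (k n : ℝ) / n := by
    intro n hn1 hk4
    have hnR : (1 : ℝ) ≤ (n : ℝ) := by exact_mod_cast hn1
    have hnpos : (0 : ℝ) < n := by linarith
    have hnle : (n : ℝ) ^ ((3 : ℝ) / 4) ≤ (n : ℝ) := by
      calc (n : ℝ) ^ ((3 : ℝ) / 4) ≤ (n : ℝ) ^ (1 : ℝ) :=
            Real.rpow_le_rpow_of_exponent_le hnR (by norm_num)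
        _ = n := Real.rpow_one _
    have hk2 : (k n : ℝ) ≤ (n : ℝ) / 2 := by linarith
    have hterm_pos : ∀ j ∈ Finset.range (k n), 0 < ((n : ℝ) - j) / ((n : ℝ) + j) := by
      intro j hj
      have hjk : (j : ℝ) < (k n : ℝ) := by exact_mod_cast Finset.mem_range.1 hj
      have h1 : (0 : ℝ) < (n : ℝ) - j := by linarith
      positivity
    have hP : (0 : ℝ) < ∏ j ∈ Finset.range (k n), (((n : ℝ) - j) / ((n : ℝ) + j)) :=
      Finset.prod_pos hterm_pos
    refine ⟨by rw [ratio_eq_prod hn1 (hkn n), ← Real.exp_log hP, ← Real.exp_add], ?_⟩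
    have hlog : Real.log (∏ j ∈ Finset.range (k n), (((n : ℝ) - j) / ((n : ℝ) + j)))
        = ∑ j ∈ Finset.range (k n), Real.log (((n : ℝ) - j) / ((n : ℝ) + j)) :=
      Real.log_prod (fun j hj => (hterm_pos j hj).ne')
    have hbound : ∀ j ∈ Finset.range (k n),
        |Real.log (((n : ℝ) - j) / ((n : ℝ) + j)) + 2 * ((j : ℝ) / n)|
          ≤ 4 * ((k n : ℝ) / n) ^ 3 := by
      intro j hj
      have hjk : (j : ℝ) < (k n : ℝ) := by exact_mod_cast Finset.mem_range.1 hj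
      have hjn : (j : ℝ) < n := by linarith
      have hj0 : (0 : ℝ) ≤ (j : ℝ) := Nat.cast_nonneg j
      have hx0 : (0 : ℝ) ≤ (j : ℝ) / n := by positivity
      have hx : (j : ℝ) / n ≤ 1 / 2 := by rw [div_le_iff₀ hnpos]; linarith
      have e : ((n : ℝ) - j) / ((n : ℝ) + j) = (1 - (j : ℝ) / n) / (1 + (j : ℝ) / n) := by
        rw [div_eq_div_iff (by linarith) (by linarith)]
        field_simp
      have hlb := log_ratio_bound hx0 hx
      have hden1 : (0 : ℝ) < 1 - (j : ℝ) / n := by linarith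
      have hden2 : (0 : ℝ) < 1 + (j : ℝ) / n := by linarith
      rw [e, Real.log_div hden1.ne' hden2.ne']
      refine le_trans hlb ?_
      have h1 : ((j : ℝ) / n) ^ 3 ≤ ((k n : ℝ) / n) ^ 3 := by gcongr <;> linarith
      linarith
    have hsum2 : ∑ j ∈ Finset.range (k n), 2 * ((j : ℝ) / n)
        = ((k n : ℝ) ^ 2 - (k n : ℝ)) / n := by
      rw [← sum_range_cast (k n), Finset.sum_mul, Finset.sum_div]
      exact Finset.sum_congr rfl fun j _ => by ring
    have hgn : g n = (∑ j ∈ Finset.range (k n),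
        (Real.log (((n : ℝ) - j) / ((n : ℝ) + j)) + 2 * ((j : ℝ) / n))) + (k n : ℝ) / n := by
      simp only [hgdef]
      rw [hlog, Finset.sum_add_distrib, hsum2]
      field_simp
      ring
    calc |g n| ≤ |∑ j ∈ Finset.range (k n),
            (Real.log (((n : ℝ) - j) / ((n : ℝ) + j)) + 2 * ((j : ℝ) / n))|
            + |(k n : ℝ) / n| := by rw [hgn]; exact abs_add_le _ _
      _ ≤ (∑ j ∈ Finset.range (k n),
            |Real.log (((n : ℝ) - j) / ((n : ℝ) + j)) + 2 * ((j : ℝ) / n)|)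
            + (k n : ℝ) / n := by
          gcongr
          · exact Finset.abs_sum_le_sum_abs _ _
          · rw [abs_of_nonneg (by positivity)]
      _ ≤ (k n) • (4 * ((k n : ℝ) / n) ^ 3) + (k n : ℝ) / n := by
          gcongr
          have := Finset.sum_le_card_nsmul _ _ _ hbound
          rwa [Finset.card_range] at this
      _ = 4 * ((k n : ℝ) ^ 4 / (n : ℝ) ^ 3) + (k n : ℝ) / n := by
          rw [nsmul_eq_mul, div_pow]
          ring
  have habs : Tendsto (fun n => |g n|) atTop (nhds 0) := by
    refine squeeze_zero' (g := fun n => 4 * ((k n : ℝ) ^ 4 / (n : ℝ) ^ 3) + (k n : ℝ) / n)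
      (Eventually.of_forall fun n => abs_nonneg _) ?_ ?_
    · filter_upwards [hev] with n hn
      exact (hfacts n hn.1 hn.2).2
    · have hB1 : Tendsto (fun n : ℕ => 4 * ((k n : ℝ) ^ 4 / (n : ℝ) ^ 3)) atTop (nhds 0) := by
        have h4 : Tendsto (fun n : ℕ => ((k n : ℝ) / (n : ℝ) ^ ((3 : ℝ) / 4)) ^ 4)
            atTop (nhds 0) := by
          have := hko.pow 4
          simpa using this
        have heq : ∀ᶠ n : ℕ in atTop,
            ((k n : ℝ) / (n : ℝ) ^ ((3 : ℝ) / 4)) ^ 4 = (k n : ℝ) ^ 4 / (n : ℝ) ^ 3 := by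
          filter_upwards [eventually_ge_atTop 1] with n hn
          have hnR : (0 : ℝ) ≤ n := Nat.cast_nonneg n
          rw [div_pow, ← Real.rpow_natCast ((n : ℝ) ^ ((3 : ℝ) / 4)) 4, ← Real.rpow_mul hnR]
          norm_num
        have h5 := (h4.congr' heq).const_mul (4 : ℝ)
        simpa using h5
      have hB2 : Tendsto (fun n : ℕ => (k n : ℝ) / n) atTop (nhds 0) := by
        refine squeeze_zero' (Eventually.of_forall fun n => by positivity) ?_ hko
        filter_upwards [eventually_ge_atTop 1] with n hn
        have hnR : (1 : ℝ) ≤ n := by exact_mod_cast hn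
        have hnle : (n : ℝ) ^ ((3 : ℝ) / 4) ≤ (n : ℝ) := by
          calc (n : ℝ) ^ ((3 : ℝ) / 4) ≤ (n : ℝ) ^ (1 : ℝ) :=
                Real.rpow_le_rpow_of_exponent_le hnR (by norm_num)
            _ = n := Real.rpow_one _
        have hpos : (0 : ℝ) < (n : ℝ) ^ ((3 : ℝ) / 4) :=
          Real.rpow_pos_of_pos (by linarith) _
        gcongr <;> positivity
      simpa using hB1.add hB2
  have hg0 : Tendsto g atTop (nhds 0) := (tendsto_zero_iff_abs_tendsto_zero g).2 habs
  have hexp := (Real.continuous_exp.tendsto 0).comp hg0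
  rw [Real.exp_zero] at hexp
  refine hexp.congr' ?_
  filter_upwards [hev] with n hn
  simp only [Function.comp]
  exact ((hfacts n hn.1 hn.2).1).symm
end

section
/- Let k : ℕ → ℕ satisfy k(n) / √(n · ln 2) → 1 as n → ∞. Then the probability that a uniformly random multiset of size k(n) from n days contains a repeated element tends to 1/2 as n → ∞; equivalently, C(n, k(n)) / C(n+k(n)-1, k(n)) → 1/2. Hence with n modes, one needs k ∼ √(n ln 2) bosons in the uniform state to expect a repeated birthday with majority probability. -/
open Filter Finset Real




lemma card_nodup_sym (n k : ℕ) :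
    (Finset.univ.filter (fun s : Sym (Fin n) k =>
      (s : Multiset (Fin n)).Nodup)).card = n.choose k := by
  have : (Finset.univ.filter (fun s : Sym (Fin n) k =>
      (s : Multiset (Fin n)).Nodup)).card
      = (Finset.powersetCard k (Finset.univ : Finset (Fin n))).card := by
    refine Finset.card_bij' (fun s _ => (s : Multiset (Fin n)).toFinset)
      (fun t ht => ⟨t.val, (Finset.mem_powersetCard.mp ht).2⟩) ?_ ?_ ?_ ?_
    · intro s hs
      simp only [Finset.mem_filter] at hs
      rw [Finset.mem_powersetCard]
      refine ⟨Finset.subset_univ _, ?_⟩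
      rw [Multiset.toFinset_card_of_nodup hs.2]
      exact s.2
    · intro t ht
      exact Finset.mem_filter.mpr ⟨Finset.mem_univ _, t.nodup⟩
    · intro s hs
      simp only [Finset.mem_filter] at hs
      apply Sym.coe_injective
      simp [Multiset.toFinset_val, Multiset.Nodup.dedup hs.2]
    · intro t ht
      exact Finset.val_toFinset t
  rw [this, Finset.card_powersetCard, Finset.card_univ, Fintype.card_fin]



lemma descFact_add (n k : ℕ) (hn : 1 ≤ n) :
    ((n + k - 1).descFactorial k : ℝ) = ∏ i ∈ range k, ((n : ℝ) + i) := by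
  rw [Nat.descFactorial_eq_prod_range, Nat.cast_prod]
  rw [← Finset.prod_range_reflect (fun i => (n : ℝ) + i) k]
  refine Finset.prod_congr rfl fun j hj => ?_
  rw [Finset.mem_range] at hj
  have : n + k - 1 - j = n + (k - 1 - j) := by omega
  rw [this]
  push_cast
  rfl

lemma descFact_sub (n k : ℕ) (hkn : k ≤ n) :
    ((n).descFactorial k : ℝ) = ∏ i ∈ range k, ((n : ℝ) - i) := by
  rw [Nat.descFactorial_eq_prod_range, Nat.cast_prod]
  refine Finset.prod_congr rfl fun j hj => ?_
  rw [Finset.mem_range] at hj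
  rw [Nat.cast_sub (by omega)]

lemma choose_ratio_eq_prod (n k : ℕ) (hn : 1 ≤ n) (hkn : k ≤ n) :
    (n.choose k : ℝ) / ((n + k - 1).choose k : ℝ)
      = ∏ i ∈ range k, (((n : ℝ) - i) / ((n : ℝ) + i)) := by
  have hfac : ((k.factorial) : ℝ) ≠ 0 := by positivity
  have h : (n.choose k : ℝ) / ((n + k - 1).choose k : ℝ)
      = ((k.factorial) * n.choose k : ℝ) / ((k.factorial) * (n + k - 1).choose k : ℝ) := by
    rw [mul_div_mul_left _ _ hfac]
  rw [h, ← Nat.cast_mul, ← Nat.cast_mul, ← Nat.descFactorial_eq_factorial_mul_choose,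
    ← Nat.descFactorial_eq_factorial_mul_choose, descFact_add n k hn, descFact_sub n k hkn,
    Finset.prod_div_distrib]



lemma sum_id_real (m : ℕ) : ∑ i ∈ range m, (i : ℝ) = m * (m - 1) / 2 := by
  induction m with
  | zero => simp
  | succ p ih => rw [Finset.sum_range_succ, ih]; push_cast; ring

lemma log_term_bounds {c : ℝ} (i : ℝ) (hc : 0 < c) (hi : 0 ≤ i) (h : 2 * i ≤ c) :
    -2*(i/c) - 4*(i/c)^2 ≤ Real.log ((c - i)/(c + i)) ∧
      Real.log ((c - i)/(c + i)) ≤ -2*(i/c) + 2*(i/c)^2 := by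
  set t := i / c with ht
  have ht0 : 0 ≤ t := by positivity
  have ht2 : t ≤ 1/2 := by rw [ht, div_le_iff₀ hc]; linarith
  have h1t : 0 < 1 - t := by linarith
  have h1t' : 0 < 1 + t := by linarith
  have hrw : (c - i)/(c + i) = (1 - t)/(1 + t) := by
    rw [ht]; field_simp
  rw [hrw]
  constructor
  · have hpos : 0 < (1 + t)/(1 - t) := by positivity
    have hlog := Real.log_le_sub_one_of_pos hpos
    have hneg : Real.log ((1 - t)/(1 + t)) = - Real.log ((1 + t)/(1 - t)) := by
      rw [← Real.log_inv, inv_div]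
    rw [hneg]
    have hb : (1 + t)/(1 - t) - 1 ≤ 2*t + 4*t^2 := by
      rw [div_sub_one (ne_of_gt h1t), div_le_iff₀ h1t]
      nlinarith
    linarith
  · have hpos : 0 < (1 - t)/(1 + t) := by positivity
    have hlog := Real.log_le_sub_one_of_pos hpos
    have hb : (1 - t)/(1 + t) - 1 ≤ -2*t + 2*t^2 := by
      rw [div_sub_one (ne_of_gt h1t'), div_le_iff₀ h1t']
      nlinarith
    linarith

lemma sum_sq_bound (K : ℕ) {c : ℝ} (hc : 0 < c) :
    ∑ i ∈ range K, ((i : ℝ)/c)^2 ≤ (K : ℝ)^3 / c^2 := by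
  have h1 : ∑ i ∈ range K, ((i : ℝ)/c)^2 ≤ ∑ i ∈ range K, ((K : ℝ)/c)^2 := by
    refine Finset.sum_le_sum fun i hi => ?_
    have : (i : ℝ) ≤ K := Nat.cast_le.mpr (Finset.mem_range.mp hi).le
    gcongr
  calc ∑ i ∈ range K, ((i : ℝ)/c)^2 ≤ ∑ i ∈ range K, ((K : ℝ)/c)^2 := h1
    _ = (K : ℝ) * ((K : ℝ)/c)^2 := by
        rw [Finset.sum_const, Finset.card_range, nsmul_eq_mul]
    _ = (K : ℝ)^3 / c^2 := by field_simp

lemma prod_ratio_tendsto (k : ℕ → ℕ)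
    (hk : Tendsto (fun n : ℕ => (k n : ℝ) / Real.sqrt ((n : ℝ) * Real.log 2))
      atTop (nhds 1)) :
    Tendsto (fun n : ℕ => ∏ i ∈ range (k n), (((n : ℝ) - i) / ((n : ℝ) + i)))
      atTop (nhds (1/2)) ∧ ∀ᶠ n : ℕ in atTop, 2 * (k n) ≤ n := by
  have hl : (0:ℝ) < Real.log 2 := Real.log_pos one_lt_two
  -- k^2 / n → log 2
  have h1 : Tendsto (fun n : ℕ => (k n : ℝ)^2 / n) atTop (nhds (Real.log 2)) := by
    have := (hk.mul hk).mul_const (Real.log 2)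
    rw [one_mul, one_mul] at this
    refine this.congr' ?_
    filter_upwards [eventually_ge_atTop 1] with n hn
    have hn0 : (0:ℝ) < n := by exact_mod_cast hn
    have hs : Real.sqrt ((n : ℝ) * Real.log 2) * Real.sqrt ((n : ℝ) * Real.log 2)
        = (n : ℝ) * Real.log 2 := Real.mul_self_sqrt (by positivity)
    have hsne : Real.sqrt ((n : ℝ) * Real.log 2) ≠ 0 := by
      refine ne_of_gt (Real.sqrt_pos.mpr (by positivity))
    field_simp
    rw [Real.sq_sqrt (by positivity)]
    ring
  -- k / n → 0
  have h2 : Tendsto (fun n : ℕ => (k n : ℝ) / n) atTop (nhds 0) := by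
    have hln : Tendsto (fun n : ℕ => Real.log 2 / n) atTop (nhds 0) :=
      tendsto_const_div_atTop_nhds_zero_nat _
    have := hk.mul hln.sqrt
    rw [Real.sqrt_zero, one_mul] at this
    refine this.congr' ?_
    filter_upwards [eventually_ge_atTop 1] with n hn
    have hn0 : (0:ℝ) < n := by exact_mod_cast hn
    have hsn : Real.sqrt n ≠ 0 := ne_of_gt (Real.sqrt_pos.mpr hn0)
    rw [Real.sqrt_mul (le_of_lt hn0), Real.sqrt_div hl.le]
    rw [div_mul_div_comm, div_eq_div_iff (by positivity) (ne_of_gt hn0)]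
    rw [show Real.sqrt ↑n * Real.sqrt (Real.log 2) * Real.sqrt ↑n
        = Real.sqrt ↑n * Real.sqrt ↑n * Real.sqrt (Real.log 2) by ring,
      Real.mul_self_sqrt hn0.le]
    ring
  -- k^3 / n^2 → 0
  have h3 : Tendsto (fun n : ℕ => (k n : ℝ)^3 / (n:ℝ)^2) atTop (nhds 0) := by
    have := h1.mul h2
    rw [mul_zero] at this
    refine this.congr' ?_
    filter_upwards [eventually_ge_atTop 1] with n hn
    have hn0 : (0:ℝ) < n := by exact_mod_cast hn
    field_simp
  -- eventually 2 k ≤ n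
  have hev : ∀ᶠ n : ℕ in atTop, 2 * (k n) ≤ n := by
    have hsm := h2.eventually_lt_const (show (0:ℝ) < 1/2 by norm_num)
    filter_upwards [hsm, eventually_ge_atTop 1] with n hkn hn
    have hn0 : (0:ℝ) < n := by exact_mod_cast hn
    have : (k n : ℝ) < n / 2 := by rw [div_lt_iff₀ hn0] at hkn; linarith
    have : 2 * (k n : ℝ) ≤ n := by linarith
    exact_mod_cast this
  -- the log sum
  set L : ℕ → ℝ := fun n => ∑ i ∈ range (k n), Real.log (((n : ℝ) - i) / ((n : ℝ) + i))
    with hL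
  have hLlo : ∀ᶠ n : ℕ in atTop,
      -((k n:ℝ)^2/n) + (k n:ℝ)/n + (-4) * ((k n:ℝ)^3/(n:ℝ)^2) ≤ L n := by
    filter_upwards [hev, eventually_ge_atTop 1] with n h2k hn
    have hn0 : (0:ℝ) < n := by exact_mod_cast hn
    have hterm : ∀ i ∈ range (k n),
        -2*((i:ℝ)/n) - 4*((i:ℝ)/n)^2 ≤ Real.log (((n : ℝ) - i) / ((n : ℝ) + i)) := by
      intro i hi
      have hik : i < k n := Finset.mem_range.mp hi
      have : 2 * (i:ℝ) ≤ n := by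
        have : 2 * i ≤ n := by omega
        exact_mod_cast this
      exact (log_term_bounds (i:ℝ) hn0 (by positivity) this).1
    have hsum := Finset.sum_le_sum hterm
    have hsplit : ∑ i ∈ range (k n), (-2*((i:ℝ)/n) - 4*((i:ℝ)/n)^2)
        = -2 * ((∑ i ∈ range (k n), (i:ℝ))/n) - 4 * ∑ i ∈ range (k n), ((i:ℝ)/n)^2 := by
      rw [Finset.sum_sub_distrib, ← Finset.mul_sum, ← Finset.mul_sum, Finset.sum_div]
    have hS2 := sum_sq_bound (k n) hn0
    have hSid := sum_id_real (k n)
    have hcalc : -((k n:ℝ)^2/n) + (k n:ℝ)/n + (-4) * ((k n:ℝ)^3/(n:ℝ)^2)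
        ≤ ∑ i ∈ range (k n), (-2*((i:ℝ)/n) - 4*((i:ℝ)/n)^2) := by
      rw [hsplit, hSid]
      have : -2 * (((k n:ℝ) * ((k n:ℝ) - 1) / 2)/n) = -((k n:ℝ)^2/n) + (k n:ℝ)/n := by
        field_simp; ring
      rw [this]
      nlinarith [hS2]
    linarith
  have hLhi : ∀ᶠ n : ℕ in atTop,
      L n ≤ -((k n:ℝ)^2/n) + (k n:ℝ)/n + 2 * ((k n:ℝ)^3/(n:ℝ)^2) := by
    filter_upwards [hev, eventually_ge_atTop 1] with n h2k hn
    have hn0 : (0:ℝ) < n := by exact_mod_cast hn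
    have hterm : ∀ i ∈ range (k n),
        Real.log (((n : ℝ) - i) / ((n : ℝ) + i)) ≤ -2*((i:ℝ)/n) + 2*((i:ℝ)/n)^2 := by
      intro i hi
      have hik : i < k n := Finset.mem_range.mp hi
      have : 2 * (i:ℝ) ≤ n := by
        have : 2 * i ≤ n := by omega
        exact_mod_cast this
      exact (log_term_bounds (i:ℝ) hn0 (by positivity) this).2
    have hsum := Finset.sum_le_sum hterm
    have hsplit : ∑ i ∈ range (k n), (-2*((i:ℝ)/n) + 2*((i:ℝ)/n)^2)
        = -2 * ((∑ i ∈ range (k n), (i:ℝ))/n) + 2 * ∑ i ∈ range (k n), ((i:ℝ)/n)^2 := by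
      rw [Finset.sum_add_distrib, ← Finset.mul_sum, ← Finset.mul_sum, Finset.sum_div]
    have hS2 := sum_sq_bound (k n) hn0
    have hSid := sum_id_real (k n)
    have hcalc : ∑ i ∈ range (k n), (-2*((i:ℝ)/n) + 2*((i:ℝ)/n)^2)
        ≤ -((k n:ℝ)^2/n) + (k n:ℝ)/n + 2 * ((k n:ℝ)^3/(n:ℝ)^2) := by
      rw [hsplit, hSid]
      have : -2 * (((k n:ℝ) * ((k n:ℝ) - 1) / 2)/n) = -((k n:ℝ)^2/n) + (k n:ℝ)/n := by
        field_simp; ring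
      rw [this]
      nlinarith [hS2]
    linarith
  have hlo : Tendsto (fun n : ℕ => -((k n:ℝ)^2/n) + (k n:ℝ)/n + (-4) * ((k n:ℝ)^3/(n:ℝ)^2))
      atTop (nhds (-Real.log 2)) := by
    have := (h1.neg.add h2).add (h3.const_mul (-4))
    simpa using this
  have hhi : Tendsto (fun n : ℕ => -((k n:ℝ)^2/n) + (k n:ℝ)/n + 2 * ((k n:ℝ)^3/(n:ℝ)^2))
      atTop (nhds (-Real.log 2)) := by
    have := (h1.neg.add h2).add (h3.const_mul 2)
    simpa using this
  have hLt : Tendsto L atTop (nhds (-Real.log 2)) :=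
    tendsto_of_tendsto_of_tendsto_of_le_of_le' hlo hhi hLlo hLhi
  refine ⟨?_, hev⟩
  have hexp : Tendsto (fun n => Real.exp (L n)) atTop (nhds (Real.exp (-Real.log 2))) :=
    (Real.continuous_exp.tendsto _).comp hLt
  rw [Real.exp_neg, Real.exp_log two_pos] at hexp
  have : (2:ℝ)⁻¹ = 1/2 := by norm_num
  rw [this] at hexp
  refine Tendsto.congr' ?_ hexp
  filter_upwards [hev, eventually_ge_atTop 1] with n h2k hn
  have hn0 : (0:ℝ) < n := by exact_mod_cast hn
  show Real.exp (∑ i ∈ range (k n), Real.log (((n:ℝ) - i)/((n:ℝ) + i)))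
      = ∏ i ∈ range (k n), (((n:ℝ) - i)/((n:ℝ) + i))
  rw [Real.exp_sum]
  refine Finset.prod_congr rfl fun i hi => ?_
  have hik : i < k n := Finset.mem_range.mp hi
  have hub : (i:ℝ) < n := by
    have : i < n := by omega
    exact_mod_cast this
  have hi0 : (0:ℝ) ≤ i := Nat.cast_nonneg i
  exact Real.exp_log (div_pos (by linarith) (by linarith))


/-- **The bosonic birthday paradox.**
With `n` modes, one needs `k ∼ √(n ln 2)` bosons in the uniform state to expect a
repeated birthday with majority probability: if `k n / √(n ln 2) → 1`, then the
probability that a uniformly random multiset of size `k n` from `n` days contains a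
repeated element tends to `1/2`; equivalently, the probability
`C(n, k n)/C(n+k n-1, k n)` that all elements are distinct tends to `1/2`. -/
theorem bosonic_birthday_paradox
    (k : ℕ → ℕ)
    (hk : Tendsto (fun n : ℕ => (k n : ℝ) / Real.sqrt ((n : ℝ) * Real.log 2))
      atTop (nhds 1)) :
    Tendsto (fun n : ℕ =>
        ((Finset.univ.filter (fun s : Sym (Fin n) (k n) =>
            ∃ d : Fin n, 2 ≤ Multiset.count d (s : Multiset (Fin n)))).card : ℝ)
          / (Fintype.card (Sym (Fin n) (k n)) : ℝ))
      atTop (nhds (1 / 2)) ∧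
    Tendsto (fun n : ℕ => (n.choose (k n) : ℝ) / ((n + k n - 1).choose (k n) : ℝ))
      atTop (nhds (1 / 2)) := by
  obtain ⟨hprod, hev⟩ := prod_ratio_tendsto k hk
  have hratio : Tendsto (fun n : ℕ =>
      (n.choose (k n) : ℝ) / ((n + k n - 1).choose (k n) : ℝ)) atTop (nhds (1/2)) := by
    refine Tendsto.congr' ?_ hprod
    filter_upwards [hev, eventually_ge_atTop 1] with n h2k hn
    exact (choose_ratio_eq_prod n (k n) hn (by omega)).symm
  refine ⟨?_, hratio⟩
  have h1 : Tendsto (fun n : ℕ =>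
      1 - (n.choose (k n) : ℝ) / ((n + k n - 1).choose (k n) : ℝ)) atTop (nhds (1/2)) := by
    have := (tendsto_const_nhds (x := (1:ℝ)) (f := atTop)).sub hratio
    norm_num at this
    exact this
  refine Tendsto.congr' ?_ h1
  filter_upwards [hev, eventually_ge_atTop 1] with n h2k hn
  have hcard : Fintype.card (Sym (Fin n) (k n)) = (n + k n - 1).choose (k n) := by
    rw [Sym.card_sym_eq_choose, Fintype.card_fin]
  have hfilter : (Finset.univ.filter (fun s : Sym (Fin n) (k n) =>
      ¬ ∃ d : Fin n, 2 ≤ Multiset.count d (s : Multiset (Fin n)))).card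
      = n.choose (k n) := by
    rw [← card_nodup_sym n (k n)]
    congr 1
    apply Finset.filter_congr
    intro s _
    rw [Multiset.nodup_iff_count_le_one]
    push_neg
    constructor
    · intro h a; have := h a; omega
    · intro h a; have := h a; omega
  have hadd := Finset.card_filter_add_card_filter_not
    (s := (Finset.univ : Finset (Sym (Fin n) (k n))))
    (p := fun s : Sym (Fin n) (k n) =>
      ∃ d : Fin n, 2 ≤ Multiset.count d (s : Multiset (Fin n)))
  rw [hfilter, Finset.card_univ, hcard] at hadd
  have hpos : 0 < (n + k n - 1).choose (k n) := Nat.choose_pos (by omega)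
  have hle : n.choose (k n) ≤ (n + k n - 1).choose (k n) := by omega
  have hfc : ((Finset.univ.filter (fun s : Sym (Fin n) (k n) =>
      ∃ d : Fin n, 2 ≤ Multiset.count d (s : Multiset (Fin n)))).card : ℝ)
      = ((n + k n - 1).choose (k n) : ℝ) - (n.choose (k n) : ℝ) := by
    have : (Finset.univ.filter (fun s : Sym (Fin n) (k n) =>
        ∃ d : Fin n, 2 ≤ Multiset.count d (s : Multiset (Fin n)))).card
        = (n + k n - 1).choose (k n) - n.choose (k n) := by omega
    rw [this, Nat.cast_sub hle]
  have hden : ((n + k n - 1).choose (k n) : ℝ) ≠ 0 := by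
    exact_mod_cast Nat.pos_iff_ne_zero.mp hpos
  rw [eq_comm]
  rw [hfc, hcard, sub_div, div_self hden]
end

section
/- Let n and k be positive integers, let μ be the uniform probability measure on the standard simplex Δ_{n-1} = { p : Fin n → ℝ | p i ≥ 0 for all i, ∑ p i = 1 } (normalized (n-1)-dimensional Lebesgue measure on the simplex), and let m : Fin n → ℕ satisfy ∑_i m(i) = k. Then the multinomial probability of the outcome-count vector m, averaged over p ∼ μ, equals 1 / C(n+k-1, k); that is, (k! / ∏_i m(i)!) · ∫_{Δ_{n-1}} ∏_i p(i)^{m(i)} dμ(p) = 1 / C(n+k-1, k). In other words, if k i.i.d. birthdays are drawn from a common distribution p which is itself uniformly random in the simplex of distributions on n days, then the resulting multiset of birthdays is uniformly distributed over all C(n+k-1,k) multisets of size k. -/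
open MeasureTheory Set NNReal ENNReal

-- 1-dim beta integral, nat exponents
lemma beta_nat (a b : ℕ) :
    ∫ t in (0:ℝ)..1, t ^ a * (1 - t) ^ b
      = (a.factorial * b.factorial : ℝ) / (a + b + 1).factorial := by
  induction b generalizing a with
  | zero =>
    simp [integral_pow]
    rw [Nat.factorial_succ]
    push_cast
    field_simp
  | succ b ih =>
    have key : ∀ t : ℝ, t ^ a * (1 - t) ^ (b+1)
        = t ^ a * (1 - t) ^ b - t ^ (a+1) * (1 - t) ^ b := by
      intro t; ring
    rw [intervalIntegral.integral_congr (fun t _ => key t)]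
    have i1 : IntervalIntegrable (fun t : ℝ => t ^ a * (1 - t) ^ b) volume 0 1 :=
      (Continuous.intervalIntegrable (by continuity) _ _)
    have i2 : IntervalIntegrable (fun t : ℝ => t ^ (a+1) * (1 - t) ^ b) volume 0 1 :=
      (Continuous.intervalIntegrable (by continuity) _ _)
    rw [intervalIntegral.integral_sub i1 i2, ih a, ih (a+1)]
    have h1 : ((a + b + 1 + 1).factorial : ℝ) ≠ 0 := Nat.cast_ne_zero.2 (Nat.factorial_ne_zero _)
    have h2 : ((a + b + 1).factorial : ℝ) ≠ 0 := Nat.cast_ne_zero.2 (Nat.factorial_ne_zero _)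
    have e1 : (a + 1) + b + 1 = a + b + 1 + 1 := by ring
    have e2 : a + (b+1) + 1 = a + b + 1 + 1 := by ring
    rw [e1, e2]
    rw [Nat.factorial_succ (a+b+1), Nat.factorial_succ a, Nat.factorial_succ b]
    push_cast
    field_simp
    ring

lemma beta_scaled (a b : ℕ) {c : ℝ} (hc : 0 ≤ c) :
    ∫ t in (0:ℝ)..c, t ^ a * (c - t) ^ b
      = c ^ (a + b + 1) * ((a.factorial * b.factorial : ℝ) / (a + b + 1).factorial) := by
  have := intervalIntegral.smul_integral_comp_mul_left
    (a := (0:ℝ)) (b := 1) (f := fun t : ℝ => t ^ a * (c - t) ^ b) (c := c)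
  simp only [mul_zero, mul_one] at this
  rw [← this]
  have key : ∀ x : ℝ, (c * x) ^ a * (c - c * x) ^ b = c ^ (a+b) * (x ^ a * (1 - x) ^ b) := by
    intro x
    have : c - c * x = c * (1 - x) := by ring
    rw [this, mul_pow, mul_pow]; ring
  rw [intervalIntegral.integral_congr (fun t _ => key t), intervalIntegral.integral_const_mul,
    beta_nat]
  simp only [smul_eq_mul]
  ring

/-- The corner simplex in `ℝ^d`. -/
def cornerSet (d : ℕ) : Set (Fin d → ℝ) := {x | (∀ i, 0 ≤ x i) ∧ ∑ i, x i ≤ 1}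

lemma cornerSet_isClosed (d : ℕ) : IsClosed (cornerSet d) := by
  have h1 : IsClosed {x : Fin d → ℝ | ∀ i, 0 ≤ x i} := by
    have : {x : Fin d → ℝ | ∀ i, 0 ≤ x i} = ⋂ i, {x | 0 ≤ x i} := by
      ext x; simp
    rw [this]
    exact isClosed_iInter fun i => isClosed_le continuous_const (continuous_apply i)
  have h2 : IsClosed {x : Fin d → ℝ | ∑ i, x i ≤ 1} :=
    isClosed_le (by continuity) continuous_const
  exact h1.inter h2

lemma cornerSet_isCompact (d : ℕ) : IsCompact (cornerSet d) := by
  refine IsCompact.of_isClosed_subset (isCompact_Icc (a := (0 : Fin d → ℝ)) (b := 1))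
    (cornerSet_isClosed d) ?_
  rintro x ⟨hx0, hx1⟩
  refine ⟨fun i => hx0 i, fun i => ?_⟩
  calc x i ≤ ∑ j, x j := Finset.single_le_sum (fun j _ => hx0 j) (Finset.mem_univ i)
    _ ≤ 1 := hx1

/-- Dirichlet integrand (with indicator) on the corner simplex. -/
noncomputable def dirFn (d : ℕ) (m : Fin d → ℕ) (q : ℕ) : (Fin d → ℝ) → ℝ :=
  (cornerSet d).indicator (fun x => (∏ i, x i ^ m i) * (1 - ∑ i, x i) ^ q)

lemma dirFn_integrable (d : ℕ) (m : Fin d → ℕ) (q : ℕ) :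
    Integrable (dirFn d m q) := by
  rw [dirFn, integrable_indicator_iff (cornerSet_isClosed d).measurableSet]
  exact (Continuous.continuousOn (by continuity)).integrableOn_compact (cornerSet_isCompact d)

lemma snoc_mem_corner_iff {d : ℕ} (z : Fin d → ℝ) (t : ℝ) :
    Fin.snoc z t ∈ cornerSet (d+1) ↔ (∀ i, 0 ≤ z i) ∧ t ∈ Set.Icc 0 (1 - ∑ i, z i) := by
  have hsum : ∑ i, (Fin.snoc z t : Fin (d+1) → ℝ) i = (∑ i, z i) + t := by
    rw [Fin.sum_univ_castSucc]
    simp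
  constructor
  · rintro ⟨h0, h1⟩
    rw [hsum] at h1
    refine ⟨fun i => by simpa using h0 i.castSucc, by simpa using h0 (Fin.last d), by linarith⟩
  · rintro ⟨hz, ht0, ht1⟩
    refine ⟨fun i => ?_, by rw [hsum]; linarith⟩
    refine Fin.lastCases ?_ ?_ i
    · simpa using ht0
    · intro j; simpa using hz j

lemma prod_snoc_pow {d : ℕ} (m : Fin (d+1) → ℕ) (z : Fin d → ℝ) (t : ℝ) :
    ∏ i, (Fin.snoc z t : Fin (d+1) → ℝ) i ^ m i
      = (∏ i, z i ^ Fin.init m i) * t ^ m (Fin.last d) := by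
  rw [Fin.prod_univ_castSucc]
  simp [Fin.init]

lemma dirFn_snoc_integral (d : ℕ) (m : Fin (d+1) → ℕ) (q : ℕ) (z : Fin d → ℝ) :
    ∫ t : ℝ, dirFn (d+1) m q (Fin.snoc z t)
      = (((m (Fin.last d)).factorial * q.factorial : ℝ) / ((m (Fin.last d)) + q + 1).factorial)
        * dirFn d (Fin.init m) ((m (Fin.last d)) + q + 1) z := by
  set a := m (Fin.last d) with ha
  by_cases hz : ∀ i, 0 ≤ z i
  · set R := 1 - ∑ i, z i with hR
    have hpt : (fun t : ℝ => dirFn (d+1) m q (Fin.snoc z t))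
        = Set.indicator (Set.Icc 0 R)
            (fun t => (∏ i, z i ^ Fin.init m i) * (t ^ a * (R - t) ^ q)) := by
      funext t
      rw [dirFn]
      by_cases ht : t ∈ Set.Icc 0 R
      · rw [Set.indicator_of_mem ht,
          Set.indicator_of_mem ((snoc_mem_corner_iff z t).2 ⟨hz, ht⟩)]
        rw [prod_snoc_pow]
        have hsum : ∑ i, (Fin.snoc z t : Fin (d+1) → ℝ) i = (∑ i, z i) + t := by
          rw [Fin.sum_univ_castSucc]; simp
        rw [hsum]
        have : 1 - ((∑ i, z i) + t) = R - t := by rw [hR]; ring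
        rw [this]; ring
      · rw [Set.indicator_of_notMem ht, Set.indicator_of_notMem]
        intro hmem
        exact ht ((snoc_mem_corner_iff z t).1 hmem).2
    rw [hpt, integral_indicator measurableSet_Icc, integral_Icc_eq_integral_Ioc]
    by_cases hR0 : 0 ≤ R
    · rw [← intervalIntegral.integral_of_le hR0, intervalIntegral.integral_const_mul,
        beta_scaled a q hR0, dirFn, Set.indicator_of_mem (show z ∈ cornerSet d from ⟨hz, by rw [hR] at hR0; linarith⟩)]
      ring
    · rw [Set.Ioc_eq_empty (by intro h; exact hR0 (le_of_lt h)), dirFn,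
        Set.indicator_of_notMem (show z ∉ cornerSet d by rintro ⟨-, hs⟩; exact hR0 (by rw [hR]; linarith))]
      simp
  · have hpt : (fun t : ℝ => dirFn (d+1) m q (Fin.snoc z t)) = fun _ => 0 := by
      funext t
      rw [dirFn, Set.indicator_of_notMem]
      intro hmem
      exact hz ((snoc_mem_corner_iff z t).1 hmem).1
    rw [hpt, dirFn, Set.indicator_of_notMem (fun hmem => hz hmem.1)]
    simp

lemma dirFn_integral (d : ℕ) (m : Fin d → ℕ) (q : ℕ) :
    ∫ x, dirFn d m q x
      = ((∏ i, ((m i).factorial : ℝ)) * q.factorial) / ((∑ i, m i) + q + d).factorial := by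
  induction d generalizing q with
  | zero =>
    have h1 : dirFn 0 m q = fun _ => 1 := by
      funext x
      rw [dirFn, Set.indicator_of_mem (show x ∈ cornerSet 0 from ⟨fun i => i.elim0, by simp⟩)]
      simp
    rw [h1]
    simp only [integral_const, smul_eq_mul, mul_one]
    rw [MeasureTheory.volume_pi, measureReal_def, MeasureTheory.Measure.pi_empty_univ]
    rw [ENNReal.toReal_one, Finset.univ_eq_empty, Finset.prod_empty, Finset.sum_empty]
    have hq : (0 + q + 0) = q := by ring
    rw [one_mul, hq]
    exact (div_self (show ((q.factorial:ℝ)) ≠ 0 from Nat.cast_ne_zero.2 (Nat.factorial_ne_zero _))).symm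
  | succ d ih =>
    -- Fubini via piFinSuccAbove at the last coordinate
    have hmp := MeasureTheory.volume_preserving_piFinSuccAbove (fun _ : Fin (d+1) => ℝ) (Fin.last d)
    set e := MeasurableEquiv.piFinSuccAbove (fun _ : Fin (d+1) => ℝ) (Fin.last d) with he
    have step1 : ∫ x, dirFn (d+1) m q x
        = ∫ y : ℝ × (Fin d → ℝ), dirFn (d+1) m q (e.symm y) ∂(volume.prod volume) := by
      exact ((hmp.symm e).integral_comp e.symm.measurableEmbedding _).symm
    have hint : Integrable (fun y : ℝ × (Fin d → ℝ) => dirFn (d+1) m q (e.symm y))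
        (volume.prod volume) :=
      (((hmp.symm e)).integrable_comp_emb e.symm.measurableEmbedding).2 (dirFn_integrable (d+1) m q)
    have step2 : ∫ y : ℝ × (Fin d → ℝ), dirFn (d+1) m q (e.symm y) ∂(volume.prod volume)
        = ∫ z : Fin d → ℝ, ∫ t : ℝ, dirFn (d+1) m q (e.symm (t, z)) := by
      exact MeasureTheory.integral_prod_symm _ hint
    have hsymm : ∀ (t : ℝ) (z : Fin d → ℝ), e.symm (t, z) = Fin.snoc z t := by
      intro t z
      show (Fin.insertNthEquiv (fun _ => ℝ) (Fin.last d)) (t, z) = Fin.snoc z t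
      simp [Fin.insertNthEquiv, Fin.insertNth_last]
    rw [step1, step2]
    simp_rw [hsymm, dirFn_snoc_integral d m q]
    rw [MeasureTheory.integral_const_mul, ih (Fin.init m) (m (Fin.last d) + q + 1)]
    have hsum : (∑ i, Fin.init m i) + (m (Fin.last d) + q + 1) + d = (∑ i, m i) + q + (d+1) := by
      rw [Fin.sum_univ_castSucc (f := m)]
      simp [Fin.init]
      ring
    have hprod : (∏ i, ((m i).factorial : ℝ))
        = (∏ i, ((Fin.init m i).factorial : ℝ)) * ((m (Fin.last d)).factorial : ℝ) := by
      rw [Fin.prod_univ_castSucc (f := fun i => ((m i).factorial : ℝ))]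
      simp [Fin.init]
    rw [hsum, hprod]
    have h1 : ((m (Fin.last d) + q + 1).factorial : ℝ) ≠ 0 := Nat.cast_ne_zero.2 (Nat.factorial_ne_zero _)
    have h2 : (((∑ i, m i) + q + (d+1)).factorial : ℝ) ≠ 0 := Nat.cast_ne_zero.2 (Nat.factorial_ne_zero _)
    field_simp


/-- Affine parametrization of the hyperplane `{∑ = 1}` by `ℝ^d`. -/
noncomputable def sphi (d : ℕ) : (Fin d → ℝ) → (Fin (d+1) → ℝ) :=
  fun x => Fin.snoc x (1 - ∑ i, x i)

lemma sphi_castSucc {d : ℕ} (x : Fin d → ℝ) (i : Fin d) :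
    sphi d x i.castSucc = x i := by simp [sphi]

lemma sphi_last {d : ℕ} (x : Fin d → ℝ) :
    sphi d x (Fin.last d) = 1 - ∑ i, x i := by simp [sphi]

lemma sphi_continuous (d : ℕ) : Continuous (sphi d) := by
  refine continuous_pi fun i => ?_
  refine Fin.lastCases ?_ ?_ i
  · simp only [sphi_last]
    exact continuous_const.sub (by continuity)
  · intro j
    simp only [sphi_castSucc]
    exact continuous_apply j

lemma sphi_injective (d : ℕ) : Function.Injective (sphi d) := by
  intro x y h
  funext i
  have := congrArg (fun p => p i.castSucc) h
  simpa [sphi_castSucc] using this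

lemma sum_sphi {d : ℕ} (x : Fin d → ℝ) : ∑ i, sphi d x i = 1 := by
  rw [Fin.sum_univ_castSucc]
  simp [sphi_castSucc, sphi_last]

lemma init_sphi {d : ℕ} (x : Fin d → ℝ) : Fin.init (sphi d x) = x := by
  funext i
  simp [Fin.init, sphi_castSucc]

lemma sphi_init {d : ℕ} (p : Fin (d+1) → ℝ) (hp : ∑ i, p i = 1) :
    sphi d (Fin.init p) = p := by
  have hsum : ∑ i, Fin.init p i = 1 - p (Fin.last d) := by
    rw [Fin.sum_univ_castSucc] at hp
    simp only [Fin.init]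
    linarith
  rw [sphi, hsum]
  simp [Fin.snoc_init_self]

lemma sphi_lipschitz (d : ℕ) : LipschitzWith (d + 1 : ℝ≥0) (sphi d) := by
  refine LipschitzWith.of_dist_le_mul fun x y => ?_
  have hd : ((d + 1 : ℝ≥0) : ℝ) = (d : ℝ) + 1 := by push_cast; ring
  rw [hd]
  have hnn : (0:ℝ) ≤ ((d:ℝ) + 1) * dist x y := by positivity
  refine dist_pi_le_iff hnn |>.2 fun i => ?_
  refine Fin.lastCases ?_ ?_ i
  · rw [sphi_last, sphi_last, Real.dist_eq]
    have h1 : (1 - ∑ i, x i) - (1 - ∑ i, y i) = ∑ i, (y i - x i) := by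
      rw [Finset.sum_sub_distrib]; ring
    rw [h1]
    calc |∑ i, (y i - x i)| ≤ ∑ i, |y i - x i| := Finset.abs_sum_le_sum_abs _ _
      _ ≤ ∑ _i : Fin d, dist x y := by
          refine Finset.sum_le_sum fun i _ => ?_
          rw [abs_sub_comm, ← Real.dist_eq]
          exact dist_le_pi_dist x y i
      _ = (d : ℝ) * dist x y := by simp [mul_comm]
      _ ≤ ((d:ℝ) + 1) * dist x y := by nlinarith [dist_nonneg (x := x) (y := y)]
  · intro j
    rw [sphi_castSucc, sphi_castSucc]
    calc dist (x j) (y j) ≤ dist x y := dist_le_pi_dist x y j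
      _ ≤ ((d:ℝ)+1) * dist x y := by nlinarith [dist_nonneg (x := x) (y := y)]

lemma init_lipschitz (d : ℕ) :
    LipschitzWith 1 (fun p : Fin (d+1) → ℝ => Fin.init p) := by
  refine LipschitzWith.of_dist_le_mul fun p q => ?_
  rw [NNReal.coe_one, one_mul]
  refine dist_pi_le_iff dist_nonneg |>.2 fun i => ?_
  exact dist_le_pi_dist p q i.castSucc

lemma measurable_init (d : ℕ) :
    Measurable (fun p : Fin (d+1) → ℝ => Fin.init p) :=
  measurable_pi_iff.2 fun i => measurable_pi_apply i.castSucc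

set_option maxHeartbeats 2000000 in
/-- The key structural result: the `d`-dimensional Hausdorff measure restricted to the
hyperplane `{∑ = 1}` in `ℝ^{d+1}` is a (nonzero) constant multiple of the pushforward of
Lebesgue measure under the parametrization `sphi d`. -/
lemma hausdorff_hyperplane_eq (d : ℕ) :
    ∃ c : ℝ≥0, c ≠ 0 ∧
      (μH[(d:ℝ)] : Measure (Fin (d+1) → ℝ)).restrict {p | ∑ i, p i = 1}
        = Measure.map (sphi d) (c • (volume : Measure (Fin d → ℝ))) := by
  classical
  set P : Set (Fin (d+1) → ℝ) := {p | ∑ i, p i = 1} with hPdef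
  have hPclosed : IsClosed P :=
    isClosed_eq (continuous_finset_sum _ fun i _ => continuous_apply i) continuous_const
  have hP : MeasurableSet P := hPclosed.measurableSet
  set ρ : Measure (Fin (d+1) → ℝ) := (μH[(d:ℝ)]).restrict P with hρ
  set μ' : Measure (Fin d → ℝ) := Measure.map (fun p => Fin.init p) ρ with hμ'
  have hφm : Measurable (sphi d) := (sphi_continuous d).measurable
  -- map sphi μ' = ρ
  have hmapφ : Measure.map (sphi d) μ' = ρ := by
    rw [hμ', Measure.map_map hφm (measurable_init d)]
    have hae : (sphi d ∘ fun p => Fin.init p) =ᵐ[ρ] id := by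
      filter_upwards [ae_restrict_mem hP] with p hp
      exact sphi_init p hp
    rw [Measure.map_congr hae, Measure.map_id]
  -- μ' of a measurable set is μH of the sphi-image
  have hμ'app : ∀ A : Set (Fin d → ℝ), MeasurableSet A →
      μ' A = μH[(d:ℝ)] (sphi d '' A) := by
    intro A hA
    rw [hμ', Measure.map_apply (measurable_init d) hA, hρ,
      Measure.restrict_apply ((measurable_init d) hA)]
    congr 1
    ext p
    constructor
    · rintro ⟨hpA, hpP⟩
      exact ⟨Fin.init p, hpA, sphi_init p hpP⟩
    · rintro ⟨x, hx, rfl⟩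
      refine ⟨?_, sum_sphi x⟩
      simp only [mem_preimage]
      rw [init_sphi]
      exact hx
  -- translation invariance
  haveI hinv : μ'.IsAddLeftInvariant := by
    constructor
    intro v
    have hw : ∑ i, (Fin.snoc v (-∑ i, v i) : Fin (d+1) → ℝ) i = 0 := by
      rw [Fin.sum_snoc]; ring
    set w : Fin (d+1) → ℝ := Fin.snoc v (-∑ i, v i) with hwdef
    have hcomp : (fun z : Fin d → ℝ => v + z) ∘ (fun p : Fin (d+1) → ℝ => Fin.init p)
        = (fun p => Fin.init p) ∘ (fun p : Fin (d+1) → ℝ => w + p) := by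
      funext p
      funext i
      simp [Fin.init, hwdef]
    have htrans : MeasurePreserving (fun p : Fin (d+1) → ℝ => w + p)
        (μH[(d:ℝ)]) (μH[(d:ℝ)]) :=
      (IsometryEquiv.addLeft w).measurePreserving_hausdorffMeasure _
    have hpre : (fun p : Fin (d+1) → ℝ => w + p) ⁻¹' P = P := by
      ext p
      simp only [hPdef, mem_preimage, mem_setOf_eq]
      simp only [Pi.add_apply]
      rw [Finset.sum_add_distrib, hw]
      constructor <;> intro h <;> linarith
    have hρinv : Measure.map (fun p : Fin (d+1) → ℝ => w + p) ρ = ρ := by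
      rw [hρ]
      have := (htrans.restrict_preimage hP).map_eq
      rwa [hpre] at this
    rw [hμ', Measure.map_map (by measurability) (measurable_init d), hcomp,
      ← Measure.map_map (measurable_init d) (by measurability), hρinv]
  -- finite on compacts
  haveI hfc : IsFiniteMeasureOnCompacts μ' := by
    constructor
    intro K hK
    rw [hμ'app K hK.measurableSet]
    calc μH[(d:ℝ)] (sphi d '' K)
        ≤ (d+1 : ℝ≥0) ^ (d:ℝ) * μH[(d:ℝ)] K :=
          (sphi_lipschitz d).hausdorffMeasure_image_le (by positivity) K
      _ < ⊤ := by
          have hvol : (μH[(d:ℝ)] : Measure (Fin d → ℝ)) = volume := by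
            have := MeasureTheory.hausdorffMeasure_pi_real (ι := Fin d)
            rwa [Fintype.card_fin] at this
          rw [hvol]
          exact ENNReal.mul_lt_top
            (ENNReal.rpow_lt_top_of_nonneg (by positivity) ENNReal.coe_ne_top)
            hK.measure_lt_top
  -- Haar uniqueness
  have huniq : μ' = Measure.addHaarScalarFactor μ' volume • (volume : Measure (Fin d → ℝ)) :=
    Measure.isAddLeftInvariant_eq_smul μ' volume
  -- positivity of the scalar
  have hTm : MeasurableSet (cornerSet d) := by
    have h1 : IsClosed {x : Fin d → ℝ | ∀ i, 0 ≤ x i} := by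
      have : {x : Fin d → ℝ | ∀ i, 0 ≤ x i} = ⋂ i, {x | 0 ≤ x i} := by ext x; simp
      rw [this]
      exact isClosed_iInter fun i => isClosed_le continuous_const (continuous_apply i)
    have h2 : IsClosed {x : Fin d → ℝ | ∑ i, x i ≤ 1} :=
      isClosed_le (continuous_finset_sum _ fun i _ => continuous_apply i) continuous_const
    exact (h1.inter h2).measurableSet
  have hTpos : 0 < volume (cornerSet d) := by
    have hUopen : IsOpen ({x : Fin d → ℝ | ∀ i, 0 < x i} ∩ {x | ∑ i, x i < 1}) := by
      refine IsOpen.inter ?_ ?_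
      · have : {x : Fin d → ℝ | ∀ i, 0 < x i} = ⋂ i, {x | 0 < x i} := by ext x; simp
        rw [this]
        exact isOpen_iInter_of_finite fun i =>
          isOpen_lt continuous_const (continuous_apply i)
      · exact isOpen_lt (continuous_finset_sum _ fun i _ => continuous_apply i) continuous_const
    have hne : (fun _ : Fin d => (1:ℝ)/(2*d+2)) ∈
        ({x : Fin d → ℝ | ∀ i, 0 < x i} ∩ {x | ∑ i, x i < 1}) := by
      constructor
      · intro i; positivity
      · simp only [mem_setOf_eq, Finset.sum_const, Finset.card_univ, Fintype.card_fin,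
          nsmul_eq_mul]
        have hpos : (0:ℝ) < 2*(d:ℝ)+2 := by positivity
        rw [mul_one_div, div_lt_iff₀ hpos]
        linarith [Nat.cast_nonneg (α := ℝ) d]
    calc (0:ℝ≥0∞) < volume ({x : Fin d → ℝ | ∀ i, 0 < x i} ∩ {x | ∑ i, x i < 1}) :=
          hUopen.measure_pos volume ⟨_, hne⟩
      _ ≤ volume (cornerSet d) := by
          apply measure_mono
          rintro x ⟨h1, h2⟩
          exact ⟨fun i => le_of_lt (h1 i), le_of_lt h2⟩
  have hvold : (μH[(d:ℝ)] : Measure (Fin d → ℝ)) = volume := by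
    have := MeasureTheory.hausdorffMeasure_pi_real (ι := Fin d)
    rwa [Fintype.card_fin] at this
  have hlow : volume (cornerSet d) ≤ μH[(d:ℝ)] (sphi d '' cornerSet d) := by
    have himg : (fun p : Fin (d+1) → ℝ => Fin.init p) '' (sphi d '' cornerSet d)
        = cornerSet d := by
      rw [← Set.image_comp]
      have : ((fun p : Fin (d+1) → ℝ => Fin.init p) ∘ sphi d) = id := by
        funext x; exact init_sphi x
      rw [this, Set.image_id]
    have := (init_lipschitz d).hausdorffMeasure_image_le
      (show (0:ℝ) ≤ (d:ℝ) by positivity) (sphi d '' cornerSet d)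
    rw [himg, hvold] at this
    simpa using this
  have hc0 : Measure.addHaarScalarFactor μ' volume ≠ 0 := by
    intro hc
    have h1 : μ' (cornerSet d) = 0 := by
      rw [huniq, hc]
      simp
    rw [hμ'app _ hTm] at h1
    rw [h1] at hlow
    exact hTpos.ne' (le_antisymm hlow zero_le)
  refine ⟨Measure.addHaarScalarFactor μ' volume, hc0, ?_⟩
  rw [← hmapφ]
  exact congrArg (Measure.map (sphi d)) huniq



/-- The uniform probability measure on the standard simplex
`Δ_{n-1} = { p : Fin n → ℝ | ∀ i, 0 ≤ p i, ∑ i, p i = 1 }`:  normalized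
`(n-1)`-dimensional (Hausdorff, i.e. Lebesgue surface) measure on the simplex. -/
noncomputable def simplexUniform (n : ℕ) : Measure (Fin n → ℝ) :=
  ((Measure.hausdorffMeasure ((n : ℝ) - 1) (stdSimplex ℝ (Fin n)))⁻¹ •
    (Measure.hausdorffMeasure ((n : ℝ) - 1)).restrict (stdSimplex ℝ (Fin n)))

/-- **Uniformly mixing multinomials gives the uniform distribution on multisets.**
Let `μ` be the uniform probability measure on the standard simplex `Δ_{n-1}` of
probability distributions on `n` days, and let `m : Fin n → ℕ` be a count vector with
`∑ m i = k`.  Then the multinomial probability of the outcome-count vector `m`, averaged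
over `p ∼ μ`, is `1 / C(n+k-1, k)`:
`(k! / ∏ i, (m i)!) · ∫ ∏ i, p iᵐⁱ dμ(p) = 1 / C(n+k-1, k)`.
So `k` i.i.d. birthdays with a common distribution uniformly random in the simplex give a
uniformly distributed multiset of birthdays. -/
theorem average_multinomial_eq_uniform_multiset
    (n k : ℕ) (hn : 0 < n) (hk : 0 < k) (m : Fin n → ℕ) (hm : ∑ i, m i = k) :
    ((k.factorial : ℝ) / ∏ i, ((m i).factorial : ℝ)) *
        ∫ p, (∏ i, p i ^ m i) ∂(simplexUniform n)
      = 1 / ((n + k - 1).choose k : ℝ) := by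
  obtain ⟨d, rfl⟩ : ∃ d, n = d + 1 := ⟨n - 1, (Nat.succ_pred_eq_of_pos hn).symm⟩
  obtain ⟨c, hc0, hmap⟩ := hausdorff_hyperplane_eq d
  set S := stdSimplex ℝ (Fin (d+1)) with hSdef
  set T := cornerSet d with hTdef
  set a := m (Fin.last d) with ha
  have hφm : Measurable (sphi d) := (sphi_continuous d).measurable
  have hemb : MeasurableEmbedding (sphi d) :=
    (sphi_continuous d).measurableEmbedding (sphi_injective d)
  have hScast : ((d+1:ℕ):ℝ) - 1 = (d:ℝ) := by push_cast; ring
  have hSm : MeasurableSet S := (isClosed_stdSimplex _ _).measurableSet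
  have hTm : MeasurableSet T := (cornerSet_isClosed d).measurableSet
  have hpre : sphi d ⁻¹' S = T := by
    ext x
    constructor
    · rintro ⟨h0, -⟩
      refine ⟨fun i => ?_, ?_⟩
      · have := h0 i.castSucc
        rwa [sphi_castSucc] at this
      · have := h0 (Fin.last d)
        rw [sphi_last] at this
        linarith
    · rintro ⟨h0, h1⟩
      refine ⟨fun i => ?_, sum_sphi x⟩
      refine Fin.lastCases ?_ ?_ i
      · rw [sphi_last]; linarith
      · intro j; rw [sphi_castSucc]; exact h0 j
  have hSP : S ⊆ {p : Fin (d+1) → ℝ | ∑ i, p i = 1} := fun p hp => hp.2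
  -- the restricted Hausdorff measure as a pushforward
  have hres : (μH[(d:ℝ)] : Measure (Fin (d+1) → ℝ)).restrict S
      = Measure.map (sphi d) ((c : ℝ≥0∞) • (volume.restrict T)) := by
    have h1 : (μH[(d:ℝ)] : Measure (Fin (d+1) → ℝ)).restrict S
        = ((μH[(d:ℝ)] : Measure (Fin (d+1) → ℝ)).restrict {p | ∑ i, p i = 1}).restrict S := by
      rw [Measure.restrict_restrict hSm, Set.inter_eq_self_of_subset_left hSP]
    rw [h1, hmap, Measure.restrict_map hφm hSm, hpre]
    have hcs : (c • (volume : Measure (Fin d → ℝ)))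
        = (c : ℝ≥0∞) • (volume : Measure (Fin d → ℝ)) := rfl
    rw [hcs, Measure.restrict_smul]
  -- value of the Hausdorff measure of the simplex
  have hSval : (μH[(d:ℝ)] : Measure (Fin (d+1) → ℝ)) S = (c : ℝ≥0∞) * volume T := by
    rw [← Measure.restrict_apply_univ, hres, Measure.map_apply hφm MeasurableSet.univ]
    simp [Measure.restrict_apply_univ]
  -- the main integral
  have hint : ∫ x, (∏ i, sphi d x i ^ m i) ∂(volume.restrict T)
      = ∫ x, dirFn d (Fin.init m) a x := by
    rw [← integral_indicator hTm]
    congr 1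
    funext x
    rw [dirFn]
    rcases Classical.em (x ∈ T) with h | h
    · rw [Set.indicator_of_mem h, Set.indicator_of_mem h]
      exact prod_snoc_pow m x _
    · rw [Set.indicator_of_notMem h, Set.indicator_of_notMem h]
  have hsum' : (∑ i, Fin.init m i) + a = k := by
    rw [← hm, Fin.sum_univ_castSucc (f := m)]
    simp [Fin.init, ha]
  have hJ : ∫ x, dirFn d (Fin.init m) a x
      = ((∏ i, ((Fin.init m i).factorial : ℝ)) * a.factorial) / ((k + d).factorial) := by
    rw [dirFn_integral d (Fin.init m) a, hsum']
  -- volume of the corner simplex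
  have hvolT : (volume T).toReal = 1 / (d.factorial : ℝ) := by
    have h1 : dirFn d (fun _ => 0) 0 = Set.indicator T (1 : (Fin d → ℝ) → ℝ) := by
      funext x
      rw [dirFn]
      rcases Classical.em (x ∈ T) with h | h
      · rw [Set.indicator_of_mem h, Set.indicator_of_mem h]; simp
      · rw [Set.indicator_of_notMem h, Set.indicator_of_notMem h]
    have h2 := dirFn_integral d (fun _ => 0) 0
    rw [h1, integral_indicator_one hTm] at h2
    rw [← measureReal_def]
    simpa using h2
  have hvolT_fin : volume T ≠ ⊤ := (cornerSet_isCompact d).measure_lt_top.ne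
  have hvolT_pos : (volume T).toReal ≠ 0 := by
    rw [hvolT]
    positivity
  have hcR : (c : ℝ≥0∞).toReal ≠ 0 := by
    simpa using hc0
  -- assemble
  have hSval_toReal : ((μH[(d:ℝ)] : Measure (Fin (d+1) → ℝ)) S).toReal
      = (c : ℝ≥0∞).toReal * (volume T).toReal := by
    rw [hSval, ENNReal.toReal_mul]
  have hSne0 : ((μH[(d:ℝ)] : Measure (Fin (d+1) → ℝ)) S).toReal ≠ 0 := by
    rw [hSval_toReal]
    exact mul_ne_zero hcR hvolT_pos
  have hIcalc : ∫ p, (∏ i, p i ^ m i) ∂(simplexUniform (d+1))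
      = ((μH[(d:ℝ)] : Measure (Fin (d+1) → ℝ)) S).toReal⁻¹ * ((c : ℝ≥0∞).toReal *
          (((∏ i, ((Fin.init m i).factorial : ℝ)) * a.factorial) / ((k + d).factorial))) := by
    rw [simplexUniform, hScast, integral_smul_measure, ← hSdef, hres,
      hemb.integral_map, integral_smul_measure, hint, hJ, ENNReal.toReal_inv, smul_eq_mul,
      smul_eq_mul]
  rw [hIcalc, hSval_toReal]
  have hprod : (∏ i, ((m i).factorial : ℝ))
      = (∏ i, ((Fin.init m i).factorial : ℝ)) * (a.factorial : ℝ) := by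
    rw [Fin.prod_univ_castSucc (f := fun i => ((m i).factorial : ℝ))]
    simp [Fin.init, ha]
  have hchoose : ((d + 1 + k - 1).choose k : ℝ) = ((d+k).factorial : ℝ) /
      ((k.factorial : ℝ) * (d.factorial : ℝ)) := by
    have h1 : d + 1 + k - 1 = d + k := by omega
    rw [h1]
    have h2 := Nat.choose_mul_factorial_mul_factorial (Nat.le_add_left k d)
    have h3 : d + k - k = d := by omega
    rw [h3] at h2
    field_simp
    push_cast [← h2]
    ring
  rw [hchoose, hvolT, hprod]
  have hfk : (k.factorial : ℝ) ≠ 0 := Nat.cast_ne_zero.2 (Nat.factorial_ne_zero _)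
  have hfd : (d.factorial : ℝ) ≠ 0 := Nat.cast_ne_zero.2 (Nat.factorial_ne_zero _)
  have hfkd : ((k+d).factorial : ℝ) ≠ 0 := Nat.cast_ne_zero.2 (Nat.factorial_ne_zero _)
  have hfdk : ((d+k).factorial : ℝ) ≠ 0 := Nat.cast_ne_zero.2 (Nat.factorial_ne_zero _)
  have hfpi : (∏ i, ((Fin.init m i).factorial : ℝ)) ≠ 0 :=
    Finset.prod_ne_zero_iff.2 fun i _ => Nat.cast_ne_zero.2 (Nat.factorial_ne_zero _)
  have hfa : (a.factorial : ℝ) ≠ 0 := Nat.cast_ne_zero.2 (Nat.factorial_ne_zero _)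
  have hkd : (k + d).factorial = (d + k).factorial := by rw [Nat.add_comm]
  rw [hkd]
  field_simp
end

section
/- Let n and k be positive integers and let B₁, ..., B_{n-1}, S₁, ..., S_k be n-1+k i.i.d. random variables uniformly distributed on [0,1] (so almost surely all distinct). The sorted values of B₁, ..., B_{n-1} divide [0,1] into n subintervals; for each i ∈ Fin n let N_i be the number of the points S₁, ..., S_k lying in the i-th subinterval. Then the random vector (N₁, ..., N_n) is uniformly distributed over the set of all vectors m : Fin n → ℕ with ∑_i m(i) = k, each such vector occurring with probability 1 / C(n+k-1, k). -/
open MeasureTheory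

namespace SBaux
open Finset

/-! ### Combinatorial part -/

variable {c N : ℕ}

/-- number of elements of `B` strictly below `q` -/
def gB (B : Finset (Fin c)) (q : Fin c) : ℕ := #(B.filter fun v => v < q)

lemma gB_le (B : Finset (Fin c)) (h : #B = N) (q : Fin c) : gB B q ≤ N :=
  h ▸ card_le_card (filter_subset _ _)

lemma orderEmb_lt_iff (B : Finset (Fin c)) (h : #B = N) (j : Fin N) (q : Fin c) :
    B.orderEmbOfFin h j < q ↔ (j : ℕ) < gB B q := by
  constructor
  · intro hlt
    have hcard : #(Finset.Iic j) ≤ #(B.filter fun v => v < q) := by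
      apply card_le_card_of_injOn (fun l => B.orderEmbOfFin h l)
      · intro l hl
        rw [mem_coe, mem_Iic] at hl
        refine mem_filter.2 ⟨orderEmbOfFin_mem _ _ _, lt_of_le_of_lt ?_ hlt⟩
        exact (B.orderEmbOfFin h).monotone hl
      · exact ((B.orderEmbOfFin h).injective.injOn)
    simpa [Fin.card_Iic, gB] using hcard
  · intro hg
    by_contra hnot
    push_neg at hnot
    have hsub : (B.filter fun v => v < q) ⊆ (Finset.Iio j).image (B.orderEmbOfFin h) := by
      intro v hv
      rw [mem_filter] at hv
      obtain ⟨l, hl⟩ : ∃ l, B.orderEmbOfFin h l = v := by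
        have h1 := Finset.range_orderEmbOfFin B h
        have : v ∈ Set.range (B.orderEmbOfFin h) := by rw [h1]; exact_mod_cast hv.1
        exact this
      refine mem_image.2 ⟨l, ?_, hl⟩
      rw [mem_Iio, ← (B.orderEmbOfFin h).strictMono.lt_iff_lt]
      rw [hl]
      exact lt_of_lt_of_le hv.2 hnot
    have hle := card_le_card hsub
    have h2 : #((Finset.Iio j).image (B.orderEmbOfFin h)) = (j : ℕ) := by
      rw [card_image_of_injective _ (B.orderEmbOfFin h).injective, Fin.card_Iio]
    rw [h2] at hle
    exact absurd (lt_of_lt_of_le hg hle) (lt_irrefl _)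

lemma gB_orderEmb (B : Finset (Fin c)) (h : #B = N) (j : Fin N) :
    gB B (B.orderEmbOfFin h j) = (j : ℕ) := by
  have key : ∀ l : Fin N, (l : ℕ) < gB B (B.orderEmbOfFin h j) ↔ l < j := by
    intro l
    rw [← orderEmb_lt_iff B h, (B.orderEmbOfFin h).strictMono.lt_iff_lt]
  refine le_antisymm ?_ ?_
  · by_contra hlt
    push_neg at hlt
    exact lt_irrefl _ ((key j).1 hlt)
  · by_contra hlt
    push_neg at hlt
    set g := gB B (B.orderEmbOfFin h j) with hg
    have hgN : g < N := lt_of_lt_of_le hlt (le_of_lt j.isLt)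
    exact lt_irrefl _ ((key ⟨g, hgN⟩).2 (Fin.lt_def.2 hlt))

lemma Scum_card (B : Finset (Fin c)) (h : #B = N) {j : ℕ} (hj : j < N) :
    #(univ.filter fun q => gB B q ≤ j) = (B.orderEmbOfFin h ⟨j, hj⟩ : ℕ) + 1 := by
  have heq : (univ.filter fun q => gB B q ≤ j) = Finset.Iic (B.orderEmbOfFin h ⟨j, hj⟩) := by
    ext q
    simp only [mem_filter, mem_univ, true_and, mem_Iic]
    rw [← not_lt, ← not_lt, not_iff_not, orderEmb_lt_iff B h]
  rw [heq, Fin.card_Iic]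

lemma Dcum_card (B : Finset (Fin c)) (h : #B = N) {j : ℕ} (hj : j < N) :
    #(B.filter fun q => gB B q ≤ j) = j + 1 := by
  have heq : (B.filter fun q => gB B q ≤ j)
      = (Finset.Iic (⟨j, hj⟩ : Fin N)).image (B.orderEmbOfFin h) := by
    ext v
    simp only [mem_filter, mem_image, mem_Iic]
    constructor
    · rintro ⟨hvB, hvg⟩
      obtain ⟨l, hl⟩ : ∃ l, B.orderEmbOfFin h l = v := by
        have h1 := Finset.range_orderEmbOfFin B h
        have : v ∈ Set.range (B.orderEmbOfFin h) := by rw [h1]; exact_mod_cast hvB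
        exact this
      refine ⟨l, ?_, hl⟩
      have : gB B v = (l : ℕ) := by rw [← hl]; exact gB_orderEmb B h l
      rw [this] at hvg
      exact Fin.le_def.2 hvg
    · rintro ⟨l, hlj, rfl⟩
      refine ⟨orderEmbOfFin_mem _ _ _, ?_⟩
      rw [gB_orderEmb B h l]
      exact Fin.le_def.1 hlj
  rw [heq, card_image_of_injective _ (B.orderEmbOfFin h).injective, Fin.card_Iic]

lemma SAD (B : Finset (Fin c)) (p : Fin c → Prop) [DecidablePred p] :
    #(univ.filter p) = #(Bᶜ.filter p) + #(B.filter p) := by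
  have heq : (univ : Finset (Fin c)).filter p = (Bᶜ.filter p) ∪ (B.filter p) := by
    rw [← filter_union]
    congr 1
    ext q; simp [or_comm, em (q ∈ B)]
  rw [heq, card_union_of_disjoint]
  exact Finset.disjoint_filter_filter disjoint_compl_left

lemma Acum_succ (B : Finset (Fin c)) (j : ℕ) :
    #(Bᶜ.filter fun q => gB B q ≤ j + 1)
      = #(Bᶜ.filter fun q => gB B q ≤ j) + #(Bᶜ.filter fun q => gB B q = j + 1) := by
  have h1 : (Bᶜ.filter fun q => gB B q ≤ j + 1)
      = (Bᶜ.filter fun q => gB B q ≤ j) ∪ (Bᶜ.filter fun q => gB B q = j + 1) := by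
    rw [← filter_or]
    exact filter_congr fun q _ => by rw [Nat.le_add_one_iff]
  rw [h1, card_union_of_disjoint]
  rw [Finset.disjoint_filter]
  intro q _ hle heq
  omega

/-- partial sums -/
def Tc (mex : ℕ → ℕ) (j : ℕ) : ℕ := ∑ i ∈ Finset.range j, mex i

section withM
variable {k : ℕ} (mex : ℕ → ℕ)

lemma Tc_mono : Monotone (Tc mex) := fun _ _ hab =>
  Finset.sum_le_sum_of_subset (Finset.range_subset_range.2 hab)

lemma Tc_le (hmk : Tc mex (N + 1) = k) {j : ℕ} (hj : j ≤ N + 1) : Tc mex j ≤ k :=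
  hmk ▸ Tc_mono mex hj

variable (B : Finset (Fin (N + k)))

lemma cum_top (h : #B = N) : #(Bᶜ.filter fun q => gB B q ≤ N) = k := by
  have h1 := SAD B (fun q => gB B q ≤ N)
  have h2 : (univ.filter fun q : Fin (N + k) => gB B q ≤ N) = univ :=
    filter_true_of_mem fun q _ => gB_le B h q
  have h3 : (B.filter fun q => gB B q ≤ N) = B :=
    filter_true_of_mem fun q _ => gB_le B h q
  rw [h2, h3, card_univ, Fintype.card_fin, h] at h1
  omega

lemma cum_of_phi (hΦ : ∀ j ≤ N, #(Bᶜ.filter fun q => gB B q = j) = mex j) :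
    ∀ j ≤ N, #(Bᶜ.filter fun q => gB B q ≤ j) = Tc mex (j + 1) := by
  intro j
  induction j with
  | zero =>
    intro h0
    have heq : (Bᶜ.filter fun q => gB B q ≤ 0) = (Bᶜ.filter fun q => gB B q = 0) :=
      filter_congr fun q _ => by omega
    rw [heq, hΦ 0 h0, Tc, Finset.sum_range_one]
  | succ j ih =>
    intro hj
    have h2 : Tc mex (j + 1 + 1) = Tc mex (j + 1) + mex (j + 1) := Finset.sum_range_succ _ _
    rw [Acum_succ, ih (by omega), hΦ (j+1) hj, h2]

lemma phi_of_cum (hA : ∀ j ≤ N, #(Bᶜ.filter fun q => gB B q ≤ j) = Tc mex (j + 1)) :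
    ∀ j ≤ N, #(Bᶜ.filter fun q => gB B q = j) = mex j := by
  intro j
  cases j with
  | zero =>
    intro h0
    have heq : (Bᶜ.filter fun q => gB B q ≤ 0) = (Bᶜ.filter fun q => gB B q = 0) :=
      filter_congr fun q _ => by omega
    have h1 := hA 0 h0
    rw [heq] at h1
    rw [h1, Tc, Finset.sum_range_one]
  | succ j =>
    intro hj
    have h1 := Acum_succ B j
    rw [hA (j+1) hj, hA j (by omega)] at h1
    have h2 : Tc mex (j + 1 + 1) = Tc mex (j + 1) + mex (j + 1) := Finset.sum_range_succ _ _
    omega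

lemma uval_of_cum (h : #B = N)
    (hA : ∀ j ≤ N, #(Bᶜ.filter fun q => gB B q ≤ j) = Tc mex (j + 1)) :
    ∀ (j : ℕ) (hj : j < N), (B.orderEmbOfFin h ⟨j, hj⟩ : ℕ) = Tc mex (j + 1) + j := by
  intro j hj
  have h1 := SAD B (fun q => gB B q ≤ j)
  rw [Scum_card B h hj, Dcum_card B h hj, hA j (by omega)] at h1
  omega

lemma cum_of_uval (hmk : Tc mex (N + 1) = k) (h : #B = N)
    (hu : ∀ (j : ℕ) (hj : j < N), (B.orderEmbOfFin h ⟨j, hj⟩ : ℕ) = Tc mex (j + 1) + j) :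
    ∀ j ≤ N, #(Bᶜ.filter fun q => gB B q ≤ j) = Tc mex (j + 1) := by
  intro j hj
  rcases Nat.lt_or_ge j N with hj' | hj'
  · have h1 := SAD B (fun q => gB B q ≤ j)
    rw [Scum_card B h hj', Dcum_card B h hj', hu j hj'] at h1
    omega
  · have hjN : j = N := le_antisymm hj hj'
    subst hjN
    rw [cum_top B h, hmk]

end withM

section Pzero
variable {k : ℕ} (mex : ℕ → ℕ) (hmk : Tc mex (N + 1) = k)

/-- the canonical bar positions determined by the composition -/
def pfun (j : Fin N) : Fin (N + k) :=
  ⟨Tc mex (j + 1) + j, by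
    have h1 : Tc mex (j + 1) ≤ k := Tc_le mex hmk (by omega)
    omega⟩

lemma pfun_strictMono : StrictMono (pfun mex hmk) := by
  intro a b hab
  have : Tc mex (a + 1) ≤ Tc mex (b + 1) := Tc_mono mex (by omega)
  simp only [pfun, Fin.mk_lt_mk, Fin.lt_def] at *
  omega

/-- the canonical bar-position set -/
def P0 : Finset (Fin (N + k)) := univ.image (pfun mex hmk)

lemma P0_card : #(P0 mex hmk) = N := by
  rw [P0, card_image_of_injective _ (pfun_strictMono mex hmk).injective, card_univ,
    Fintype.card_fin]

lemma phi_iff_eq_P0 (B : Finset (Fin (N + k))) (h : #B = N) :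
    (∀ j ≤ N, #(Bᶜ.filter fun q => gB B q = j) = mex j) ↔ B = P0 mex hmk := by
  constructor
  · intro hΦ
    have hu := uval_of_cum mex B h (cum_of_phi mex B hΦ)
    have hue : ⇑(B.orderEmbOfFin h) = pfun mex hmk := by
      funext j
      exact Fin.ext (by simpa [pfun] using hu j j.isLt)
    have himg : univ.image (B.orderEmbOfFin h) = B := by
      apply Finset.eq_of_subset_of_card_le
      · intro v hv
        obtain ⟨l, _, rfl⟩ := mem_image.1 hv
        exact orderEmbOfFin_mem _ _ _
      · rw [card_image_of_injective _ (B.orderEmbOfFin h).injective, card_univ,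
          Fintype.card_fin, h]
    rw [← himg, hue, P0]
  · rintro rfl
    have hpe : pfun mex hmk = ⇑((P0 mex hmk).orderEmbOfFin h) := by
      apply orderEmbOfFin_unique h
      · intro x; exact mem_image_of_mem _ (mem_univ x)
      · exact pfun_strictMono mex hmk
    apply phi_of_cum mex (P0 mex hmk)
    apply cum_of_uval mex (P0 mex hmk) hmk h
    intro j hj
    rw [← hpe]
    rfl

end Pzero

/-! ### The bar-position set of a full ranking -/

section Sig
variable {N k : ℕ}

lemma inl_inj (σ : (Fin N ⊕ Fin k) ≃ Fin (N + k)) :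
    Function.Injective (fun r : Fin N => σ (Sum.inl r)) :=
  fun _ _ hab => Sum.inl_injective (σ.injective hab)

def Bsig (σ : (Fin N ⊕ Fin k) ≃ Fin (N + k)) : Finset (Fin (N + k)) :=
  univ.image (fun r : Fin N => σ (Sum.inl r))

lemma Bsig_card (σ : (Fin N ⊕ Fin k) ≃ Fin (N + k)) : #(Bsig σ) = N := by
  rw [Bsig, card_image_of_injective _ (inl_inj σ), card_univ, Fintype.card_fin]

lemma mem_Bsig_inl (σ : (Fin N ⊕ Fin k) ≃ Fin (N + k)) (r : Fin N) :
    σ (Sum.inl r) ∈ Bsig σ := mem_image_of_mem _ (mem_univ r)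

lemma not_mem_Bsig_inr (σ : (Fin N ⊕ Fin k) ≃ Fin (N + k)) (t : Fin k) :
    σ (Sum.inr t) ∉ Bsig σ := by
  intro hmem
  obtain ⟨r, _, hr⟩ := mem_image.1 hmem
  exact absurd (σ.injective hr) (by simp)

lemma inner_eq (σ : (Fin N ⊕ Fin k) ≃ Fin (N + k)) (q : Fin (N + k)) :
    #(univ.filter fun r : Fin N => σ (Sum.inl r) < q) = gB (Bsig σ) q := by
  rw [gB, Bsig, filter_image, card_image_of_injective _ (inl_inj σ)]

lemma outer_eq (σ : (Fin N ⊕ Fin k) ≃ Fin (N + k)) (j : ℕ) :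
    #(univ.filter fun t : Fin k => gB (Bsig σ) (σ (Sum.inr t)) = j)
      = #((Bsig σ)ᶜ.filter fun q => gB (Bsig σ) q = j) := by
  apply card_nbij (fun t => σ (Sum.inr t))
  · intro t ht
    exact mem_filter.2 ⟨mem_compl.2 (not_mem_Bsig_inr σ t), (mem_filter.1 ht).2⟩
  · have : Function.Injective (fun t : Fin k => σ (Sum.inr t)) :=
      fun a b hab => Sum.inr_injective (σ.injective hab)
    exact this.injOn
  · intro q hq
    rw [mem_coe, mem_filter, mem_compl] at hq
    rcases hsym : σ.symm q with r | t
    · exfalso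
      apply hq.1
      have hq2 : σ (Sum.inl r) = q := by rw [← hsym, Equiv.apply_symm_apply]
      rw [← hq2]; exact mem_Bsig_inl σ r
    · have hq2 : σ (Sum.inr t) = q := by rw [← hsym, Equiv.apply_symm_apply]
      refine ⟨t, ?_, hq2⟩
      simp only [mem_coe, mem_filter, mem_univ, true_and]
      rw [hq2]
      exact hq.2

lemma counts_eq (σ : (Fin N ⊕ Fin k) ≃ Fin (N + k)) (j : ℕ) :
    #(univ.filter fun t : Fin k =>
        #(univ.filter fun r : Fin N => σ (Sum.inl r) < σ (Sum.inr t)) = j)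
      = #((Bsig σ)ᶜ.filter fun q => gB (Bsig σ) q = j) := by
  rw [← outer_eq σ j]
  congr 1
  exact filter_congr fun t _ => by rw [inner_eq]

noncomputable def sigEquiv (P : Finset (Fin (N + k))) (hP : #P = N) :
    {σ : (Fin N ⊕ Fin k) ≃ Fin (N + k) // Bsig σ = P}
      ≃ (Fin N ≃ {x // x ∈ P}) × (Fin k ≃ {x // x ∈ Pᶜ}) where
  toFun := fun ⟨σ, hσ⟩ =>
    ⟨Equiv.ofBijective (fun r => ⟨σ (Sum.inl r), by rw [← hσ]; exact mem_Bsig_inl σ r⟩)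
      ((Fintype.bijective_iff_injective_and_card _).2
        ⟨fun a b hab => Sum.inl_injective (σ.injective (congrArg Subtype.val hab)),
          by rw [Fintype.card_fin, Fintype.card_coe, hP]⟩),
     Equiv.ofBijective
      (fun t => ⟨σ (Sum.inr t), mem_compl.2 (by rw [← hσ]; exact not_mem_Bsig_inr σ t)⟩)
      ((Fintype.bijective_iff_injective_and_card _).2
        ⟨fun a b hab => Sum.inr_injective (σ.injective (congrArg Subtype.val hab)),
          by rw [Fintype.card_fin, Fintype.card_coe, card_compl, Fintype.card_fin, hP]; omega⟩)⟩
  invFun ep :=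
    ⟨(Equiv.sumCongr ep.1 (ep.2.trans (Equiv.subtypeEquivRight fun x => Finset.mem_compl))).trans
        (Equiv.sumCompl (· ∈ P)), by
      apply Finset.eq_of_subset_of_card_le
      · intro v hv
        obtain ⟨r, _, rfl⟩ := mem_image.1 hv
        simp only [Equiv.trans_apply, Equiv.sumCongr_apply, Sum.map_inl,
          Equiv.sumCompl_apply_inl]
        exact (ep.1 r).2
      · have hinj : Function.Injective (fun r : Fin N =>
            ((Equiv.sumCongr ep.1 (ep.2.trans (Equiv.subtypeEquivRight fun x =>
              Finset.mem_compl))).trans (Equiv.sumCompl (· ∈ P))) (Sum.inl r)) :=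
          fun a b hab => Sum.inl_injective (Equiv.injective _ hab)
        rw [hP, Bsig, card_image_of_injective _ hinj, card_univ, Fintype.card_fin]⟩
  left_inv σp := by
    apply Subtype.ext
    apply Equiv.ext
    intro i
    cases i with
    | inl r => simp
    | inr t => simp
  right_inv ep := by
    refine Prod.ext ?_ ?_
    · apply Equiv.ext; intro r; apply Subtype.ext; simp
    · apply Equiv.ext; intro t; apply Subtype.ext; simp

lemma sig_card (P : Finset (Fin (N + k))) (hP : #P = N) :
    #(univ.filter fun σ : (Fin N ⊕ Fin k) ≃ Fin (N + k) => Bsig σ = P)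
      = N.factorial * k.factorial := by
  classical
  rw [← Fintype.card_subtype]
  rw [Fintype.card_congr (sigEquiv P hP), Fintype.card_prod]
  have e1 : Fin N ≃ {x // x ∈ P} :=
    (Fintype.equivFinOfCardEq (by rw [Fintype.card_coe, hP])).symm
  have e2 : Fin k ≃ {x // x ∈ Pᶜ} :=
    (Fintype.equivFinOfCardEq
      (by rw [Fintype.card_coe, card_compl, Fintype.card_fin, hP]; omega)).symm
  rw [Fintype.card_equiv e1, Fintype.card_equiv e2, Fintype.card_fin, Fintype.card_fin]

end Sig
end SBaux

namespace SBaux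
open Finset

/-! ### Measure-theoretic part -/

noncomputable def mu0 : Measure ℝ := volume.restrict (Set.Icc 0 1)

instance : IsProbabilityMeasure mu0 := by
  constructor
  rw [mu0, Measure.restrict_apply_univ, Real.volume_Icc]
  norm_num

instance : NullSingletonClass mu0 := by
  unfold mu0
  infer_instance

section MeasAux
variable {ι : Type*} [Fintype ι] [DecidableEq ι]

lemma pair_null (i j : ι) (hij : i ≠ j) :
    Measure.pi (fun _ : ι => mu0) {x | x i = x j} = 0 := by
  set μ := Measure.pi (fun _ : ι => mu0) with hμ
  have hf : Measurable (fun x : ι → ℝ => (x i, x j)) :=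
    (measurable_pi_apply i).prodMk (measurable_pi_apply j)
  have hdiag : MeasurableSet {p : ℝ × ℝ | p.1 = p.2} :=
    measurableSet_eq_fun measurable_fst measurable_snd
  have hmap : mu0.prod mu0 = μ.map (fun x => (x i, x j)) := by
    refine Measure.prod_eq fun s t hs ht => ?_
    rw [Measure.map_apply hf (hs.prod ht)]
    have hpre : (fun x : ι → ℝ => (x i, x j)) ⁻¹' (s ×ˢ t)
        = Set.pi Set.univ (fun l => if l = i then s else if l = j then t else Set.univ) := by
      ext x
      simp only [Set.mem_preimage, Set.mem_prod, Set.mem_pi, Set.mem_univ, true_implies]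
      constructor
      · rintro ⟨h1, h2⟩ l
        by_cases hli : l = i
        · subst hli; simp [h1]
        · by_cases hlj : l = j
          · subst hlj; simp [h2, hli]
          · simp [hli, hlj]
      · intro h
        constructor
        · have := h i; simpa using this
        · have := h j; rw [if_neg (Ne.symm hij), if_pos rfl] at this; exact this
    rw [hpre, Measure.pi_pi]
    have hprod : (∏ l, mu0 (if l = i then s else if l = j then t else Set.univ))
        = ∏ l ∈ ({i, j} : Finset ι),
            mu0 (if l = i then s else if l = j then t else Set.univ) := by
      symm
      apply Finset.prod_subset (Finset.subset_univ _)
      intro l _ hl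
      simp only [Finset.mem_insert, Finset.mem_singleton, not_or] at hl
      rw [if_neg hl.1, if_neg hl.2, measure_univ]
    rw [hprod, Finset.prod_pair hij, if_pos rfl, if_neg (Ne.symm hij), if_pos rfl]
  have hset : {x : ι → ℝ | x i = x j}
      = (fun x : ι → ℝ => (x i, x j)) ⁻¹' {p : ℝ × ℝ | p.1 = p.2} := rfl
  rw [hset, ← Measure.map_apply hf hdiag, ← hmap]
  rw [Measure.prod_apply hdiag]
  have hz : ∀ a : ℝ, mu0 (Prod.mk a ⁻¹' {p : ℝ × ℝ | p.1 = p.2}) = 0 := by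
    intro a
    have : (Prod.mk a ⁻¹' {p : ℝ × ℝ | p.1 = p.2}) = {a} := by
      ext b; simp [eq_comm]
    rw [this, measure_singleton]
  simp only [hz, lintegral_zero]

lemma notInj_null :
    Measure.pi (fun _ : ι => mu0) {x : ι → ℝ | ¬ Function.Injective x} = 0 := by
  apply measure_mono_null
    (t := ⋃ (i : ι), ⋃ (j : ι), {x : ι → ℝ | i ≠ j ∧ x i = x j})
  · intro x hx
    simp only [Set.mem_setOf_eq, Function.Injective, not_forall] at hx
    obtain ⟨a, b, hab, hne⟩ := hx
    exact Set.mem_iUnion.2 ⟨a, Set.mem_iUnion.2 ⟨b, ⟨hne, hab⟩⟩⟩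
  · apply measure_iUnion_null
    intro i
    apply measure_iUnion_null
    intro j
    by_cases hij : i = j
    · subst hij
      have : {x : ι → ℝ | i ≠ i ∧ x i = x i} = ∅ := by ext x; simp
      rw [this]; exact measure_empty
    · exact measure_mono_null (fun x hx => hx.2) (pair_null i j hij)

noncomputable def rnk (x : ι → ℝ) (i : ι) : ℕ := #(univ.filter fun j => x j < x i)

lemma rnk_lt_rnk {x : ι → ℝ} {i j : ι} (hij : x j < x i) :
    rnk x j < rnk x i := by
  apply card_lt_card
  rw [ssubset_iff_of_subset]
  · exact ⟨j, mem_filter.2 ⟨mem_univ _, hij⟩, fun hmem => lt_irrefl _ (mem_filter.1 hmem).2⟩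
  · intro l hl
    exact mem_filter.2 ⟨mem_univ _, lt_trans (mem_filter.1 hl).2 hij⟩

lemma rnk_lt_iff {x : ι → ℝ} (hx : Function.Injective x) (i j : ι) :
    x j < x i ↔ rnk x j < rnk x i := by
  constructor
  · exact rnk_lt_rnk
  · intro h
    rcases lt_trichotomy (x j) (x i) with h1 | h1 | h1
    · exact h1
    · exfalso; rw [hx h1] at h; exact lt_irrefl _ h
    · exact absurd (rnk_lt_rnk h1) (not_lt.2 (le_of_lt h))

lemma rnk_lt_card (x : ι → ℝ) (i : ι) : rnk x i < Fintype.card ι := by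
  have hsub : (univ.filter fun j => x j < x i) ⊆ univ.erase i := by
    intro l hl
    refine mem_erase.2 ⟨fun h => ?_, mem_univ _⟩
    subst h
    exact lt_irrefl _ (mem_filter.1 hl).2
  calc rnk x i ≤ #(univ.erase i) := card_le_card hsub
    _ < Fintype.card ι := by
        rw [card_erase_of_mem (mem_univ i), card_univ]
        have : 0 < Fintype.card ι := Fintype.card_pos_iff.2 ⟨i⟩
        omega

lemma rnk_inj {x : ι → ℝ} (hx : Function.Injective x) : Function.Injective (rnk x) := by
  intro i j hij
  by_contra hne
  rcases lt_trichotomy (x i) (x j) with h1 | h1 | h1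
  · exact absurd (rnk_lt_rnk h1) (by omega)
  · exact hne (hx h1)
  · exact absurd (rnk_lt_rnk h1) (by omega)

lemma rnk_comp (e : ι ≃ ι) (x : ι → ℝ) (i : ι) : rnk (x ∘ e) i = rnk x (e i) := by
  apply card_nbij e
  · intro j hj
    exact mem_filter.2 ⟨mem_univ _, (mem_filter.1 hj).2⟩
  · exact e.injective.injOn
  · intro j' hj'
    rw [mem_coe, mem_filter] at hj'
    refine ⟨e.symm j', ?_, by simp⟩
    rw [mem_coe, mem_filter]
    refine ⟨mem_univ _, ?_⟩
    show x (e (e.symm j')) < x (e i)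
    rw [Equiv.apply_symm_apply]
    exact hj'.2

lemma meas_rnk (i : ι) : Measurable fun x : ι → ℝ => rnk x i := by
  simp_rw [rnk, Finset.card_filter]
  apply Finset.measurable_sum
  intro j _
  exact Measurable.ite (measurableSet_lt (measurable_pi_apply j) (measurable_pi_apply i))
    measurable_const measurable_const

lemma meas_inj : MeasurableSet {x : ι → ℝ | Function.Injective x} := by
  have heq : {x : ι → ℝ | Function.Injective x}
      = ⋂ (i : ι), ⋂ (j : ι), {x : ι → ℝ | x i = x j → i = j} := by
    ext x
    simp [Function.Injective]
  rw [heq]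
  refine MeasurableSet.iInter fun i => MeasurableSet.iInter fun j => ?_
  by_cases hij : i = j
  · subst hij
    have : {x : ι → ℝ | x i = x i → i = i} = Set.univ := by ext x; simp
    rw [this]; exact MeasurableSet.univ
  · have : {x : ι → ℝ | x i = x j → i = j} = {x : ι → ℝ | x i = x j}ᶜ := by
      ext x; simp [hij]
    rw [this]
    exact (measurableSet_eq_fun (measurable_pi_apply i) (measurable_pi_apply j)).compl

lemma map_perm (τ : ι ≃ ι) :
    MeasurePreserving (fun x : ι → ℝ => fun i => x (τ.symm i))
      (Measure.pi fun _ : ι => mu0) (Measure.pi fun _ : ι => mu0) := by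
  have h := measurePreserving_piCongrLeft (fun _ : ι => mu0) τ
  have hcoe : ⇑(MeasurableEquiv.piCongrLeft (fun _ : ι => ℝ) τ)
      = fun x : ι → ℝ => fun i => x (τ.symm i) := by
    funext x i
    rw [MeasurableEquiv.coe_piCongrLeft]
    have h2 := Equiv.piCongrLeft_apply_apply (fun _ : ι => ℝ) τ x (τ.symm i)
    simpa using h2
  rw [hcoe] at h
  exact h

end MeasAux

section Events
variable {N k : ℕ}

def Ev (σ : (Fin N ⊕ Fin k) ≃ Fin (N + k)) : Set ((Fin N ⊕ Fin k) → ℝ) :=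
  {x | Function.Injective x ∧ ∀ i, rnk x i = (σ i : ℕ)}

lemma meas_Ev (σ : (Fin N ⊕ Fin k) ≃ Fin (N + k)) : MeasurableSet (Ev σ) := by
  have hEv : Ev σ = {x : (Fin N ⊕ Fin k) → ℝ | Function.Injective x}
      ∩ ⋂ i, (fun x : (Fin N ⊕ Fin k) → ℝ => rnk x i) ⁻¹' {(σ i : ℕ)} := by
    ext x
    simp [Ev, Set.mem_iInter]
  rw [hEv]
  exact meas_inj.inter (MeasurableSet.iInter fun i =>
    meas_rnk i (measurableSet_singleton ((σ i : ℕ))))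

lemma Ev_preimage (τ : (Fin N ⊕ Fin k) ≃ (Fin N ⊕ Fin k)) (σ : (Fin N ⊕ Fin k) ≃ Fin (N + k)) :
    (fun x : (Fin N ⊕ Fin k) → ℝ => fun i => x (τ.symm i)) ⁻¹' Ev σ = Ev (τ.trans σ) := by
  ext x
  show (Function.Injective (x ∘ τ.symm) ∧ ∀ i, rnk (x ∘ τ.symm) i = (σ i : ℕ)) ↔ _
  have hinj : Function.Injective (x ∘ τ.symm) ↔ Function.Injective x := by
    constructor
    · intro h a b hab
      have h2 : (x ∘ τ.symm) (τ a) = (x ∘ τ.symm) (τ b) := by simpa using hab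
      exact τ.injective (h h2)
    · intro h
      exact h.comp τ.symm.injective
  constructor
  · rintro ⟨h1, h2⟩
    refine ⟨hinj.1 h1, fun i => ?_⟩
    have := h2 (τ i)
    rw [rnk_comp τ.symm x (τ i)] at this
    simpa using this
  · rintro ⟨h1, h2⟩
    refine ⟨hinj.2 h1, fun i => ?_⟩
    rw [rnk_comp τ.symm x i]
    have := h2 (τ.symm i)
    simpa using this

lemma Ev_measure_const (σ σ' : (Fin N ⊕ Fin k) ≃ Fin (N + k)) :
    Measure.pi (fun _ : Fin N ⊕ Fin k => mu0) (Ev σ)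
      = Measure.pi (fun _ : Fin N ⊕ Fin k => mu0) (Ev σ') := by
  set τ := σ'.trans σ.symm with hτ
  have hts : τ.trans σ = σ' := by
    apply Equiv.ext
    intro i
    simp [hτ]
  calc Measure.pi (fun _ : Fin N ⊕ Fin k => mu0) (Ev σ)
      = Measure.pi (fun _ : Fin N ⊕ Fin k => mu0)
          ((fun x : (Fin N ⊕ Fin k) → ℝ => fun i => x (τ.symm i)) ⁻¹' Ev σ) :=
        ((map_perm τ).measure_preimage (meas_Ev σ).nullMeasurableSet).symm
    _ = _ := by rw [Ev_preimage, hts]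

lemma Ev_disjoint {σ σ' : (Fin N ⊕ Fin k) ≃ Fin (N + k)} (h : σ ≠ σ') :
    Disjoint (Ev σ) (Ev σ') := by
  rw [Set.disjoint_left]
  rintro x ⟨_, h1⟩ ⟨_, h2⟩
  apply h
  apply Equiv.ext
  intro i
  exact Fin.ext (by rw [← h1 i, ← h2 i])

lemma exists_Ev {x : (Fin N ⊕ Fin k) → ℝ} (hx : Function.Injective x) :
    ∃ σ : (Fin N ⊕ Fin k) ≃ Fin (N + k), x ∈ Ev σ := by
  have hcard : Fintype.card (Fin N ⊕ Fin k) = N + k := by simp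
  have hlt : ∀ i, rnk x i < N + k := fun i => hcard ▸ rnk_lt_card x i
  have hbij : Function.Bijective (fun i => (⟨rnk x i, hlt i⟩ : Fin (N + k))) := by
    rw [Fintype.bijective_iff_injective_and_card]
    constructor
    · intro a b hab
      exact rnk_inj hx (congrArg Fin.val hab)
    · simp
  exact ⟨Equiv.ofBijective _ hbij, hx, fun i => rfl⟩

end Events
end SBaux

open SBaux Finset in
/-- **Stars and bars with random stars and bars.** -/
theorem stars_and_bars_uniform
    (n k : ℕ) (hn : 0 < n) (hk : 0 < k) (m : Fin n → ℕ) (hm : ∑ i, m i = k) :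
    (Measure.prod
        (Measure.pi (fun _ : Fin (n - 1) => volume.restrict (Set.Icc (0 : ℝ) 1)))
        (Measure.pi (fun _ : Fin k => volume.restrict (Set.Icc (0 : ℝ) 1))))
      {ω : (Fin (n - 1) → ℝ) × (Fin k → ℝ) |
        (fun i : Fin n => (Finset.univ.filter (fun t : Fin k =>
            (Finset.univ.filter (fun r : Fin (n - 1) => ω.1 r < ω.2 t)).card = (i : ℕ))).card)
          = m}
      = (((n + k - 1).choose k : ℕ) : ENNReal)⁻¹ := by
  classical
  obtain ⟨N, rfl⟩ : ∃ N, n = N + 1 := ⟨n - 1, by omega⟩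
  show (Measure.prod
        (Measure.pi (fun _ : Fin N => volume.restrict (Set.Icc (0 : ℝ) 1)))
        (Measure.pi (fun _ : Fin k => volume.restrict (Set.Icc (0 : ℝ) 1))))
      {ω : (Fin N → ℝ) × (Fin k → ℝ) |
        (fun i : Fin (N + 1) => (Finset.univ.filter (fun t : Fin k =>
            (Finset.univ.filter (fun r : Fin N => ω.1 r < ω.2 t)).card = (i : ℕ))).card)
          = m}
      = (((N + 1 + k - 1).choose k : ℕ) : ENNReal)⁻¹
  -- the composition as a function on ℕ
  set mex : ℕ → ℕ := fun j => if h : j < N + 1 then m ⟨j, h⟩ else 0 with hmex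
  have hmk : Tc mex (N + 1) = k := by
    rw [Tc, Finset.sum_range, ← hm]
    apply Finset.sum_congr rfl
    intro i _
    simp [hmex]
    exact fun h => absurd i.isLt (by omega)
  set μ := Measure.pi (fun _ : Fin N ⊕ Fin k => mu0) with hμdef
  haveI : IsProbabilityMeasure μ := by rw [hμdef]; infer_instance
  set Aset : Set ((Fin N ⊕ Fin k) → ℝ) :=
    {x | (fun i : Fin (N + 1) => (Finset.univ.filter (fun t : Fin k =>
        (Finset.univ.filter (fun r : Fin N => x (Sum.inl r) < x (Sum.inr t))).card
          = (i : ℕ))).card) = m} with hAdef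
  -- measurability of Aset
  have hInnerMeas : ∀ t : Fin k, Measurable fun x : (Fin N ⊕ Fin k) → ℝ =>
      #(Finset.univ.filter fun r : Fin N => x (Sum.inl r) < x (Sum.inr t)) := by
    intro t
    simp_rw [Finset.card_filter]
    apply Finset.measurable_sum
    intro r _
    exact Measurable.ite
      (measurableSet_lt (measurable_pi_apply (Sum.inl r)) (measurable_pi_apply (Sum.inr t)))
      measurable_const measurable_const
  have hCntMeas : ∀ j : ℕ, Measurable fun x : (Fin N ⊕ Fin k) → ℝ =>
      #(Finset.univ.filter fun t : Fin k =>
        #(Finset.univ.filter fun r : Fin N => x (Sum.inl r) < x (Sum.inr t)) = j) := by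
    intro j
    have hrew : (fun x : (Fin N ⊕ Fin k) → ℝ => #(Finset.univ.filter fun t : Fin k =>
        #(Finset.univ.filter fun r : Fin N => x (Sum.inl r) < x (Sum.inr t)) = j))
        = fun x => ∑ t : Fin k, if
            #(Finset.univ.filter fun r : Fin N => x (Sum.inl r) < x (Sum.inr t)) = j
          then 1 else 0 := funext fun x => Finset.card_filter _ _
    rw [hrew]
    apply Finset.measurable_sum
    intro t _
    exact Measurable.ite ((hInnerMeas t) (measurableSet_singleton j))
      measurable_const measurable_const
  have hAmeas : MeasurableSet Aset := by
    have hre : Aset = ⋂ i : Fin (N + 1),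
        (fun x : (Fin N ⊕ Fin k) → ℝ => #(Finset.univ.filter fun t : Fin k =>
          #(Finset.univ.filter fun r : Fin N => x (Sum.inl r) < x (Sum.inr t)) = (i : ℕ)))
            ⁻¹' {m i} := by
      ext x
      simp only [hAdef, Set.mem_setOf_eq, Set.mem_iInter, Set.mem_preimage,
        Set.mem_singleton_iff, funext_iff]
    rw [hre]
    exact MeasurableSet.iInter fun i => (hCntMeas (i : ℕ)) (measurableSet_singleton (m i))
  -- transfer of the statement's measure to μ
  have hmp := MeasureTheory.measurePreserving_sumPiEquivProdPi_symm
      (fun _ : Fin N ⊕ Fin k => mu0)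
  have hLHS :
      (Measure.prod
        (Measure.pi (fun _ : Fin N => volume.restrict (Set.Icc (0 : ℝ) 1)))
        (Measure.pi (fun _ : Fin k => volume.restrict (Set.Icc (0 : ℝ) 1))))
      {ω : (Fin N → ℝ) × (Fin k → ℝ) |
        (fun i : Fin (N + 1) => (Finset.univ.filter (fun t : Fin k =>
            (Finset.univ.filter (fun r : Fin N => ω.1 r < ω.2 t)).card = (i : ℕ))).card)
          = m} = μ Aset := by
    have hset : {ω : (Fin N → ℝ) × (Fin k → ℝ) |
        (fun i : Fin (N + 1) => (Finset.univ.filter (fun t : Fin k =>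
            (Finset.univ.filter (fun r : Fin N => ω.1 r < ω.2 t)).card = (i : ℕ))).card)
          = m}
        = (⇑(MeasurableEquiv.sumPiEquivProdPi (fun _ : Fin N ⊕ Fin k => ℝ)).symm) ⁻¹' Aset := rfl
    rw [hset]
    exact hmp.measure_preimage hAmeas.nullMeasurableSet
  -- the event, conditioned on a ranking σ
  set Ssig := (Finset.univ : Finset ((Fin N ⊕ Fin k) ≃ Fin (N + k))).filter
    (fun σ => Bsig σ = P0 mex hmk) with hSsig
  have hEvCond : ∀ (σ : (Fin N ⊕ Fin k) ≃ Fin (N + k)) (x : (Fin N ⊕ Fin k) → ℝ),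
      x ∈ Ev σ → (x ∈ Aset ↔ Bsig σ = P0 mex hmk) := by
    rintro σ x ⟨hxinj, hxr⟩
    have hinner : ∀ t : Fin k,
        #(Finset.univ.filter fun r : Fin N => x (Sum.inl r) < x (Sum.inr t))
          = #(Finset.univ.filter fun r : Fin N => σ (Sum.inl r) < σ (Sum.inr t)) := by
      intro t
      congr 1
      apply filter_congr
      intro r _
      rw [rnk_lt_iff hxinj (Sum.inr t) (Sum.inl r), hxr, hxr, Fin.lt_def]
    have htrans : ∀ j : ℕ,
        #(Finset.univ.filter fun t : Fin k =>
          #(Finset.univ.filter fun r : Fin N => x (Sum.inl r) < x (Sum.inr t)) = j)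
        = #((Bsig σ)ᶜ.filter fun q => gB (Bsig σ) q = j) := by
      intro j
      rw [← counts_eq σ j]
      congr 1
      exact filter_congr fun t _ => by rw [hinner t]
    constructor
    · intro hxA
      apply (phi_iff_eq_P0 mex hmk (Bsig σ) (Bsig_card σ)).1
      intro j hj
      have hΦ := congrFun hxA ⟨j, by omega⟩
      simp only at hΦ
      rw [htrans j] at hΦ
      rw [hΦ]
      simp [hmex, Nat.lt_succ_of_le hj]
      exact fun h => absurd hj (by omega)
    · intro hBP
      have hΦ := (phi_iff_eq_P0 mex hmk _ (Bsig_card σ)).2 hBP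
      funext i
      have h2 := hΦ (i : ℕ) (by omega)
      rw [← htrans (i : ℕ)] at h2
      rw [h2]
      simp [hmex]
      exact fun h => absurd i.isLt (by omega)
  -- partition identities
  have hAI : Aset ∩ {x : (Fin N ⊕ Fin k) → ℝ | Function.Injective x}
      = ⋃ σ ∈ Ssig, Ev σ := by
    ext x
    simp only [Set.mem_inter_iff, Set.mem_iUnion, hSsig, mem_filter, mem_univ, true_and,
      Set.mem_setOf_eq, exists_prop]
    constructor
    · rintro ⟨hxA, hxinj⟩
      obtain ⟨σ, hσ⟩ := exists_Ev hxinj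
      exact ⟨σ, (hEvCond σ x hσ).1 hxA, hσ⟩
    · rintro ⟨σ, hσS, hσ⟩
      exact ⟨(hEvCond σ x hσ).2 hσS, hσ.1⟩
  have hInjU : {x : (Fin N ⊕ Fin k) → ℝ | Function.Injective x}
      = ⋃ σ ∈ (Finset.univ : Finset ((Fin N ⊕ Fin k) ≃ Fin (N + k))), Ev σ := by
    ext x
    simp only [Set.mem_iUnion, mem_univ, true_and, Set.mem_setOf_eq, exists_prop]
    constructor
    · intro hxinj
      obtain ⟨σ, hσ⟩ := exists_Ev hxinj
      exact ⟨σ, hσ⟩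
    · rintro ⟨σ, hσ⟩
      exact hσ.1
  set σ0 : (Fin N ⊕ Fin k) ≃ Fin (N + k) := finSumFinEquiv with hσ0
  set e0 := μ (Ev σ0) with he0def
  have hcount : ∀ F : Finset ((Fin N ⊕ Fin k) ≃ Fin (N + k)),
      μ (⋃ σ ∈ F, Ev σ) = (F.card : ENNReal) * e0 := by
    intro F
    rw [measure_biUnion_finset ?_ (fun σ _ => meas_Ev σ)]
    · rw [Finset.sum_congr rfl (fun σ _ => (Ev_measure_const σ σ0 : μ (Ev σ) = μ (Ev σ0))),
        Finset.sum_const, nsmul_eq_mul]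
    · intro σ1 _ σ2 _ hne
      exact Ev_disjoint hne
  have hA : μ Aset = (Ssig.card : ENNReal) * e0 := by
    have h0 : μ Aset = μ (Aset ∩ {x : (Fin N ⊕ Fin k) → ℝ | Function.Injective x}) := by
      have hdiff : Aset ∩ {x : (Fin N ⊕ Fin k) → ℝ | Function.Injective x}
          = Aset \ {x : (Fin N ⊕ Fin k) → ℝ | ¬ Function.Injective x} := by
        ext x; simp [Set.mem_diff]
      rw [hdiff, measure_diff_null notInj_null]
    rw [h0, hAI, hcount]
  have hInj1 : μ {x : (Fin N ⊕ Fin k) → ℝ | Function.Injective x} = 1 := by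
    have hc := measure_add_measure_compl (μ := μ)
      (meas_inj (ι := Fin N ⊕ Fin k))
    have hcompl : {x : (Fin N ⊕ Fin k) → ℝ | Function.Injective x}ᶜ
        = {x : (Fin N ⊕ Fin k) → ℝ | ¬ Function.Injective x} := by ext x; simp
    rw [hcompl, notInj_null, add_zero, measure_univ] at hc
    exact hc
  have hfull : ((N + k).factorial : ENNReal) * e0 = 1 := by
    rw [← hInj1, hInjU, hcount]
    congr 2
    rw [Finset.card_univ, Fintype.card_equiv σ0, Fintype.card_sum, Fintype.card_fin,
      Fintype.card_fin]
  have hfne : ((N + k).factorial : ENNReal) ≠ 0 := by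
    exact_mod_cast Nat.factorial_ne_zero (N + k)
  have hfnt : ((N + k).factorial : ENNReal) ≠ ⊤ := ENNReal.natCast_ne_top _
  have he0 : e0 = ((N + k).factorial : ENNReal)⁻¹ := by
    calc e0 = ((N + k).factorial : ENNReal)⁻¹ * (((N + k).factorial : ENNReal) * e0) := by
          rw [← mul_assoc, ENNReal.inv_mul_cancel hfne hfnt, one_mul]
      _ = _ := by rw [hfull, mul_one]
  have hScard : Ssig.card = N.factorial * k.factorial := sig_card _ (P0_card mex hmk)
  rw [hLHS, hA, hScard, he0]
  have hchoose : N + 1 + k - 1 = N + k := by omega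
  rw [hchoose]
  -- final arithmetic
  have hkey : (N + k).choose k * (N.factorial * k.factorial) = (N + k).factorial := by
    have h1 := Nat.choose_mul_factorial_mul_factorial (show k ≤ N + k by omega)
    rw [show N + k - k = N from by omega] at h1
    calc (N + k).choose k * (N.factorial * k.factorial)
        = (N + k).choose k * k.factorial * N.factorial := by ring
      _ = (N + k).factorial := h1
  have hone : (((N.factorial * k.factorial : ℕ) : ENNReal) * ((N + k).factorial : ENNReal)⁻¹)
      * (((N + k).choose k : ℕ) : ENNReal) = 1 := by
    rw [mul_comm, ← mul_assoc, ← Nat.cast_mul, hkey, ENNReal.mul_inv_cancel hfne hfnt]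
  exact ENNReal.eq_inv_of_mul_eq_one_left hone
end
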